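/- arXiv:2205.08203 — 4 statements merged into one kernel-verified Lean document; each statement's English description precedes it below -/
import Mathlib

section
/- Fix n ≥ 1 and an initial state x ∈ {0,…,n}. In the gossip model, for every integer j > 1: (i) for every t ∈ ℕ, P(T_{j+1}(x) ≥ t) ≤ P(T_j(x) ≥ t), i.e., the convergence time of gossip (j+1)-Majority stochastically minorizes that of gossip j-Majority; and (ii) E[T_{2j+2}(x)] = E[T_{2j+1}(x)] ≤ E[T_{2j}(x)] (expectations taken in [0,∞]). -/
open MeasureTheory Finset
open scoped ENNReal NNReal Classical

noncomputable section

/-- Probability mass function of a binomial random variable `Bin(m, p)` at `k`. -/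
def binomPMF (m k : ℕ) (p : ℝ) : ℝ := (m.choose k : ℝ) * p ^ k * (1 - p) ^ (m - k)

/-- Tail probability `P(Bin(m, p) ≥ j)`. -/
def binomTail (m j : ℕ) (p : ℝ) : ℝ := ∑ k ∈ Finset.Icc j m, binomPMF m k p

/-- Cumulative distribution function `P(Bin(m, p) ≤ j)`. -/
def binomCDF (m j : ℕ) (p : ℝ) : ℝ := ∑ k ∈ Finset.range (j + 1), binomPMF m k p

/-- `majProb n j s` is the sample-majority probability `q_j(s)`: the probability that an
agent sampling `j` agents uniformly at random with replacement (when `s` of the `n` agents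
hold opinion `a`) adopts opinion `a` under majority with uniform tie-breaking.
For odd `j = 2m+1` this is `P(Bin(2m+1, s/n) ≥ m+1)`; for even `j = 2m` it is
`P(Bin(2m, s/n) ≥ m+1) + (1/2)·P(Bin(2m, s/n) = m)`. -/
def majProb (n j s : ℕ) : ℝ :=
  binomTail j (j / 2 + 1) ((s : ℝ) / n) +
    if Even j then (1 / 2) * binomPMF j (j / 2) ((s : ℝ) / n) else 0

/-- One-step transition kernel of the sequential `j`-Majority process on states `{0, …, n}`:
from state `s`, move to `s+1` with probability `((n-s)/n)·q_j(s)`, to `s-1` with probability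
`(s/n)·(1-q_j(s))`, and stay at `s` otherwise. -/
def seqKernel (n j : ℕ) (s u : ℕ) : ℝ :=
  if u = s + 1 then (((n : ℝ) - s) / n) * majProb n j s
  else if u + 1 = s then ((s : ℝ) / n) * (1 - majProb n j s)
  else if u = s then
    1 - (((n : ℝ) - s) / n) * majProb n j s - ((s : ℝ) / n) * (1 - majProb n j s)
  else 0

/-- One-step transition kernel of the gossip `j`-Majority process on states `{0, …, n}`:
from state `s`, the next state is distributed as `Bin(n, q_j(s))`. -/
def gossipKernel (n j : ℕ) (s u : ℕ) : ℝ := binomPMF n u (majProb n j s)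

/-- `kernelTail K n s d` is the mass that the kernel `K` places, from state `s`,
on the set `{d, d+1, …, n}`, i.e. `P(X_{t+1} ≥ d | X_t = s)`. -/
def kernelTail (K : ℕ → ℕ → ℝ) (n s d : ℕ) : ℝ := ∑ u ∈ Finset.Icc d n, K s u

/-- `IsMarkovChain μ K x X` states that, under the probability measure `μ`, the process
`X` is a Markov chain with one-step transition kernel `K` started at `x`: `X 0 = x`
almost surely, and conditionally on any finite path the next state is distributed
according to `K` applied to the current state. -/
def IsMarkovChain {Ω : Type*} [MeasurableSpace Ω] (μ : Measure Ω)
    (K : ℕ → ℕ → ℝ) (x : ℕ) (X : ℕ → Ω → ℕ) : Prop :=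
  IsProbabilityMeasure μ ∧
  (∀ t, Measurable (X t)) ∧
  μ {ω | X 0 ω = x} = 1 ∧
  ∀ (t : ℕ) (p : ℕ → ℕ) (u : ℕ),
    μ ({ω | X (t + 1) ω = u} ∩ {ω | ∀ i ≤ t, X i ω = p i}) =
      ENNReal.ofReal (K (p t) u) * μ {ω | ∀ i ≤ t, X i ω = p i}

/-- The convergence (hitting) time: the first time `t` with `X t ∈ {0, n}`
(`⊤` if the process never reaches a consensus state). -/
def hitTime {Ω : Type*} (n : ℕ) (X : ℕ → Ω → ℕ) (ω : Ω) : ℕ∞ :=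
  ⨅ (t : ℕ) (_ : X t ω = 0 ∨ X t ω = n), (t : ℕ∞)


lemma pmf_nonneg {m k : ℕ} {p : ℝ} (h0 : 0 ≤ p) (h1 : p ≤ 1) : 0 ≤ binomPMF m k p := by
  unfold binomPMF
  have : (0:ℝ) ≤ 1 - p := by linarith
  positivity

lemma pmf_sum (m : ℕ) (p : ℝ) : ∑ k ∈ Finset.range (m+1), binomPMF m k p = 1 := by
  have h := add_pow p (1 - p) m
  have h2 : (p + (1 - p))^m = 1 := by norm_num
  rw [h2] at h
  rw [h]
  apply Finset.sum_congr rfl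
  intro k _
  unfold binomPMF
  ring

lemma pmf_symm {m k : ℕ} (hk : k ≤ m) (p : ℝ) :
    binomPMF m k (1 - p) = binomPMF m (m - k) p := by
  unfold binomPMF
  rw [← Nat.choose_symm hk, show m - (m - k) = k by omega,
    show (1 : ℝ) - (1 - p) = p by ring]
  ring

def gD (m u : ℕ) (p : ℝ) : ℝ := (u : ℝ) * (m.choose u : ℝ) * p ^ (u - 1) * (1 - p) ^ (m - u)

lemma gD_nonneg {m u : ℕ} {p : ℝ} (h0 : 0 ≤ p) (h1 : p ≤ 1) : 0 ≤ gD m u p := by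
  unfold gD
  have : (0:ℝ) ≤ 1 - p := by linarith
  positivity

lemma hasDerivAt_pmf (m u : ℕ) (p : ℝ) :
    HasDerivAt (fun q => binomPMF m u q) (gD m u p - gD m (u+1) p) p := by
  have h1 : HasDerivAt (fun q : ℝ => (m.choose u : ℝ) * q ^ u)
      ((m.choose u : ℝ) * ((u:ℝ) * p ^ (u-1))) p := (hasDerivAt_pow u p).const_mul _
  have hin : HasDerivAt (fun q : ℝ => 1 - q) (-1) p := by
    simpa using (hasDerivAt_id p).const_sub (1:ℝ)
  have h2 : HasDerivAt (fun q : ℝ => (1 - q) ^ (m - u))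
      (((m-u : ℕ):ℝ) * (1 - p) ^ (m - u - 1) * (-1)) p :=
    (hasDerivAt_pow (m-u) (1-p)).comp p hin
  have h := h1.mul h2
  have key : ((m - u : ℕ) : ℝ) * (m.choose u : ℝ) = ((u:ℕ)+1 : ℝ) * (m.choose (u+1) : ℝ) := by
    have := Nat.choose_succ_right_eq m u
    have : ((m.choose (u+1) * (u+1) : ℕ) : ℝ) = ((m.choose u * (m - u) : ℕ) : ℝ) := by
      exact_mod_cast congrArg (Nat.cast (R := ℝ)) this
    push_cast at this
    linarith
  refine h.congr_deriv (Eq.symm ?_)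
  unfold gD
  have e1 : m - (u+1) = m - u - 1 := by omega
  rw [e1]
  push_cast
  linear_combination (p ^ u * (1 - p) ^ (m - u - 1)) * key

lemma gD_top (m : ℕ) (p : ℝ) : gD m (m+1) p = 0 := by
  unfold gD
  rw [Nat.choose_succ_self]
  simp

lemma hasDerivAt_tail (m j : ℕ) (p : ℝ) :
    HasDerivAt (fun q => binomTail m j q) (gD m j p) p := by
  have h : HasDerivAt (fun q => binomTail m j q)
      (∑ k ∈ Finset.Icc j m, (gD m k p - gD m (k+1) p)) p := by
    unfold binomTail
    exact HasDerivAt.fun_sum (fun k _ => hasDerivAt_pmf m k p)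
  convert h using 1
  rcases le_or_gt j m with hjm | hjm
  · rw [show Finset.Icc j m = Finset.Ico j (m+1) by rfl, Finset.sum_Ico_eq_sum_range]
    have htel := Finset.sum_range_sub' (fun i => gD m (j + i) p) (m + 1 - j)
    simp only [add_zero] at htel
    have : ∑ i ∈ Finset.range (m + 1 - j), (gD m (j + i) p - gD m (j + i + 1) p)
        = gD m j p - gD m (j + (m + 1 - j)) p := by
      rw [← htel]
      exact Finset.sum_congr rfl (fun i _ => by rw [show j + i + 1 = j + (i+1) by omega])
    rw [show j + (m + 1 - j) = m + 1 by omega, gD_top, sub_zero] at this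
    rw [← this]
  · rw [Finset.Icc_eq_empty (by omega), Finset.sum_empty]
    unfold gD
    rw [Nat.choose_eq_zero_of_lt hjm]
    simp

def Q (j : ℕ) (p : ℝ) : ℝ :=
  binomTail j (j / 2 + 1) p + if Even j then (1 / 2) * binomPMF j (j / 2) p else 0

lemma hasDerivAt_Q (j : ℕ) (p : ℝ) :
    HasDerivAt (Q j)
      (gD j (j/2+1) p + if Even j then (1/2) * (gD j (j/2) p - gD j (j/2+1) p) else 0) p := by
  unfold Q
  by_cases hj : Even j
  · simp only [hj, if_true]
    exact (hasDerivAt_tail j (j/2+1) p).add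
      (((hasDerivAt_pmf j (j/2) p)).const_mul _)
  · simp only [hj, if_false, add_zero]
    exact hasDerivAt_tail j (j/2+1) p

lemma Q_deriv_nonneg (j : ℕ) {p : ℝ} (h0 : 0 ≤ p) (h1 : p ≤ 1) :
    0 ≤ gD j (j/2+1) p + if Even j then (1/2) * (gD j (j/2) p - gD j (j/2+1) p) else 0 := by
  by_cases hj : Even j
  · simp only [hj, if_true]
    have h3 := gD_nonneg (m := j) (u := j/2) h0 h1
    have h4 := gD_nonneg (m := j) (u := j/2+1) h0 h1
    linarith
  · simp only [hj, if_false, add_zero]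
    exact gD_nonneg h0 h1

lemma Q_mono (j : ℕ) : MonotoneOn (Q j) (Set.Icc (0:ℝ) 1) := by
  apply monotoneOn_of_deriv_nonneg (convex_Icc 0 1)
  · exact fun x _ => ((hasDerivAt_Q j x).continuousAt).continuousWithinAt
  · exact fun x _ => ((hasDerivAt_Q j x).differentiableAt).differentiableWithinAt
  · intro x hx
    rw [interior_Icc] at hx
    rw [(hasDerivAt_Q j x).deriv]
    exact Q_deriv_nonneg j (le_of_lt hx.1) (le_of_lt hx.2)

lemma tail_flip (m j : ℕ) (hj1 : 1 ≤ j) (hjm : j ≤ m) (p : ℝ) :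
    binomTail m j (1 - p) = 1 - binomTail m (m + 1 - j) p := by
  unfold binomTail
  have h1 : ∑ k ∈ Finset.Icc j m, binomPMF m k (1 - p)
      = ∑ k ∈ Finset.Icc 0 (m - j), binomPMF m k p := by
    rw [Finset.sum_congr rfl (fun k hk => pmf_symm (Finset.mem_Icc.mp hk).2 p)]
    rw [show Finset.Icc j m = Finset.Ico j (m+1) from rfl, Finset.sum_Ico_eq_sum_range]
    have hrefl := Finset.sum_range_reflect (fun k => binomPMF m k p) (m + 1 - j)
    rw [show Finset.Icc 0 (m - j) = Finset.range (m + 1 - j) by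
      ext k; simp only [Finset.mem_Icc, Finset.mem_range]; omega]
    rw [← hrefl]
    exact Finset.sum_congr rfl (fun i hi => by
      rw [show m - (j + i) = m + 1 - j - 1 - i by
        simp only [Finset.mem_range] at hi; omega])
  rw [h1]
  have h2 : Finset.range (m + 1) = Finset.Icc 0 (m - j) ∪ Finset.Icc (m + 1 - j) m := by
    ext k; simp only [Finset.mem_range, Finset.mem_union, Finset.mem_Icc]; omega
  have h3 : Disjoint (Finset.Icc 0 (m - j)) (Finset.Icc (m + 1 - j) m) := by
    rw [Finset.disjoint_left]
    intro a ha hb; simp only [Finset.mem_Icc] at *; omega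
  have := pmf_sum m p
  rw [h2, Finset.sum_union h3] at this
  linarith

lemma tail_peel (m j : ℕ) (hjm : j ≤ m) (p : ℝ) :
    binomTail m j p = binomPMF m j p + binomTail m (j+1) p := by
  unfold binomTail
  rw [show Finset.Icc j m = insert j (Finset.Icc (j+1) m) by
    ext k; simp only [Finset.mem_insert, Finset.mem_Icc]; omega]
  rw [Finset.sum_insert (by simp only [Finset.mem_Icc]; omega)]

lemma Q_symm (j : ℕ) (hj : 1 ≤ j) (p : ℝ) : Q j (1 - p) = 1 - Q j p := by
  unfold Q
  rcases Nat.even_or_odd j with he | ho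
  · obtain ⟨m, hm⟩ := he
    have hm' : j = 2 * m := by omega
    have hmm : 1 ≤ m := by omega
    subst hm'
    have hdiv : 2 * m / 2 = m := by omega
    simp only [hdiv, even_two_mul, if_true]
    rw [tail_flip (2*m) (m+1) (by omega) (by omega) p, pmf_symm (by omega) p,
      show 2*m - m = m by omega,
      show 2*m + 1 - (m+1) = m by omega,
      tail_peel (2*m) m (by omega) p]
    ring
  · obtain ⟨m, hm⟩ := ho
    subst hm
    have hdiv : (2 * m + 1) / 2 = m := by omega
    have hne : ¬ Even (2*m+1) := by simp [Nat.even_add_one, Nat.even_mul]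
    simp only [hdiv, hne, if_false, add_zero]
    rw [tail_flip (2*m+1) (m+1) (by omega) (by omega) p,
      show 2*m+1 + 1 - (m+1) = m + 1 by omega]

lemma tail_nonneg {m j : ℕ} {p : ℝ} (h0 : 0 ≤ p) (h1 : p ≤ 1) : 0 ≤ binomTail m j p :=
  Finset.sum_nonneg (fun k _ => pmf_nonneg h0 h1)

lemma Q_nonneg (j : ℕ) {p : ℝ} (h0 : 0 ≤ p) (h1 : p ≤ 1) : 0 ≤ Q j p := by
  unfold Q
  have := tail_nonneg (m := j) (j := j/2+1) h0 h1
  have := pmf_nonneg (m := j) (k := j/2) h0 h1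
  split <;> nlinarith

lemma tail_le_one {m j : ℕ} {p : ℝ} (h0 : 0 ≤ p) (h1 : p ≤ 1) : binomTail m j p ≤ 1 := by
  rw [← pmf_sum m p]
  apply Finset.sum_le_sum_of_subset_of_nonneg
  · intro k hk
    simp only [Finset.mem_Icc, Finset.mem_range] at *
    omega
  · exact fun k _ _ => pmf_nonneg h0 h1

lemma Q_le_one (j : ℕ) {p : ℝ} (h0 : 0 ≤ p) (h1 : p ≤ 1) : Q j p ≤ 1 := by
  unfold Q
  by_cases hj : Even j
  · simp only [hj, if_true]
    have hp : binomPMF j (j/2) p + binomTail j (j/2+1) p = binomTail j (j/2) p :=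
      (tail_peel j (j/2) (by omega) p).symm
    have h2 := tail_le_one (m := j) (j := j/2) h0 h1
    have h3 := pmf_nonneg (m := j) (k := j/2) h0 h1
    linarith
  · simp only [hj, if_false, add_zero]
    exact tail_le_one h0 h1

lemma pmf_succ (m k : ℕ) (hk : 1 ≤ k) (hkm : k ≤ m + 1) (p : ℝ) :
    binomPMF (m+1) k p = p * binomPMF m (k-1) p + (1-p) * binomPMF m k p := by
  rcases Nat.lt_or_ge k (m+1) with hlt | hge
  · obtain ⟨k', rfl⟩ : ∃ k', k = k' + 1 := ⟨k - 1, by omega⟩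
    unfold binomPMF
    rw [Nat.choose_succ_succ]
    push_cast
    rw [show m - k' = (m - (k'+1)) + 1 by omega]
    ring
  · have hkeq : k = m + 1 := by omega
    subst hkeq
    unfold binomPMF
    rw [Nat.choose_self, Nat.choose_succ_self]
    push_cast
    rw [show m - (m+1) = 0 by omega, Nat.choose_self]
    push_cast
    ring

lemma tail_succ (N j : ℕ) (hj : 1 ≤ j) (hjN : j ≤ N + 1) (p : ℝ) :
    binomTail (N+1) j p = p * binomTail N (j-1) p + (1-p) * binomTail N j p := by
  unfold binomTail
  rw [Finset.sum_congr rfl (fun k hk => by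
    have hk' := Finset.mem_Icc.mp hk
    exact pmf_succ N k (by omega) (by omega) p)]
  rw [Finset.sum_add_distrib, ← Finset.mul_sum, ← Finset.mul_sum]
  congr 1
  · congr 1
    apply Finset.sum_nbij' (fun k => k - 1) (fun k => k + 1)
    · intro a ha; simp only [Finset.mem_Icc] at *; omega
    · intro a ha; simp only [Finset.mem_Icc] at *; omega
    · intro a ha; simp only [Finset.mem_Icc] at ha; omega
    · intro a ha; simp only [Finset.mem_Icc] at ha; omega
    · intro a _; rfl
  · congr 1
    rcases Nat.lt_or_ge N (j) with h | h
    · have h1 : j = N + 1 := by omega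
      subst h1
      rw [Finset.Icc_self, Finset.sum_singleton,
        Finset.Icc_eq_empty (show ¬ (N+1 ≤ N) by omega), Finset.sum_empty]
      unfold binomPMF
      rw [Nat.choose_succ_self]
      simp
    · rw [show Finset.Icc j (N+1) = insert (N+1) (Finset.Icc j N) by
        ext k; simp only [Finset.mem_insert, Finset.mem_Icc]; omega]
      rw [Finset.sum_insert (by simp only [Finset.mem_Icc]; omega)]
      have : binomPMF N (N+1) p = 0 := by
        unfold binomPMF; rw [Nat.choose_succ_self]; simp
      rw [this, zero_add]

lemma pmf_middle_odd (m : ℕ) (p : ℝ) :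
    p * binomPMF (2*m+1) m p = (1 - p) * binomPMF (2*m+1) (m+1) p := by
  unfold binomPMF
  rw [show (2*m+1).choose (m+1) = (2*m+1).choose m by
    rw [← Nat.choose_symm (show m ≤ 2*m+1 by omega)]
    congr 1
    omega]
  rw [show 2*m+1 - m = m + 1 by omega, show 2*m+1 - (m+1) = m by omega]
  ring

lemma Q_succ_odd (m : ℕ) (p : ℝ) : Q (2*m+2) p = Q (2*m+1) p := by
  unfold Q
  have hd1 : (2*m+2)/2 = m + 1 := by omega
  have hd2 : (2*m+1)/2 = m := by omega
  have he : Even (2*m+2) := ⟨m+1, by omega⟩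
  have ho : ¬ Even (2*m+1) := by simp [Nat.even_add_one, Nat.even_mul]
  simp only [hd1, hd2, he, ho, if_true, if_false, add_zero]
  have e1 : binomTail (2*m+2) (m+2) p
      = p * binomTail (2*m+1) (m+1) p + (1-p) * binomTail (2*m+1) (m+2) p := by
    have := tail_succ (2*m+1) (m+2) (by omega) (by omega) p
    rw [show m+2-1 = m+1 by omega] at this
    rw [show 2*m+2 = 2*m+1+1 by omega]
    exact this
  have e2 : binomPMF (2*m+2) (m+1) p
      = p * binomPMF (2*m+1) m p + (1-p) * binomPMF (2*m+1) (m+1) p := by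
    have := pmf_succ (2*m+1) (m+1) (by omega) (by omega) p
    rw [show m+1-1 = m by omega] at this
    rw [show 2*m+2 = 2*m+1+1 by omega]
    exact this
  have e3 := tail_peel (2*m+1) (m+1) (by omega) p
  rw [show m+1+1 = m+2 by omega] at e3
  have e4 := pmf_middle_odd m p
  have egoal : binomTail (2*m+2) (m+1+1) p + 1/2 * binomPMF (2*m+2) (m+1) p
      = binomTail (2*m+1) (m+1) p := by
    rw [show m+1+1 = m+2 by omega, e1, e2]
    linear_combination (p - 1) * e3 + (1/2) * e4
  convert egoal using 3 <;> omega

lemma Q_odd_sub_even (m : ℕ) (p : ℝ) :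
    Q (2*m+1) p - Q (2*m) p = (p - 1/2) * binomPMF (2*m) m p := by
  unfold Q
  have hd1 : (2*m+1)/2 = m := by omega
  have hd2 : (2*m)/2 = m := by omega
  have ho : ¬ Even (2*m+1) := by simp [Nat.even_add_one, Nat.even_mul]
  have he : Even (2*m) := ⟨m, by omega⟩
  simp only [hd1, hd2, he, ho, if_true, if_false, add_zero]
  have e1 : binomTail (2*m+1) (m+1) p
      = p * binomTail (2*m) m p + (1-p) * binomTail (2*m) (m+1) p := by
    have := tail_succ (2*m) (m+1) (by omega) (by omega) p
    rw [show m+1-1 = m by omega] at this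
    rw [show 2*m+1 = 2*m+1 by omega]
    exact this
  have e2 := tail_peel (2*m) m (by omega) p
  rw [e1]
  linear_combination p * e2

def phiE (n : ℕ) (f : ℕ → ℝ) (q : ℝ) : ℝ := ∑ u ∈ Finset.range (n+1), binomPMF n u q * f u

/-- `f` is symmetric about `n/2` and antitone on the upper half. -/
def SymAnti (n : ℕ) (f : ℕ → ℝ) : Prop :=
  (∀ u ≤ n, f u = f (n - u)) ∧ (∀ u v, n ≤ 2*u → u ≤ v → v ≤ n → f v ≤ f u)

lemma sum_abel (n : ℕ) (f : ℕ → ℝ) (q : ℝ) :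
    ∑ u ∈ Finset.range (n+1), (gD n u q - gD n (u+1) q) * f u
      = ∑ u ∈ Finset.Icc 1 n, (f u - f (u-1)) * gD n u q := by
  have gD0 : gD n 0 q = 0 := by unfold gD; simp
  have gDtop : gD n (n+1) q = 0 := gD_top n q
  have h1 : ∑ u ∈ Finset.range (n+1), gD n u q * f u
      = ∑ u ∈ Finset.Icc 1 n, gD n u q * f u := by
    rw [show Finset.range (n+1) = insert 0 (Finset.Icc 1 n) by
      ext k; simp only [Finset.mem_range, Finset.mem_insert, Finset.mem_Icc]; omega]
    rw [Finset.sum_insert (by simp only [Finset.mem_Icc]; omega), gD0, zero_mul, zero_add]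
  have h2 : ∑ u ∈ Finset.range (n+1), gD n (u+1) q * f u
      = ∑ u ∈ Finset.Icc 1 n, gD n u q * f (u-1) := by
    rw [show Finset.Icc 1 n = Finset.Ico 1 (n+1) from rfl]
    rw [Finset.sum_Ico_eq_sum_range]
    rcases Nat.eq_zero_or_pos n with h0 | hpos
    · subst h0
      simp only [Finset.range_one, Finset.sum_singleton, zero_add]
      rw [gDtop]
      norm_num
    · rw [show n + 1 - 1 = n by omega]
      rw [show Finset.range (n+1) = insert n (Finset.range n) by
        ext k; simp only [Finset.mem_range, Finset.mem_insert]; omega]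
      rw [Finset.sum_insert (by simp only [Finset.mem_range]; omega), gDtop, zero_mul, zero_add]
      exact Finset.sum_congr rfl (fun i _ => by
        rw [show 1 + i = i + 1 by omega, show i + 1 - 1 = i by omega])
  calc ∑ u ∈ Finset.range (n+1), (gD n u q - gD n (u+1) q) * f u
      = ∑ u ∈ Finset.range (n+1), gD n u q * f u
        - ∑ u ∈ Finset.range (n+1), gD n (u+1) q * f u := by
        rw [← Finset.sum_sub_distrib]; exact Finset.sum_congr rfl (fun u _ => by ring)
    _ = ∑ u ∈ Finset.Icc 1 n, gD n u q * f u - ∑ u ∈ Finset.Icc 1 n, gD n u q * f (u-1) := by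
        rw [h1, h2]
    _ = ∑ u ∈ Finset.Icc 1 n, (f u - f (u-1)) * gD n u q := by
        rw [← Finset.sum_sub_distrib]; exact Finset.sum_congr rfl (fun u _ => by ring)

lemma hasDerivAt_phiE (n : ℕ) (f : ℕ → ℝ) (q : ℝ) :
    HasDerivAt (phiE n f) (∑ u ∈ Finset.Icc 1 n, (f u - f (u-1)) * gD n u q) q := by
  rw [← sum_abel]
  unfold phiE
  exact HasDerivAt.fun_sum (fun u _ => by
    simpa [mul_comm] using (hasDerivAt_pmf n u q).mul_const (f u))

lemma pow_flip_le {a b : ℕ} (hab : b ≤ a) {q : ℝ} (hq : 1/2 ≤ q) (hq1 : q ≤ 1) :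
    q ^ b * (1 - q) ^ a ≤ q ^ a * (1 - q) ^ b := by
  have h1 : (0:ℝ) ≤ 1 - q := by linarith
  have h2 : (0:ℝ) ≤ q := by linarith
  have h3 : 1 - q ≤ q := by linarith
  calc q ^ b * (1 - q) ^ a = q ^ b * (1 - q) ^ b * (1 - q) ^ (a - b) := by
        rw [mul_assoc, ← pow_add, show b + (a - b) = a by omega]
    _ ≤ q ^ b * (1 - q) ^ b * q ^ (a - b) := by
        apply mul_le_mul_of_nonneg_left (pow_le_pow_left₀ h1 h3 _) (by positivity)
    _ = q ^ a * (1 - q) ^ b := by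
        rw [show q ^ a = q ^ b * q ^ (a-b) by rw [← pow_add, show b + (a-b) = a by omega]]
        ring

lemma gD_flip_le {n u : ℕ} (h1 : 1 ≤ u) (h2 : u ≤ n) (h3 : n + 1 ≤ 2*u)
    {q : ℝ} (hq : 1/2 ≤ q) (hq1 : q ≤ 1) :
    gD n (n+1-u) q ≤ gD n u q := by
  unfold gD
  have hc : ((n+1-u:ℕ) : ℝ) * ((n.choose (n+1-u)) : ℝ) = (u : ℝ) * ((n.choose u) : ℝ) := by
    have e1 : (n+1-u) * (n.choose (n+1-u)) = u * (n.choose u) := by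
      have l1 : ∀ k, 1 ≤ k → k ≤ n → k * n.choose k = n * (n-1).choose (k-1) := by
        intro k hk1 hkn
        obtain ⟨k', rfl⟩ : ∃ k', k = k' + 1 := ⟨k - 1, by omega⟩
        obtain ⟨n', rfl⟩ : ∃ n', n = n' + 1 := ⟨n - 1, by omega⟩
        have := Nat.add_one_mul_choose_eq n' k'
        simp only [Nat.succ_sub_one, Nat.add_sub_cancel]
        rw [mul_comm]
        exact this.symm
      rw [l1 _ (by omega) (by omega), l1 _ (by omega) (by omega),
        show n+1-u-1 = (n-1) - (u-1) by omega,
        Nat.choose_symm (show u-1 ≤ n-1 by omega)]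
    exact_mod_cast congrArg (Nat.cast (R := ℝ)) e1
  rw [show n+1-u-1 = n - u by omega, show n - (n+1-u) = u - 1 by omega, hc]
  have := pow_flip_le (a := u - 1) (b := n - u) (by omega) hq hq1
  have hnn : (0:ℝ) ≤ (u:ℝ) * (n.choose u : ℝ) := by positivity
  calc (u:ℝ) * (n.choose u : ℝ) * q ^ (n-u) * (1-q) ^ (u-1)
      = (u:ℝ) * (n.choose u : ℝ) * (q ^ (n-u) * (1-q) ^ (u-1)) := by ring
    _ ≤ (u:ℝ) * (n.choose u : ℝ) * (q ^ (u-1) * (1-q) ^ (n-u)) :=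
        mul_le_mul_of_nonneg_left this hnn
    _ = (u:ℝ) * (n.choose u : ℝ) * q ^ (u-1) * (1-q) ^ (n-u) := by ring

lemma phiE_deriv_nonpos (n : ℕ) (f : ℕ → ℝ) (hf : SymAnti n f)
    {q : ℝ} (hq : 1/2 ≤ q) (hq1 : q ≤ 1) :
    ∑ u ∈ Finset.Icc 1 n, (f u - f (u-1)) * gD n u q ≤ 0 := by
  set G : ℕ → ℝ := fun u => (f u - f (u-1)) * gD n u q with hG
  have pair : ∀ u, 1 ≤ u → u ≤ n → n + 1 ≤ 2*u → G u + G (n+1-u) ≤ 0 := by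
    intro u h1 h2 h3
    have s1 : f (n+1-u) = f (u-1) := by
      rw [hf.1 (n+1-u) (by omega), show n - (n+1-u) = u - 1 by omega]
    have s2 : f (n+1-u-1) = f u := by
      rw [show n+1-u-1 = n - u by omega, hf.1 (n-u) (by omega),
        show n - (n-u) = u by omega]
    have key : G u + G (n+1-u) = (f u - f (u-1)) * (gD n u q - gD n (n+1-u) q) := by
      simp only [hG, s1, s2]
      ring
    rw [key]
    rcases Nat.lt_or_ge (2*u) (n+2) with hcase | hcase
    · -- 2u = n+1
      have : f (u-1) = f u := by
        rw [hf.1 (u-1) (by omega), show n - (u-1) = u by omega]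
      rw [this]
      simp
    · apply mul_nonpos_of_nonpos_of_nonneg
      · have := hf.2 (u-1) u (by omega) (by omega) (by omega)
        linarith
      · have := gD_flip_le h1 h2 h3 hq hq1
        linarith
  have hinv : ∑ u ∈ Finset.Icc 1 n, G (n+1-u) = ∑ u ∈ Finset.Icc 1 n, G u := by
    apply Finset.sum_nbij' (fun u => n+1-u) (fun u => n+1-u)
    · intro a ha; simp only [Finset.mem_Icc] at *; omega
    · intro a ha; simp only [Finset.mem_Icc] at *; omega
    · intro a ha; simp only [Finset.mem_Icc] at ha; omega
    · intro a ha; simp only [Finset.mem_Icc] at ha; omega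
    · intro a _
      rfl
  have hdouble : (2:ℝ) * ∑ u ∈ Finset.Icc 1 n, G u
      = ∑ u ∈ Finset.Icc 1 n, (G u + G (n+1-u)) := by
    rw [Finset.sum_add_distrib, hinv]
    ring
  have hsum : ∑ u ∈ Finset.Icc 1 n, (G u + G (n+1-u)) ≤ 0 := by
    apply Finset.sum_nonpos
    intro u hu
    simp only [Finset.mem_Icc] at hu
    rcases Nat.lt_or_ge (2*u) (n+1) with hcase | hcase
    · have h := pair (n+1-u) (by omega) (by omega) (by omega)
      rw [show n+1-(n+1-u) = u by omega] at h
      linarith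
    · exact pair u hu.1 hu.2 hcase
  linarith

lemma phiE_symm (n : ℕ) (f : ℕ → ℝ) (hsym : ∀ u ≤ n, f u = f (n - u)) (q : ℝ) :
    phiE n f (1 - q) = phiE n f q := by
  unfold phiE
  have h1 : ∀ u ∈ Finset.range (n+1), binomPMF n u (1-q) * f u
      = binomPMF n (n-u) q * f (n - u) := by
    intro u hu
    simp only [Finset.mem_range] at hu
    rw [pmf_symm (by omega) q, hsym u (by omega)]
  rw [Finset.sum_congr rfl h1]
  apply Finset.sum_nbij' (fun u => n - u) (fun u => n - u)
  · intro a ha; simp only [Finset.mem_range] at *; omega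
  · intro a ha; simp only [Finset.mem_range] at *; omega
  · intro a ha; simp only [Finset.mem_range] at ha; omega
  · intro a ha; simp only [Finset.mem_range] at ha; omega
  · intro a _
    rfl

lemma phiE_anti (n : ℕ) (f : ℕ → ℝ) (hf : SymAnti n f) :
    AntitoneOn (phiE n f) (Set.Icc (1/2 : ℝ) 1) := by
  apply antitoneOn_of_deriv_nonpos (convex_Icc _ _)
  · exact fun x _ => ((hasDerivAt_phiE n f x).continuousAt).continuousWithinAt
  · exact fun x _ => ((hasDerivAt_phiE n f x).differentiableAt).differentiableWithinAt
  · intro x hx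
    rw [interior_Icc] at hx
    rw [(hasDerivAt_phiE n f x).deriv]
    exact phiE_deriv_nonpos n f hf (le_of_lt hx.1) (le_of_lt hx.2)

lemma phiE_le_phiE (n : ℕ) (f : ℕ → ℝ) (hf : SymAnti n f) {q q' : ℝ}
    (h : (1/2 ≤ q' ∧ q' ≤ q ∧ q ≤ 1) ∨ (0 ≤ q ∧ q ≤ q' ∧ q' ≤ 1/2)) :
    phiE n f q ≤ phiE n f q' := by
  rcases h with ⟨h1, h2, h3⟩ | ⟨h1, h2, h3⟩
  · exact phiE_anti n f hf ⟨h1, by linarith⟩ ⟨by linarith, h3⟩ h2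
  · rw [← phiE_symm n f hf.1 q, ← phiE_symm n f hf.1 q']
    exact phiE_anti n f hf ⟨by linarith, by linarith⟩ ⟨by linarith, by linarith⟩ (by linarith)

lemma majProb_eq_Q (n j s : ℕ) : majProb n j s = Q j ((s : ℝ)/n) := rfl

section mp
variable {n j s : ℕ}

lemma frac_mem (hn : 1 ≤ n) (hs : s ≤ n) : 0 ≤ (s:ℝ)/n ∧ (s:ℝ)/n ≤ 1 := by
  have hn' : (0:ℝ) < n := by exact_mod_cast hn
  constructor
  · positivity
  · rw [div_le_one hn']
    exact_mod_cast hs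

lemma mp_nonneg (hn : 1 ≤ n) (hs : s ≤ n) : 0 ≤ majProb n j s := by
  rw [majProb_eq_Q]; exact Q_nonneg j (frac_mem hn hs).1 (frac_mem hn hs).2

lemma mp_le_one (hn : 1 ≤ n) (hs : s ≤ n) : majProb n j s ≤ 1 := by
  rw [majProb_eq_Q]; exact Q_le_one j (frac_mem hn hs).1 (frac_mem hn hs).2

lemma mp_mono (hn : 1 ≤ n) {s' : ℕ} (hss : s ≤ s') (hs' : s' ≤ n) :
    majProb n j s ≤ majProb n j s' := by
  rw [majProb_eq_Q, majProb_eq_Q]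
  have h1 := frac_mem hn (le_trans hss hs')
  have h2 := frac_mem hn hs'
  apply Q_mono j ⟨h1.1, h1.2⟩ ⟨h2.1, h2.2⟩
  have hn' : (0:ℝ) < n := by exact_mod_cast hn
  have hss' : (s:ℝ) ≤ (s':ℝ) := by exact_mod_cast hss
  exact div_le_div_of_nonneg_right hss' hn'.le

lemma mp_symm (hn : 1 ≤ n) (hj : 1 ≤ j) (hs : s ≤ n) :
    majProb n j (n - s) = 1 - majProb n j s := by
  rw [majProb_eq_Q, majProb_eq_Q]
  have hn' : (0:ℝ) < n := by exact_mod_cast hn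
  have : ((n - s : ℕ) : ℝ)/n = 1 - (s:ℝ)/n := by
    rw [Nat.cast_sub hs]
    field_simp
  rw [this, Q_symm j hj]

lemma mp_half_le (hn : 1 ≤ n) (hj : 1 ≤ j) (hs : s ≤ n) (hhalf : n ≤ 2*s) :
    1/2 ≤ majProb n j s := by
  have h1 : majProb n j (n - s) ≤ majProb n j s := mp_mono hn (by omega) hs
  rw [mp_symm hn hj hs] at h1
  linarith

lemma mp_le_half (hn : 1 ≤ n) (hj : 1 ≤ j) (hs : s ≤ n) (hhalf : 2*s ≤ n) :
    majProb n j s ≤ 1/2 := by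
  have h1 : majProb n j s ≤ majProb n j (n - s) := mp_mono hn (by omega) (by omega)
  rw [mp_symm hn hj hs] at h1
  linarith

end mp

def surv (n : ℕ) (K : ℕ → ℕ → ℝ) : ℕ → ℕ → ℝ
  | 0, _ => 1
  | t+1, s => if s = 0 ∨ s = n then 0
      else ∑ u ∈ Finset.range (n+1), K s u * surv n K t u

lemma surv_gossip_succ (n j : ℕ) (t s : ℕ) :
    surv n (gossipKernel n j) (t+1) s
      = if s = 0 ∨ s = n then 0
        else phiE n (surv n (gossipKernel n j) t) (majProb n j s) := rfl

lemma surv_nonneg {n j : ℕ} (hn : 1 ≤ n) : ∀ t s, s ≤ n →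
    0 ≤ surv n (gossipKernel n j) t s := by
  intro t
  induction t with
  | zero => intro s _; exact zero_le_one
  | succ t ih =>
    intro s hs
    rw [surv_gossip_succ]
    split
    · exact le_refl 0
    · apply Finset.sum_nonneg
      intro u hu
      simp only [Finset.mem_range] at hu
      exact mul_nonneg (pmf_nonneg (mp_nonneg hn hs) (mp_le_one hn hs)) (ih u (by omega))

lemma surv_symAnti {n j : ℕ} (hn : 1 ≤ n) (hj : 1 ≤ j) :
    ∀ t, SymAnti n (surv n (gossipKernel n j) t) := by
  intro t
  induction t with
  | zero => exact ⟨fun _ _ => rfl, fun _ _ _ _ _ => le_refl 1⟩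
  | succ t ih =>
    constructor
    · intro s hs
      rw [surv_gossip_succ, surv_gossip_succ]
      have hc : (s = 0 ∨ s = n) ↔ (n - s = 0 ∨ n - s = n) := by omega
      by_cases h : s = 0 ∨ s = n
      · rw [if_pos h, if_pos (hc.mp h)]
      · rw [if_neg h, if_neg (fun hh => h (hc.mpr hh))]
        rw [mp_symm hn hj hs, phiE_symm n _ (ih).1]
    · intro u v hu huv hv
      rw [surv_gossip_succ, surv_gossip_succ]
      rcases eq_or_lt_of_le hv with hveq | hvlt
      · rw [if_pos (Or.inr hveq)]
        by_cases h : u = 0 ∨ u = n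
        · rw [if_pos h]
        · rw [if_neg h]
          apply Finset.sum_nonneg
          intro w hw
          simp only [Finset.mem_range] at hw
          exact mul_nonneg (pmf_nonneg (mp_nonneg hn (by omega)) (mp_le_one hn (by omega)))
            (surv_nonneg hn t w (by omega))
      · have hu0 : ¬ (u = 0 ∨ u = n) := by omega
        have hv0 : ¬ (v = 0 ∨ v = n) := by omega
        rw [if_neg hu0, if_neg hv0]
        have h1 : 1/2 ≤ majProb n j u := mp_half_le hn hj (by omega) (by omega)
        have h2 : majProb n j u ≤ majProb n j v := mp_mono hn huv (by omega)
        have h3 : majProb n j v ≤ 1 := mp_le_one hn (by omega)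
        exact phiE_anti n _ ih ⟨h1, by linarith⟩ ⟨by linarith, h3⟩ h2

lemma hyp_maj {n j s : ℕ} (hn : 1 ≤ n) (hj : 2 ≤ j) (hs : s ≤ n) :
    (1/2 ≤ majProb n j s ∧ majProb n j s ≤ majProb n (j+1) s ∧ majProb n (j+1) s ≤ 1) ∨
    (0 ≤ majProb n (j+1) s ∧ majProb n (j+1) s ≤ majProb n j s ∧ majProb n j s ≤ 1/2) := by
  rcases Nat.even_or_odd j with he | ho
  · -- j even, j = 2m
    obtain ⟨m, hm⟩ := he
    have hm' : j = 2 * m := by omega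
    have hmm : 1 ≤ m := by omega
    have hdiff : majProb n (j+1) s - majProb n j s
        = ((s:ℝ)/n - 1/2) * binomPMF (2*m) m ((s:ℝ)/n) := by
      rw [majProb_eq_Q, majProb_eq_Q, hm', show 2*m+1 = 2*m+1 from rfl]
      exact Q_odd_sub_even m _
    have hp := frac_mem hn hs
    have hpmf := pmf_nonneg (m := 2*m) (k := m) hp.1 hp.2
    have hn' : (0:ℝ) < n := by exact_mod_cast hn
    rcases Nat.lt_or_ge (2*s) n with hside | hside
    · right
      have hps : (s:ℝ)/n ≤ 1/2 := by
        rw [div_le_div_iff₀ hn' (by norm_num : (0:ℝ) < 2)]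
        have h2s : (2*s : ℕ) ≤ n := hside.le
        have h2s' : 2*(s:ℝ) ≤ (n:ℝ) := by exact_mod_cast h2s
        linarith
      refine ⟨mp_nonneg hn hs, by nlinarith, mp_le_half hn (by omega) hs (by omega)⟩
    · left
      have hps : 1/2 ≤ (s:ℝ)/n := by
        rw [div_le_div_iff₀ (by norm_num : (0:ℝ) < 2) hn']
        have h2s : n ≤ 2*s := hside
        have h2s' : (n:ℝ) ≤ 2*(s:ℝ) := by exact_mod_cast h2s
        linarith
      refine ⟨mp_half_le hn (by omega) hs (by omega), by nlinarith, mp_le_one hn hs⟩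
  · -- j odd
    obtain ⟨m, hm⟩ := ho
    have heq : majProb n (j+1) s = majProb n j s := by
      rw [majProb_eq_Q, majProb_eq_Q, hm, show 2*m+1+1 = 2*m+2 by omega]
      exact Q_succ_odd m _
    rcases le_or_gt (1/2 : ℝ) (majProb n j s) with h | h
    · left
      exact ⟨h, by rw [heq], by rw [heq]; exact mp_le_one hn hs⟩
    · right
      exact ⟨by rw [heq]; exact mp_nonneg hn hs, by rw [heq], h.le⟩

lemma surv_compare {n j : ℕ} (hn : 1 ≤ n) (hj : 2 ≤ j) :
    ∀ t s, s ≤ n →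
      surv n (gossipKernel n (j+1)) t s ≤ surv n (gossipKernel n j) t s := by
  intro t
  induction t with
  | zero => intro s _; exact le_refl 1
  | succ t ih =>
    intro s hs
    rw [surv_gossip_succ, surv_gossip_succ]
    by_cases h : s = 0 ∨ s = n
    · rw [if_pos h, if_pos h]
    · rw [if_neg h, if_neg h]
      have step1 : phiE n (surv n (gossipKernel n (j+1)) t) (majProb n (j+1) s)
          ≤ phiE n (surv n (gossipKernel n j) t) (majProb n (j+1) s) := by
        unfold phiE
        apply Finset.sum_le_sum
        intro u hu
        simp only [Finset.mem_range] at hu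
        exact mul_le_mul_of_nonneg_left (ih u (by omega))
          (pmf_nonneg (mp_nonneg hn hs) (mp_le_one hn hs))
      have step2 : phiE n (surv n (gossipKernel n j) t) (majProb n (j+1) s)
          ≤ phiE n (surv n (gossipKernel n j) t) (majProb n j s) :=
        phiE_le_phiE n _ (surv_symAnti hn (by omega) t) (by
          rcases hyp_maj hn hj hs with ⟨a, b, c⟩ | ⟨a, b, c⟩
          · exact Or.inl ⟨a, b, c⟩
          · exact Or.inr ⟨a, b, c⟩)
      exact le_trans step1 step2

lemma gossipKernel_odd_eq (n m : ℕ) : gossipKernel n (2*m+2) = gossipKernel n (2*m+1) := by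
  funext s u
  unfold gossipKernel
  rw [majProb_eq_Q, majProb_eq_Q, Q_succ_odd]

def rho (n : ℕ) (K : ℕ → ℕ → ℝ) (x : ℕ) : ℕ → ℕ → ℝ
  | 0, u => if u = x then 1 else 0
  | t+1, u => ∑ s ∈ Finset.range (n+1),
      (if s = 0 ∨ s = n then 0 else rho n K x t s * K s u)

section alg

variable {n : ℕ} {K : ℕ → ℕ → ℝ} {x : ℕ}

lemma rho_top (hx : x ≤ n) (hKtop : ∀ s u, n < u → K s u = 0) :
    ∀ t u, n < u → rho n K x t u = 0 := by
  intro t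
  induction t with
  | zero =>
    intro u hu
    simp only [rho, if_neg (by omega : ¬ u = x)]
  | succ t _ =>
    intro u hu
    simp only [rho]
    apply Finset.sum_eq_zero
    intro s _
    split
    · rfl
    · rw [hKtop s u hu, mul_zero]

lemma rho_nonneg (hKnn : ∀ s u, s ≤ n → 0 ≤ K s u) :
    ∀ t u, 0 ≤ rho n K x t u := by
  intro t
  induction t with
  | zero =>
    intro u
    simp only [rho]
    split <;> norm_num
  | succ t ih =>
    intro u
    simp only [rho]
    apply Finset.sum_nonneg
    intro s hs
    simp only [Finset.mem_range] at hs
    split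
    · exact le_refl 0
    · exact mul_nonneg (ih s) (hKnn s u (by omega))

lemma rho_surv (hx : x ≤ n) :
    ∀ t m, ∑ s ∈ Finset.range (n+1), rho n K x t s * surv n K m s = surv n K (t+m) x := by
  intro t
  induction t with
  | zero =>
    intro m
    rw [show (0 + m) = m by omega]
    rw [Finset.sum_congr rfl (fun s _ => by
      rw [show rho n K x 0 s = if s = x then 1 else 0 from rfl, ite_mul, one_mul, zero_mul])]
    rw [Finset.sum_ite_eq' (Finset.range (n+1)) x (fun s => surv n K m s)]
    rw [if_pos (by simp only [Finset.mem_range]; omega)]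
  | succ t ih =>
    intro m
    have swap : ∑ u ∈ Finset.range (n+1), rho n K x (t+1) u * surv n K m u
        = ∑ s ∈ Finset.range (n+1), ∑ u ∈ Finset.range (n+1),
            (if s = 0 ∨ s = n then 0 else rho n K x t s * K s u * surv n K m u) := by
      rw [Finset.sum_comm]
      apply Finset.sum_congr rfl
      intro u _
      rw [show rho n K x (t+1) u = ∑ s ∈ Finset.range (n+1),
        (if s = 0 ∨ s = n then 0 else rho n K x t s * K s u) from rfl, Finset.sum_mul]
      apply Finset.sum_congr rfl
      intro s _
      rw [ite_mul, zero_mul]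
    rw [swap]
    have inner : ∀ s ∈ Finset.range (n+1), ∑ u ∈ Finset.range (n+1),
        (if s = 0 ∨ s = n then 0 else rho n K x t s * K s u * surv n K m u)
        = rho n K x t s * surv n K (m+1) s := by
      intro s _
      by_cases hc : s = 0 ∨ s = n
      · rw [show surv n K (m+1) s = if s = 0 ∨ s = n then 0
          else ∑ u ∈ Finset.range (n+1), K s u * surv n K m u from rfl, if_pos hc]
        rw [Finset.sum_congr rfl (fun u _ => if_pos hc), Finset.sum_const]
        simp
      · rw [show surv n K (m+1) s = if s = 0 ∨ s = n then 0
          else ∑ u ∈ Finset.range (n+1), K s u * surv n K m u from rfl, if_neg hc]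
        rw [Finset.sum_congr rfl (fun u _ => if_neg hc), Finset.mul_sum]
        apply Finset.sum_congr rfl
        intro u _
        ring
    rw [Finset.sum_congr rfl inner, ih (m+1), show t + (m+1) = t + 1 + m by omega]

end alg

section measure

variable {Ω : Type*} [MeasurableSpace Ω] {μ : Measure Ω}
  {K : ℕ → ℕ → ℝ} {x n : ℕ} {X : ℕ → Ω → ℕ}

/-- The event: avoided consensus strictly before `t`, and is at `s` at time `t`. -/
def Bev (n : ℕ) (X : ℕ → Ω → ℕ) (t s : ℕ) : Set Ω :=
  {ω | (∀ i, i < t → ¬(X i ω = 0 ∨ X i ω = n)) ∧ X t ω = s}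

lemma meas_E (hX : ∀ t, Measurable (X t)) (q : ℕ → ℕ) (t : ℕ) :
    MeasurableSet {ω | ∀ i ≤ t, X i ω = q i} := by
  have : {ω | ∀ i ≤ t, X i ω = q i} = ⋂ i ∈ Set.Iic t, (X i) ⁻¹' {q i} := by
    ext ω
    simp [Set.mem_iInter, Set.mem_preimage]
  rw [this]
  exact MeasurableSet.biInter (Set.to_countable _)
    (fun i _ => (hX i) (measurableSet_singleton (q i)))

lemma meas_Bev (hX : ∀ t, Measurable (X t)) (t s : ℕ) :
    MeasurableSet (Bev n X t s) := by
  have : Bev n X t s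
      = (⋂ i ∈ Set.Iio t, (X i) ⁻¹' ({0, n} : Set ℕ)ᶜ) ∩ (X t) ⁻¹' {s} := by
    ext ω
    simp only [Bev, Set.mem_inter_iff, Set.mem_iInter, Set.mem_preimage, Set.mem_compl_iff,
      Set.mem_insert_iff, Set.mem_singleton_iff, Set.mem_setOf_eq, Set.mem_Iio]
  rw [this]
  exact (MeasurableSet.biInter (Set.to_countable _)
    (fun i _ => (hX i) ((MeasurableSet.insert (measurableSet_singleton n) 0).compl))).inter
    ((hX t) (measurableSet_singleton s))

lemma markov_Bev (h : IsMarkovChain μ K x X) (t s u : ℕ) :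
    μ ({ω | X (t+1) ω = u} ∩ Bev n X t s)
      = ENNReal.ofReal (K s u) * μ (Bev n X t s) := by
  classical
  set S : (Fin t → ℕ) → Set Ω := fun p =>
    {ω | (∀ i : Fin t, X (i : ℕ) ω = p i ∧ ¬((p i : ℕ) = 0 ∨ (p i : ℕ) = n)) ∧ X t ω = s}
    with hS
  have hunion : Bev n X t s = ⋃ p, S p := by
    ext ω
    simp only [Bev, Set.mem_setOf_eq, Set.mem_iUnion, hS]
    constructor
    · rintro ⟨h1, h2⟩
      refine ⟨fun i => X (i : ℕ) ω, fun i => ⟨rfl, h1 i i.2⟩, h2⟩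
    · rintro ⟨p, h1, h2⟩
      refine ⟨fun i hi => ?_, h2⟩
      have := h1 ⟨i, hi⟩
      rw [this.1]
      exact this.2
  have hSform : ∀ p : Fin t → ℕ,
      (∀ i : Fin t, ¬((p i : ℕ) = 0 ∨ (p i : ℕ) = n)) →
      S p = {ω | ∀ i ≤ t, X i ω = (fun i => if h : i < t then p ⟨i, h⟩ else s) i} := by
    intro p hp
    ext ω
    simp only [hS, Set.mem_setOf_eq]
    constructor
    · rintro ⟨h1, h2⟩ i hi
      by_cases hlt : i < t
      · rw [dif_pos hlt]; exact (h1 ⟨i, hlt⟩).1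
      · rw [dif_neg hlt]
        have : i = t := by omega
        rw [this]; exact h2
    · intro h1
      constructor
      · intro i
        refine ⟨?_, hp i⟩
        have := h1 (i : ℕ) (le_of_lt i.2)
        rw [dif_pos i.2] at this
        simpa using this
      · have := h1 t (le_refl t)
        rw [dif_neg (lt_irrefl t)] at this
        exact this
  have hSempty : ∀ p : Fin t → ℕ,
      ¬(∀ i : Fin t, ¬((p i : ℕ) = 0 ∨ (p i : ℕ) = n)) → S p = ∅ := by
    intro p hp
    ext ω
    simp only [hS, Set.mem_setOf_eq, Set.mem_empty_iff_false, iff_false]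
    rintro ⟨h1, _⟩
    exact hp (fun i => (h1 i).2)
  have hSmeas : ∀ p, MeasurableSet (S p) := by
    intro p
    by_cases hp : ∀ i : Fin t, ¬((p i : ℕ) = 0 ∨ (p i : ℕ) = n)
    · rw [hSform p hp]; exact meas_E h.2.1 _ t
    · rw [hSempty p hp]; exact MeasurableSet.empty
  have hSdisj : Pairwise (Function.onFun Disjoint S) := by
    intro p q hpq
    rw [Function.onFun, Set.disjoint_left]
    rintro ω ⟨h1, _⟩ ⟨h2, _⟩
    apply hpq
    funext i
    rw [← (h1 i).1, ← (h2 i).1]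
  have hSmark : ∀ p, μ ({ω | X (t+1) ω = u} ∩ S p)
      = ENNReal.ofReal (K s u) * μ (S p) := by
    intro p
    by_cases hp : ∀ i : Fin t, ¬((p i : ℕ) = 0 ∨ (p i : ℕ) = n)
    · rw [hSform p hp]
      have := h.2.2.2 t (fun i => if h : i < t then p ⟨i, h⟩ else s) u
      rw [dif_neg (lt_irrefl t)] at this
      exact this
    · rw [hSempty p hp]
      simp
  calc μ ({ω | X (t+1) ω = u} ∩ Bev n X t s)
      = μ (⋃ p, ({ω | X (t+1) ω = u} ∩ S p)) := by rw [hunion, Set.inter_iUnion]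
    _ = ∑' p, μ ({ω | X (t+1) ω = u} ∩ S p) := by
        apply measure_iUnion
        · intro p q hpq
          exact Set.disjoint_left.mpr (fun ω h1 h2 =>
            Set.disjoint_left.mp (hSdisj hpq) h1.2 h2.2)
        · exact fun p => ((h.2.1 (t+1)) (measurableSet_singleton u)).inter (hSmeas p)
    _ = ∑' p, ENNReal.ofReal (K s u) * μ (S p) := by
        exact tsum_congr hSmark
    _ = ENNReal.ofReal (K s u) * ∑' p, μ (S p) := ENNReal.tsum_mul_left
    _ = ENNReal.ofReal (K s u) * μ (Bev n X t s) := by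
        rw [hunion, measure_iUnion hSdisj hSmeas]

end measure

section measure2

variable {Ω : Type*} [MeasurableSpace Ω] {μ : Measure Ω}
  {K : ℕ → ℕ → ℝ} {x n : ℕ} {X : ℕ → Ω → ℕ}

lemma measure_Bev (h : IsMarkovChain μ K x X) (hn : 1 ≤ n) (hx : x ≤ n)
    (hKtop : ∀ s u, n < u → K s u = 0) (hKnn : ∀ s u, s ≤ n → 0 ≤ K s u) :
    ∀ t u, μ (Bev n X t u) = ENNReal.ofReal (rho n K x t u) := by
  have := h.1
  intro t
  induction t with
  | zero =>
    intro u
    have hB : Bev n X 0 u = {ω | X 0 ω = u} := by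
      ext ω
      simp [Bev]
    by_cases hu : u = x
    · rw [hB, hu, h.2.2.1, show rho n K x 0 x = 1 by simp [rho]]
      simp
    · have h0 : μ {ω | X 0 ω = x}ᶜ = 0 := by
        rw [measure_compl (meas_E h.2.1 (fun _ => x) 0 |>.congr ?_) (measure_ne_top μ _),
          h.2.2.1]
        · simp
        · ext ω; simp
      rw [hB, show rho n K x 0 u = 0 by simp [rho, hu]]
      rw [ENNReal.ofReal_zero]
      apply measure_mono_null ?_ h0
      intro ω hω
      simp only [Set.mem_setOf_eq] at hω
      simp only [Set.mem_compl_iff, Set.mem_setOf_eq]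
      omega
  | succ t ih =>
    intro u
    set D : ℕ → Set Ω := fun s =>
      if s = 0 ∨ s = n then ∅ else {ω | X (t+1) ω = u} ∩ Bev n X t s with hD
    have hunion : Bev n X (t+1) u = ⋃ s, D s := by
      ext ω
      simp only [Bev, Set.mem_setOf_eq, Set.mem_iUnion, hD]
      constructor
      · rintro ⟨h1, h2⟩
        refine ⟨X t ω, ?_⟩
        rw [if_neg (h1 t (by omega))]
        exact ⟨h2, fun i hi => h1 i (by omega), rfl⟩
      · rintro ⟨s, hs⟩
        by_cases hc : s = 0 ∨ s = n
        · rw [if_pos hc] at hs; exact absurd hs (Set.notMem_empty ω)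
        · rw [if_neg hc] at hs
          obtain ⟨h2, h1, h3⟩ := hs
          refine ⟨fun i hi => ?_, h2⟩
          rcases Nat.lt_or_ge i t with hit | hit
          · exact h1 i hit
          · have : i = t := by omega
            subst this
            rw [h3]
            exact hc
    have hDmeas : ∀ s, MeasurableSet (D s) := by
      intro s
      simp only [hD]
      split
      · exact MeasurableSet.empty
      · exact ((h.2.1 (t+1)) (measurableSet_singleton u)).inter (meas_Bev h.2.1 t s)
    have hDdisj : Pairwise (Function.onFun Disjoint D) := by
      intro s s' hss
      rw [Function.onFun, Set.disjoint_left]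
      intro ω h1 h2
      simp only [hD] at h1 h2
      split at h1
      · exact absurd h1 (Set.notMem_empty ω)
      · split at h2
        · exact absurd h2 (Set.notMem_empty ω)
        · exact hss (h1.2.2 ▸ h2.2.2.symm ▸ rfl)
    have hval : ∀ s, μ (D s)
        = if s = 0 ∨ s = n then 0 else ENNReal.ofReal (K s u) * ENNReal.ofReal (rho n K x t s) := by
      intro s
      simp only [hD]
      split
      · simp
      · rw [markov_Bev h, ih s]
    rw [hunion, measure_iUnion hDdisj hDmeas]
    rw [tsum_congr hval]
    have hzero : ∀ s ∉ Finset.range (n+1),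
        (if s = 0 ∨ s = n then 0
          else ENNReal.ofReal (K s u) * ENNReal.ofReal (rho n K x t s)) = 0 := by
      intro s hs
      simp only [Finset.mem_range] at hs
      rw [if_neg (by omega), rho_top hx hKtop t s (by omega)]
      simp
    rw [tsum_eq_sum hzero]
    have hcong : ∀ s ∈ Finset.range (n+1),
        (if s = 0 ∨ s = n then 0
          else ENNReal.ofReal (K s u) * ENNReal.ofReal (rho n K x t s))
        = ENNReal.ofReal (if s = 0 ∨ s = n then 0 else rho n K x t s * K s u) := by
      intro s hs
      simp only [Finset.mem_range] at hs
      split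
      · simp
      · rw [← ENNReal.ofReal_mul (hKnn s u (by omega)), mul_comm]
    rw [Finset.sum_congr rfl hcong,
      ← ENNReal.ofReal_sum_of_nonneg (fun s hs => by
        simp only [Finset.mem_range] at hs
        split
        · exact le_refl 0
        · exact mul_nonneg (rho_nonneg hKnn t s) (hKnn s u (by omega)))]
    rfl

lemma measure_avoid (h : IsMarkovChain μ K x X) (hn : 1 ≤ n) (hx : x ≤ n)
    (hKtop : ∀ s u, n < u → K s u = 0) (hKnn : ∀ s u, s ≤ n → 0 ≤ K s u)
    (hKsum : ∀ s, s ≤ n → ∑ u ∈ Finset.range (n+1), K s u = 1) :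
    ∀ t, μ {ω | ∀ i, i < t → ¬(X i ω = 0 ∨ X i ω = n)}
      = ENNReal.ofReal (surv n K t x) := by
  have := h.1
  intro t
  cases t with
  | zero =>
    have : {ω : Ω | ∀ i, i < 0 → ¬(X i ω = 0 ∨ X i ω = n)} = Set.univ := by
      ext ω; simp
    rw [this, show surv n K 0 x = 1 from rfl]
    simp
  | succ t =>
    set D : ℕ → Set Ω := fun s => if s = 0 ∨ s = n then ∅ else Bev n X t s with hD
    have hunion : {ω | ∀ i, i < t + 1 → ¬(X i ω = 0 ∨ X i ω = n)} = ⋃ s, D s := by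
      ext ω
      simp only [Set.mem_setOf_eq, Set.mem_iUnion, hD]
      constructor
      · intro h1
        refine ⟨X t ω, ?_⟩
        rw [if_neg (h1 t (by omega))]
        exact ⟨fun i hi => h1 i (by omega), rfl⟩
      · rintro ⟨s, hs⟩ i hi
        by_cases hc : s = 0 ∨ s = n
        · rw [if_pos hc] at hs; exact absurd hs (Set.notMem_empty ω)
        · rw [if_neg hc] at hs
          rcases Nat.lt_or_ge i t with hit | hit
          · exact hs.1 i hit
          · have : i = t := by omega
            subst this
            rw [hs.2]
            exact hc
    have hDmeas : ∀ s, MeasurableSet (D s) := by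
      intro s
      simp only [hD]
      split
      · exact MeasurableSet.empty
      · exact meas_Bev h.2.1 t s
    have hDdisj : Pairwise (Function.onFun Disjoint D) := by
      intro s s' hss
      rw [Function.onFun, Set.disjoint_left]
      intro ω h1 h2
      simp only [hD] at h1 h2
      split at h1
      · exact absurd h1 (Set.notMem_empty ω)
      · split at h2
        · exact absurd h2 (Set.notMem_empty ω)
        · exact hss (h1.2 ▸ h2.2.symm ▸ rfl)
    have hval : ∀ s, μ (D s)
        = if s = 0 ∨ s = n then 0 else ENNReal.ofReal (rho n K x t s) := by
      intro s
      simp only [hD]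
      split
      · simp
      · exact measure_Bev h hn hx hKtop hKnn t s
    rw [hunion, measure_iUnion hDdisj hDmeas, tsum_congr hval]
    have hzero : ∀ s ∉ Finset.range (n+1),
        (if s = 0 ∨ s = n then 0 else ENNReal.ofReal (rho n K x t s)) = 0 := by
      intro s hs
      simp only [Finset.mem_range] at hs
      rw [if_neg (by omega), rho_top hx hKtop t s (by omega)]
      simp
    rw [tsum_eq_sum hzero]
    have hcong : ∀ s ∈ Finset.range (n+1),
        (if s = 0 ∨ s = n then 0 else ENNReal.ofReal (rho n K x t s))
        = ENNReal.ofReal (rho n K x t s * surv n K 1 s) := by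
      intro s hs
      simp only [Finset.mem_range] at hs
      have hsurv1 : surv n K 1 s = if s = 0 ∨ s = n then 0 else 1 := by
        rw [show surv n K 1 s = if s = 0 ∨ s = n then 0
          else ∑ u ∈ Finset.range (n+1), K s u * surv n K 0 u from rfl]
        split
        · rfl
        · rw [Finset.sum_congr rfl (fun u _ => by
            rw [show surv n K 0 u = 1 from rfl, mul_one]), hKsum s (by omega)]
      rw [hsurv1]
      split
      · simp
      · rw [mul_one]
    rw [Finset.sum_congr rfl hcong,
      ← ENNReal.ofReal_sum_of_nonneg (fun s hs => by
        simp only [Finset.mem_range] at hs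
        exact mul_nonneg (rho_nonneg hKnn t s)
          (by
            rw [show surv n K 1 s = if s = 0 ∨ s = n then 0
              else ∑ u ∈ Finset.range (n+1), K s u * surv n K 0 u from rfl]
            split
            · exact le_refl 0
            · exact Finset.sum_nonneg (fun u hu => by
                simp only [Finset.mem_range] at hu
                rw [show surv n K 0 u = 1 from rfl, mul_one]
                exact hKnn s u (by omega)))),
      rho_surv hx t 1]

end measure2

section hit

variable {Ω : Type*} [MeasurableSpace Ω] {μ : Measure Ω}
  {K : ℕ → ℕ → ℝ} {x n : ℕ} {X : ℕ → Ω → ℕ}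

lemma hit_set_eq (n : ℕ) (X : ℕ → Ω → ℕ) (t : ℕ) :
    {ω | (t : ℕ∞) ≤ hitTime n X ω}
      = {ω | ∀ i, i < t → ¬(X i ω = 0 ∨ X i ω = n)} := by
  ext ω
  simp only [Set.mem_setOf_eq, hitTime, le_iInf_iff]
  constructor
  · intro h i hi hcon
    have := h i hcon
    have : (t:ℕ∞) ≤ (i:ℕ∞) := this
    rw [Nat.cast_le] at this
    omega
  · intro h i hcon
    rw [Nat.cast_le]
    by_contra hlt
    exact h i (by omega) hcon

lemma tail_formula (h : IsMarkovChain μ K x X) (hn : 1 ≤ n) (hx : x ≤ n)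
    (hKtop : ∀ s u, n < u → K s u = 0) (hKnn : ∀ s u, s ≤ n → 0 ≤ K s u)
    (hKsum : ∀ s, s ≤ n → ∑ u ∈ Finset.range (n+1), K s u = 1) (t : ℕ) :
    μ {ω | (t : ℕ∞) ≤ hitTime n X ω} = ENNReal.ofReal (surv n K t x) := by
  rw [hit_set_eq]
  exact measure_avoid h hn hx hKtop hKnn hKsum t

lemma enat_coe_eq_tsum (e : ℕ∞) :
    (e : ℝ≥0∞) = ∑' t : ℕ, (if ((t+1 : ℕ) : ℕ∞) ≤ e then (1:ℝ≥0∞) else 0) := by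
  induction e using ENat.recTopCoe with
  | top =>
    simp only [le_top, if_true]
    rw [ENNReal.tsum_const_eq_top_of_ne_zero (by norm_num)]
    rfl
  | coe k =>
    have : ∀ t : ℕ, (if ((t+1 : ℕ) : ℕ∞) ≤ (k : ℕ∞) then (1:ℝ≥0∞) else 0)
        = if t ∈ Finset.range k then (1:ℝ≥0∞) else 0 := by
      intro t
      by_cases hc : t + 1 ≤ k
      · rw [if_pos (by exact_mod_cast hc), if_pos (Finset.mem_range.mpr (by omega))]
      · rw [if_neg (by exact_mod_cast hc),
          if_neg (fun hmem => hc (by have := Finset.mem_range.mp hmem; omega))]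
    rw [tsum_congr this, tsum_eq_sum (fun t ht => by rw [if_neg ht]),
      Finset.sum_congr rfl (fun t ht => by rw [if_pos ht]), Finset.sum_const,
      Finset.card_range]
    simp

lemma lintegral_hitTime (h : IsMarkovChain μ K x X) (n : ℕ) :
    ∫⁻ ω, (hitTime n X ω : ℝ≥0∞) ∂μ
      = ∑' t : ℕ, μ {ω | ((t+1 : ℕ) : ℕ∞) ≤ hitTime n X ω} := by
  have hpt : ∀ ω, (hitTime n X ω : ℝ≥0∞)
      = ∑' t : ℕ, Set.indicator {ω' | ((t+1 : ℕ) : ℕ∞) ≤ hitTime n X ω'}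
          (fun _ => (1:ℝ≥0∞)) ω := by
    intro ω
    rw [enat_coe_eq_tsum]
    exact tsum_congr (fun t => by rw [Set.indicator_apply]; rfl)
  have hmeas : ∀ t : ℕ, MeasurableSet {ω | ((t+1 : ℕ) : ℕ∞) ≤ hitTime n X ω} := by
    intro t
    rw [hit_set_eq]
    have : {ω | ∀ i, i < t+1 → ¬(X i ω = 0 ∨ X i ω = n)}
        = ⋂ i ∈ Set.Iio (t+1), (X i) ⁻¹' ({0, n} : Set ℕ)ᶜ := by
      ext ω
      simp only [Set.mem_setOf_eq, Set.mem_iInter, Set.mem_preimage, Set.mem_compl_iff,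
        Set.mem_insert_iff, Set.mem_singleton_iff, Set.mem_Iio]
    rw [this]
    exact MeasurableSet.biInter (Set.to_countable _)
      (fun i _ => (h.2.1 i) ((MeasurableSet.insert (measurableSet_singleton n) 0).compl))
  calc ∫⁻ ω, (hitTime n X ω : ℝ≥0∞) ∂μ
      = ∫⁻ ω, ∑' t : ℕ, Set.indicator {ω' | ((t+1 : ℕ) : ℕ∞) ≤ hitTime n X ω'}
          (fun _ => (1:ℝ≥0∞)) ω ∂μ := by
        exact lintegral_congr hpt
    _ = ∑' t : ℕ, ∫⁻ ω, Set.indicator {ω' | ((t+1 : ℕ) : ℕ∞) ≤ hitTime n X ω'}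
          (fun _ => (1:ℝ≥0∞)) ω ∂μ := by
        apply lintegral_tsum
        intro t
        exact (measurable_const.indicator (hmeas t)).aemeasurable
    _ = ∑' t : ℕ, μ {ω | ((t+1 : ℕ) : ℕ∞) ≤ hitTime n X ω} := by
        apply tsum_congr
        intro t
        rw [lintegral_indicator (hmeas t)]
        simp

end hit

section gossipFacts

lemma gossip_top (n j : ℕ) : ∀ s u, n < u → gossipKernel n j s u = 0 := by
  intro s u hu
  unfold gossipKernel binomPMF
  rw [Nat.choose_eq_zero_of_lt hu]
  simp

lemma gossip_nonneg {n j : ℕ} (hn : 1 ≤ n) :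
    ∀ s u, s ≤ n → 0 ≤ gossipKernel n j s u := by
  intro s u hs
  exact pmf_nonneg (mp_nonneg hn hs) (mp_le_one hn hs)

lemma gossip_sum (n j : ℕ) : ∀ s, s ≤ n →
    ∑ u ∈ Finset.range (n+1), gossipKernel n j s u = 1 := by
  intro s _
  exact pmf_sum n (majProb n j s)

lemma gossip_tail {Ω : Type*} [MeasurableSpace Ω] {μ : Measure Ω} {n x jj : ℕ}
    {X : ℕ → Ω → ℕ} (h : IsMarkovChain μ (gossipKernel n jj) x X)
    (hn : 1 ≤ n) (hx : x ≤ n) (t : ℕ) :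
    μ {ω | (t : ℕ∞) ≤ hitTime n X ω}
      = ENNReal.ofReal (surv n (gossipKernel n jj) t x) :=
  tail_formula h hn hx (gossip_top n jj) (gossip_nonneg hn) (gossip_sum n jj) t

end gossipFacts

theorem stmt2 {Ω₁ Ω₂ Ω₃ Ω₄ Ω₅ : Type*}
    [MeasurableSpace Ω₁] [MeasurableSpace Ω₂] [MeasurableSpace Ω₃]
    [MeasurableSpace Ω₄] [MeasurableSpace Ω₅]
    (n : ℕ) (hn : 1 ≤ n) (x : ℕ) (hx : x ≤ n) (j : ℕ) (hj : 1 < j)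
    (μ₁ : Measure Ω₁) (X₁ : ℕ → Ω₁ → ℕ)
    (μ₂ : Measure Ω₂) (X₂ : ℕ → Ω₂ → ℕ)
    (μ₃ : Measure Ω₃) (X₃ : ℕ → Ω₃ → ℕ)
    (μ₄ : Measure Ω₄) (X₄ : ℕ → Ω₄ → ℕ)
    (μ₅ : Measure Ω₅) (X₅ : ℕ → Ω₅ → ℕ)
    (h₁ : IsMarkovChain μ₁ (gossipKernel n (j + 1)) x X₁)
    (h₂ : IsMarkovChain μ₂ (gossipKernel n j) x X₂)
    (h₃ : IsMarkovChain μ₃ (gossipKernel n (2 * j + 2)) x X₃)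
    (h₄ : IsMarkovChain μ₄ (gossipKernel n (2 * j + 1)) x X₄)
    (h₅ : IsMarkovChain μ₅ (gossipKernel n (2 * j)) x X₅) :
    (∀ t : ℕ, μ₁ {ω | (t : ℕ∞) ≤ hitTime n X₁ ω} ≤ μ₂ {ω | (t : ℕ∞) ≤ hitTime n X₂ ω}) ∧
    (∫⁻ ω, (hitTime n X₃ ω : ℝ≥0∞) ∂μ₃ = ∫⁻ ω, (hitTime n X₄ ω : ℝ≥0∞) ∂μ₄ ∧
     ∫⁻ ω, (hitTime n X₄ ω : ℝ≥0∞) ∂μ₄ ≤ ∫⁻ ω, (hitTime n X₅ ω : ℝ≥0∞) ∂μ₅) := by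
  have hj2 : 2 ≤ j := hj
  refine ⟨?_, ?_, ?_⟩
  · intro t
    rw [gossip_tail h₁ hn hx t, gossip_tail h₂ hn hx t]
    exact ENNReal.ofReal_le_ofReal (surv_compare hn hj2 t x hx)
  · rw [lintegral_hitTime h₃ n, lintegral_hitTime h₄ n]
    apply tsum_congr
    intro t
    rw [gossip_tail h₃ hn hx (t+1), gossip_tail h₄ hn hx (t+1),
      gossipKernel_odd_eq n j]
  · rw [lintegral_hitTime h₄ n, lintegral_hitTime h₅ n]
    apply ENNReal.tsum_le_tsum
    intro t
    rw [gossip_tail h₄ hn hx (t+1), gossip_tail h₅ hn hx (t+1)]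
    exact ENNReal.ofReal_le_ofReal
      (surv_compare hn (show 2 ≤ 2*j by omega) (t+1) x hx)
end
end

section
/- There exist constants C, c > 0 such that for all sufficiently large n and every initial state x ∈ {0,…,n}, the convergence time of the sequential 3-Majority process satisfies P(T_3(x) ≤ C·n·log n) ≥ 1 − n^{−c}. -/
open MeasureTheory Finset
open scoped ENNReal NNReal

noncomputable section

open scoped Classical

lemma wpoly (N u : ℝ) (hN : 25 ≤ N) (h0 : 0 ≤ u) (h25 : 25*u ≤ N^2) :
    240*N^3*u^3 + 80*N^4*u^3 + 80*N^5*u^2 + 960*N^5*u + 2336*N^6*u + 128*N^6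
      ≤ 320*N^3*u^2 + 800*N^4*u^2 + 72*N^6*u^2 + 160*N^7*u + 800*N^8 := by
  have hN0 : (0:ℝ) ≤ N := by linarith
  have hkey : (0:ℝ) ≤ N^2 - 25*u := by linarith
  have hu2 : (0:ℝ) ≤ u*u := mul_nonneg h0 h0
  have A1 : (0:ℝ) ≤ N^3*(u*u)*(N^2-25*u) := by positivity
  have A2 : (0:ℝ) ≤ N^4*(u*u)*(N^2-25*u) := by positivity
  have A3 : (0:ℝ) ≤ N^5*(u*u)*(N-25) := by
    have : (0:ℝ) ≤ N - 25 := by linarith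
    positivity
  have A4 : (0:ℝ) ≤ N^5*u*(N-25) := by
    have : (0:ℝ) ≤ N - 25 := by linarith
    positivity
  have A5 : (0:ℝ) ≤ N^6*u*(N-25) := by
    have : (0:ℝ) ≤ N - 25 := by linarith
    positivity
  have A6 : (0:ℝ) ≤ N^6*(N^2-1) := by
    have : (0:ℝ) ≤ N^2 - 1 := by nlinarith
    positivity
  have M1 : (0:ℝ) ≤ N^3*(u*u) := by positivity
  have M2 : (0:ℝ) ≤ N^4*(u*u) := by positivity
  have M3 : (0:ℝ) ≤ N^6*(u*u) := by positivity
  have M4 : (0:ℝ) ≤ N^5*(u*u) := by positivity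
  have M5 : (0:ℝ) ≤ N^7*u := by positivity
  have M6 : (0:ℝ) ≤ N^8 := by positivity
  nlinarith [A1,A2,A3,A4,A5,A6,M1,M2,M3,M4,M5,M6]
lemma qpoly (N u : ℝ) (hN : 25 ≤ N) (h9 : 9*N ≤ u) :
    320*N^3*u + 480*N^5*u + 128*N^4
      ≤ 240*N^3*u^2 + 72*N^4*u^2 + 64*N^4*u + 640*N^5 := by
  have hN0 : (0:ℝ) ≤ N := by linarith
  have h0 : (0:ℝ) ≤ u := by nlinarith
  have hk : (0:ℝ) ≤ u - 9*N := by linarith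
  have hn25 : (0:ℝ) ≤ N - 25 := by linarith
  have B1 : (0:ℝ) ≤ N^4*u*(u-9*N) := by positivity
  have B3 : (0:ℝ) ≤ N^3*u*(N-25) := by positivity
  have B4 : (0:ℝ) ≤ N^4*(N-25) := by positivity
  have M1 : (0:ℝ) ≤ N^3*(u*u) := by positivity
  have M2 : (0:ℝ) ≤ N^5*u := by positivity
  have M3 : (0:ℝ) ≤ N^5 := by positivity
  have M4 : (0:ℝ) ≤ N^3*u := by positivity
  have M5 : (0:ℝ) ≤ N^4 := by positivity
  nlinarith [B1,B3,B4,M1,M2,M3,M4,M5]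

lemma wstep (N y : ℝ) (hN : 6250 ≤ N) (hy0 : 0 ≤ y) (hyN : y ≤ N)
    (hc : ((2*y-N)^2)^2 + 10*N*(2*y-N)^2 ≤ 10*N^3) :
    ((N-y)/N)*(3*(y/N)^2 - 2*(y/N)^3) * (N^2/(10*N+(2*(y+1)-N)^2) - N^2/(10*N+(2*y-N)^2))
    + (y/N)*(1 - (3*(y/N)^2 - 2*(y/N)^3)) * (N^2/(10*N+(2*(y-1)-N)^2) - N^2/(10*N+(2*y-N)^2))
    + (1/(10*N)) * (N^2/(10*N+(2*y-N)^2)) ≤ 0 := by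
  have hNpos : (0:ℝ) < N := by linarith
  set u : ℝ := (2*y-N)^2 with hu
  have hu0 : 0 ≤ u := sq_nonneg _
  have h25 : 25*u ≤ N^2 := by
    by_contra h
    push_neg at h
    have h2 : N^4 < 625*u^2 := by nlinarith [sq_nonneg N]
    nlinarith [sq_nonneg u, pow_pos hNpos 3]
  have hB0 : (0:ℝ) < 10*N + (2*y-N)^2 := by positivity
  have hBp : (0:ℝ) < 10*N + (2*(y+1)-N)^2 := by positivity
  have hBm : (0:ℝ) < 10*N + (2*(y-1)-N)^2 := by positivity
  have hEq : ((N-y)/N)*(3*(y/N)^2 - 2*(y/N)^3) * (N^2/(10*N+(2*(y+1)-N)^2) - N^2/(10*N+(2*y-N)^2))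
    + (y/N)*(1 - (3*(y/N)^2 - 2*(y/N)^3)) * (N^2/(10*N+(2*(y-1)-N)^2) - N^2/(10*N+(2*y-N)^2))
    + (1/(10*N)) * (N^2/(10*N+(2*y-N)^2))
    = (240*N^3*u^3 + 80*N^4*u^3 + 80*N^5*u^2 + 960*N^5*u + 2336*N^6*u + 128*N^6
      - (320*N^3*u^2 + 800*N^4*u^2 + 72*N^6*u^2 + 160*N^7*u + 800*N^8))
      / (80*N^5*(10*N+(2*(y+1)-N)^2)*(10*N+(2*(y-1)-N)^2)*(10*N+(2*y-N)^2)) := by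
    rw [hu]
    field_simp
    ring
  rw [hEq]
  apply div_nonpos_of_nonpos_of_nonneg
  · have := wpoly N u (by linarith) hu0 h25
    linarith
  · positivity

lemma gstep (N y : ℝ) (hN : 6250 ≤ N) (hy0 : 0 ≤ y) (hyN : y ≤ N)
    (h9 : 9*N ≤ (2*y-N)^2) :
    ((N-y)/N)*(3*(y/N)^2 - 2*(y/N)^3) * ((N^2-(2*(y+1)-N)^2)/(2*(y+1)-N)^2 - (N^2-(2*y-N)^2)/(2*y-N)^2)
    + (y/N)*(1 - (3*(y/N)^2 - 2*(y/N)^3)) * ((N^2-(2*(y-1)-N)^2)/(2*(y-1)-N)^2 - (N^2-(2*y-N)^2)/(2*y-N)^2)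
    + (1/(10*N)) * ((N^2-(2*y-N)^2)/(2*y-N)^2) ≤ 0 := by
  have hNpos : (0:ℝ) < N := by linarith
  set u : ℝ := (2*y-N)^2 with hu
  have hu0 : (0:ℝ) < u := by nlinarith
  have huN : u ≤ N^2 := by nlinarith
  have hD0 : (2*y-N) ≠ 0 := by
    intro h
    rw [hu, h] at h9; norm_num at h9; nlinarith
  have hDp : (2*(y+1)-N) ≠ 0 := by
    intro h
    have : 2*y - N = -2 := by linarith
    rw [hu, this] at h9; norm_num at h9; nlinarith
  have hDm : (2*(y-1)-N) ≠ 0 := by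
    intro h
    have : 2*y - N = 2 := by linarith
    rw [hu, this] at h9; norm_num at h9; nlinarith
  have hEq : ((N-y)/N)*(3*(y/N)^2 - 2*(y/N)^3) * ((N^2-(2*(y+1)-N)^2)/(2*(y+1)-N)^2 - (N^2-(2*y-N)^2)/(2*y-N)^2)
    + (y/N)*(1 - (3*(y/N)^2 - 2*(y/N)^3)) * ((N^2-(2*(y-1)-N)^2)/(2*(y-1)-N)^2 - (N^2-(2*y-N)^2)/(2*y-N)^2)
    + (1/(10*N)) * ((N^2-(2*y-N)^2)/(2*y-N)^2)
    = ((N^2 - u) * (320*N^3*u + 480*N^5*u + 128*N^4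
        - (240*N^3*u^2 + 72*N^4*u^2 + 64*N^4*u + 640*N^5)))
      / (80*N^5*((2*(y+1)-N)^2)*((2*(y-1)-N)^2)*((2*y-N)^2)) := by
    rw [hu]
    have hD0' : y*2 - N ≠ 0 := by rw [mul_comm]; exact hD0
    field_simp
    ring
  rw [hEq]
  apply div_nonpos_of_nonpos_of_nonneg
  · apply mul_nonpos_of_nonneg_of_nonpos
    · linarith
    · have := qpoly N u (by linarith) h9
      linarith
  · positivity






lemma majProb3 (n s : ℕ) : majProb n 3 s = 3*((s:ℝ)/n)^2 - 2*((s:ℝ)/n)^3 := by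
  have h23 : Finset.Icc 2 3 = ({2, 3} : Finset ℕ) := rfl
  simp only [majProb, binomTail, h23, binomPMF, if_neg (by decide : ¬ Even 3)]
  rw [Finset.sum_pair (by norm_num)]
  norm_num [Nat.choose]
  ring

-- abbreviations
def DD (n s : ℕ) : ℝ := (2*(s:ℝ) - n)^2
def condW (n s : ℕ) : Prop := (DD n s)^2 + 10*(n:ℝ)*(DD n s) ≤ 10*(n:ℝ)^3
def Wf (n s : ℕ) : ℝ := (n:ℝ)^2/(10*(n:ℝ) + DD n s)
def gf (n s : ℕ) : ℝ := ((n:ℝ)^2 - DD n s)/(DD n s)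
def phi (n s : ℕ) : ℝ := (n:ℝ) * (if condW n s then Wf n s else gf n s)

lemma DD_nonneg (n s : ℕ) : 0 ≤ DD n s := sq_nonneg _
lemma DD_le (n s : ℕ) (h : s ≤ n) : DD n s ≤ (n:ℝ)^2 := by
  have h1 : (s:ℝ) ≤ n := Nat.cast_le.2 h
  have h2 : (0:ℝ) ≤ s := Nat.cast_nonneg s
  have : (2*(s:ℝ) - n)^2 ≤ ((n:ℝ))^2 := by nlinarith
  simpa [DD] using this

lemma not_condW_nine (n s : ℕ) (hn : 6250 ≤ n) (h : ¬ condW n s) : 9*(n:ℝ) ≤ DD n s := by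
  have hN : (6250:ℝ) ≤ n := by exact_mod_cast Nat.cast_le.2 hn
  by_contra hlt
  push_neg at hlt
  apply h
  unfold condW
  have h0 := DD_nonneg n s
  have hh1 : (0:ℝ) ≤ (9*(n:ℝ) - DD n s)*(9*(n:ℝ) + DD n s) := by
    apply mul_nonneg <;> linarith
  have hh2 : (0:ℝ) ≤ (10*(n:ℝ))*(9*(n:ℝ) - DD n s) := by
    apply mul_nonneg <;> linarith
  have hh3 : (0:ℝ) ≤ ((n:ℝ) - 6250)*(n:ℝ)^2 := by
    apply mul_nonneg (by linarith) (by positivity)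
  nlinarith [hh1, hh2, hh3]

lemma condW_region (n s : ℕ) (hn : 6250 ≤ n) (h : condW n s) : 25 * DD n s ≤ (n:ℝ)^2 := by
  have hN : (6250:ℝ) ≤ n := by exact_mod_cast Nat.cast_le.2 hn
  have h0 := DD_nonneg n s
  unfold condW at h
  by_contra hlt
  push_neg at hlt
  have h2 : (n:ℝ)^4 < 625*(DD n s)^2 := by nlinarith [sq_nonneg ((n:ℝ))]
  nlinarith [sq_nonneg (DD n s), pow_pos (by linarith : (0:ℝ) < (n:ℝ)) 3]

lemma phi_nonneg (n s : ℕ) (h : s ≤ n) : 0 ≤ phi n s := by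
  unfold phi
  apply mul_nonneg (Nat.cast_nonneg n)
  have hD0 := DD_nonneg n s
  split
  · unfold Wf
    apply div_nonneg (by positivity)
    have : (0:ℝ) ≤ n := Nat.cast_nonneg n
    linarith
  · unfold gf
    apply div_nonneg _ (DD_nonneg n s)
    have := DD_le n s h
    linarith

lemma phi_zero (n : ℕ) (hn : 1 ≤ n) : phi n 0 = 0 := by
  have hN : (1:ℝ) ≤ n := by exact_mod_cast hn
  have hD : DD n 0 = (n:ℝ)^2 := by simp [DD]
  have hc : ¬ condW n 0 := by
    unfold condW; rw [hD]; push_neg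
    nlinarith [pow_pos (by linarith : (0:ℝ) < (n:ℝ)) 4]
  simp [phi, hc, gf, hD]

lemma phi_n (n : ℕ) (hn : 1 ≤ n) : phi n n = 0 := by
  have hN : (1:ℝ) ≤ n := by exact_mod_cast hn
  have hD : DD n n = (n:ℝ)^2 := by simp [DD]; ring
  have hc : ¬ condW n n := by
    unfold condW; rw [hD]; push_neg
    nlinarith [pow_pos (by linarith : (0:ℝ) < (n:ℝ)) 4]
  simp [phi, hc, gf, hD]

lemma DD_interior (n s : ℕ) (h1 : 1 ≤ s) (h2 : s ≤ n - 1) : DD n s ≤ ((n:ℝ)-2)^2 := by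
  have hn1 : 1 ≤ n := le_trans h1 (by omega)
  have hs : (1:ℝ) ≤ s := by exact_mod_cast h1
  have hsn : (s:ℝ) ≤ (n:ℝ) - 1 := by
    have : s ≤ n - 1 := h2
    have h3 : (s:ℝ) ≤ ((n-1:ℕ):ℝ) := by exact_mod_cast this
    rwa [Nat.cast_sub hn1, Nat.cast_one] at h3
  have : (2*(s:ℝ) - n)^2 ≤ ((n:ℝ)-2)^2 := by nlinarith
  simpa [DD] using this

lemma phi_ge_one (n s : ℕ) (hn : 6250 ≤ n) (h1 : 1 ≤ s) (h2 : s ≤ n - 1) : 1 ≤ phi n s := by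
  have hN : (6250:ℝ) ≤ n := by exact_mod_cast Nat.cast_le.2 hn
  have hDi := DD_interior n s h1 h2
  have hD0 := DD_nonneg n s
  unfold phi
  split
  · unfold Wf
    rw [mul_div_assoc']
    rw [le_div_iff₀ (by positivity)]
    nlinarith
  · unfold gf
    rename_i hc
    have h9 := not_condW_nine n s hn hc
    rw [mul_div_assoc']
    rw [le_div_iff₀ (by linarith)]
    nlinarith

lemma phi_le_sq (n s : ℕ) (hn : 6250 ≤ n) (hs : s ≤ n) : phi n s ≤ (n:ℝ)^2 := by
  have hN : (6250:ℝ) ≤ n := by exact_mod_cast Nat.cast_le.2 hn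
  have hD0 := DD_nonneg n s
  unfold phi
  split
  · unfold Wf
    rw [mul_div_assoc']
    rw [div_le_iff₀ (by positivity)]
    nlinarith
  · unfold gf
    rename_i hc
    have h9 := not_condW_nine n s hn hc
    rw [mul_div_assoc']
    rw [div_le_iff₀ (by linarith)]
    have := DD_le n s hs
    nlinarith

lemma phi_le_W (n u : ℕ) (hn : 6250 ≤ n) : phi n u ≤ (n:ℝ) * Wf n u := by
  have hN : (6250:ℝ) ≤ n := by exact_mod_cast Nat.cast_le.2 hn
  have hD0 := DD_nonneg n u
  unfold phi
  split
  · exact le_rfl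
  · rename_i hc
    apply mul_le_mul_of_nonneg_left _ (Nat.cast_nonneg n)
    have h9 := not_condW_nine n u hn hc
    have hcc : 10*(n:ℝ)^3 < (DD n u)^2 + 10*(n:ℝ)*(DD n u) := by
      by_contra hx
      push_neg at hx
      exact hc hx
    unfold gf Wf
    rw [div_le_div_iff₀ (by linarith) (by linarith)]
    nlinarith

lemma phi_le_g (n u : ℕ) (hn : 6250 ≤ n) (hD : 0 < DD n u) : phi n u ≤ (n:ℝ) * gf n u := by
  have hN : (6250:ℝ) ≤ n := by exact_mod_cast Nat.cast_le.2 hn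
  unfold phi
  split
  · rename_i hc
    apply mul_le_mul_of_nonneg_left _ (Nat.cast_nonneg n)
    unfold condW at hc
    unfold gf Wf
    rw [div_le_div_iff₀ (by linarith) hD]
    nlinarith
  · exact le_rfl



lemma K_up (n s : ℕ) : seqKernel n 3 s (s+1) = (((n:ℝ) - s)/n) * majProb n 3 s := by
  simp [seqKernel]
lemma K_down (n s : ℕ) (h : 1 ≤ s) : seqKernel n 3 s (s-1) = ((s:ℝ)/n) * (1 - majProb n 3 s) := by
  unfold seqKernel
  rw [if_neg (by omega), if_pos (by omega)]
lemma K_stay (n s : ℕ) : seqKernel n 3 s s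
    = 1 - (((n:ℝ) - s)/n) * majProb n 3 s - ((s:ℝ)/n) * (1 - majProb n 3 s) := by
  unfold seqKernel
  rw [if_neg (by omega), if_neg (by omega), if_pos rfl]
lemma K_zero (n s u : ℕ) (h1 : u ≠ s+1) (h2 : u + 1 ≠ s) (h3 : u ≠ s) : seqKernel n 3 s u = 0 := by
  unfold seqKernel
  rw [if_neg h1, if_neg h2, if_neg h3]

lemma maj_nonneg (n s : ℕ) (hs : s ≤ n) : 0 ≤ majProb n 3 s := by
  rcases Nat.eq_zero_or_pos n with h | h
  · subst h
    rw [majProb3]; norm_num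
  · have hp0 : (0:ℝ) ≤ (s:ℝ)/n := by positivity
    have hp1 : (s:ℝ)/n ≤ 1 := by
      rw [div_le_one (by exact_mod_cast h)]
      exact_mod_cast hs
    rw [majProb3]
    nlinarith [sq_nonneg ((s:ℝ)/n)]
lemma maj_le_one (n s : ℕ) (hs : s ≤ n) : majProb n 3 s ≤ 1 := by
  rcases Nat.eq_zero_or_pos n with h | h
  · subst h
    rw [majProb3]; norm_num
  · have hp0 : (0:ℝ) ≤ (s:ℝ)/n := by positivity
    have hp1 : (s:ℝ)/n ≤ 1 := by
      rw [div_le_one (by exact_mod_cast h)]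
      exact_mod_cast hs
    rw [majProb3]
    nlinarith [sq_nonneg (1 - (s:ℝ)/n), sq_nonneg ((s:ℝ)/n)]

lemma K_nonneg (n s u : ℕ) (hs : s ≤ n) : 0 ≤ seqKernel n 3 s u := by
  have hq0 := maj_nonneg n s hs
  have hq1 := maj_le_one n s hs
  have hsn : (s:ℝ) ≤ n := by exact_mod_cast hs
  have hs0 : (0:ℝ) ≤ s := Nat.cast_nonneg s
  have hn0 : (0:ℝ) ≤ n := Nat.cast_nonneg n
  rcases Nat.eq_zero_or_pos n with h | h
  · subst h
    have : s = 0 := by omega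
    subst this
    unfold seqKernel
    split_ifs <;> norm_num [majProb3]
  · have hnpos : (0:ℝ) < n := by exact_mod_cast h
    have hup : 0 ≤ (((n:ℝ) - s)/n) * majProb n 3 s := by
      apply mul_nonneg _ hq0
      apply div_nonneg (by linarith) (by linarith)
    have hdn : 0 ≤ ((s:ℝ)/n) * (1 - majProb n 3 s) := by
      apply mul_nonneg (by positivity) (by linarith)
    unfold seqKernel
    split
    · exact hup
    split
    · exact hdn
    split
    · -- stay: 1 - up - dn ≥ 0
      have h1 : (((n:ℝ) - s)/n) * majProb n 3 s ≤ ((n:ℝ)-s)/n := by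
        nlinarith [div_nonneg (by linarith : (0:ℝ) ≤ (n:ℝ)-s) (le_of_lt hnpos)]
      have h2 : ((s:ℝ)/n) * (1 - majProb n 3 s) ≤ (s:ℝ)/n := by
        nlinarith [div_nonneg hs0 (le_of_lt hnpos)]
      have h3 : ((n:ℝ)-s)/n + (s:ℝ)/n = 1 := by field_simp; ring
      linarith
    · exact le_rfl


lemma DD_succ (n s : ℕ) : DD n (s+1) = (2*((s:ℝ)+1) - n)^2 := by
  unfold DD; push_cast; ring

lemma DD_pred (n s : ℕ) (h : 1 ≤ s) : DD n (s-1) = (2*((s:ℝ)-1) - n)^2 := by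
  unfold DD
  rw [Nat.cast_sub h]
  push_cast; ring

set_option maxHeartbeats 1000000 in
lemma key (n s : ℕ) (hn : 6250 ≤ n) (h1 : 1 ≤ s) (h2 : s ≤ n - 1) :
    ∑ u ∈ Finset.Icc 1 (n-1), seqKernel n 3 s u * phi n u
      ≤ (1 - 1/(10*(n:ℝ))) * phi n s := by
  have hn1 : 1 ≤ n := by omega
  have hN : (6250:ℝ) ≤ n := by exact_mod_cast Nat.cast_le.2 hn
  have hNpos : (0:ℝ) < n := by linarith
  have hsn : s ≤ n := by omega
  have hs1n : s + 1 ≤ n := by omega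
  have hy0 : (0:ℝ) ≤ (s:ℝ) := Nat.cast_nonneg s
  have hyN : (s:ℝ) ≤ (n:ℝ) := by exact_mod_cast hsn
  -- extend the sum to Icc 0 n
  have hsub : Finset.Icc 1 (n-1) ⊆ Finset.Icc 0 n := by
    intro u hu
    simp only [Finset.mem_Icc] at hu ⊢
    omega
  have hstep1 : ∑ u ∈ Finset.Icc 1 (n-1), seqKernel n 3 s u * phi n u
      = ∑ u ∈ Finset.Icc 0 n, seqKernel n 3 s u * phi n u := by
    apply Finset.sum_subset hsub
    intro u hu hnu
    simp only [Finset.mem_Icc] at hu hnu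
    have : u = 0 ∨ u = n := by omega
    rcases this with h | h
    · rw [h, phi_zero n hn1]; ring
    · rw [h, phi_n n hn1]; ring
  have htri : ({s-1, s, s+1} : Finset ℕ) ⊆ Finset.Icc 0 n := by
    intro u hu
    simp only [Finset.mem_insert, Finset.mem_singleton] at hu
    simp only [Finset.mem_Icc]
    omega
  have hstep2 : ∑ u ∈ Finset.Icc 0 n, seqKernel n 3 s u * phi n u
      = ∑ u ∈ ({s-1, s, s+1} : Finset ℕ), seqKernel n 3 s u * phi n u := by
    symm
    apply Finset.sum_subset htri
    intro u hu hnu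
    simp only [Finset.mem_insert, Finset.mem_singleton] at hnu
    push_neg at hnu
    rw [K_zero n s u (by omega) (by omega) (by omega)]
    ring
  have hstep3 : ∑ u ∈ ({s-1, s, s+1} : Finset ℕ), seqKernel n 3 s u * phi n u
      = seqKernel n 3 s (s-1) * phi n (s-1) + seqKernel n 3 s s * phi n s
        + seqKernel n 3 s (s+1) * phi n (s+1) := by
    rw [Finset.sum_insert (by simp; omega), Finset.sum_insert (by simp), Finset.sum_singleton]
    ring
  rw [hstep1, hstep2, hstep3, K_up, K_down n s h1, K_stay, majProb3]
  set N : ℝ := (n:ℝ) with hNdef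
  set y : ℝ := (s:ℝ) with hydef
  -- nonnegativity of the two move probabilities
  have hup0 : 0 ≤ ((N - y)/N) * (3*(y/N)^2 - 2*(y/N)^3) := by
    have := maj_nonneg n s hsn
    rw [majProb3] at this
    apply mul_nonneg (div_nonneg (by linarith) (by linarith)) this
  have hdn0 : 0 ≤ (y/N) * (1 - (3*(y/N)^2 - 2*(y/N)^3)) := by
    have := maj_le_one n s hsn
    rw [majProb3] at this
    apply mul_nonneg (div_nonneg hy0 (by linarith)) (by linarith)
  by_cases hc : condW n s
  · -- W branch
    have hphis : phi n s = N * (N^2/(10*N + (2*y - N)^2)) := by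
      simp only [phi, if_pos hc, Wf, DD, hNdef, hydef]
    have hbp : phi n (s+1) ≤ N * (N^2/(10*N + (2*(y+1) - N)^2)) := by
      have h := phi_le_W n (s+1) hn
      rwa [Wf, DD_succ] at h
    have hbm : phi n (s-1) ≤ N * (N^2/(10*N + (2*(y-1) - N)^2)) := by
      have h := phi_le_W n (s-1) hn
      rwa [Wf, DD_pred n s h1] at h
    have hc' : ((2*y - N)^2)^2 + 10*N*(2*y - N)^2 ≤ 10*N^3 := hc
    have hws := wstep N y hN hy0 hyN hc'
    have hmul : N * (((N-y)/N)*(3*(y/N)^2 - 2*(y/N)^3) * (N^2/(10*N+(2*(y+1)-N)^2) - N^2/(10*N+(2*y-N)^2))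
      + (y/N)*(1 - (3*(y/N)^2 - 2*(y/N)^3)) * (N^2/(10*N+(2*(y-1)-N)^2) - N^2/(10*N+(2*y-N)^2))
      + (1/(10*N)) * (N^2/(10*N+(2*y-N)^2))) ≤ 0 :=
      mul_nonpos_of_nonneg_of_nonpos (by linarith) hws
    have m1 : ((N - y)/N) * (3*(y/N)^2 - 2*(y/N)^3) * phi n (s+1)
        ≤ ((N - y)/N) * (3*(y/N)^2 - 2*(y/N)^3) * (N * (N^2/(10*N + (2*(y+1) - N)^2))) :=
      mul_le_mul_of_nonneg_left hbp hup0
    have m2 : (y/N) * (1 - (3*(y/N)^2 - 2*(y/N)^3)) * phi n (s-1)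
        ≤ (y/N) * (1 - (3*(y/N)^2 - 2*(y/N)^3)) * (N * (N^2/(10*N + (2*(y-1) - N)^2))) :=
      mul_le_mul_of_nonneg_left hbm hdn0
    rw [hphis]
    nlinarith [hmul, m1, m2]
  · -- g branch
    have h9 := not_condW_nine n s hn hc
    have h9' : 9*N ≤ (2*y - N)^2 := h9
    have hphis : phi n s = N * ((N^2 - (2*y - N)^2)/(2*y - N)^2) := by
      simp only [phi, if_neg hc, gf, DD, hNdef, hydef]
    have hDp : 0 < DD n (s+1) := by
      rw [DD_succ]
      have hne : 2*((s:ℝ)+1) - (n:ℝ) ≠ 0 := by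
        intro h
        have h4 : (2*y - N)^2 = 4 := by
          have hh : 2*y - N = -2 := by
            rw [hydef, hNdef]; linarith
          rw [hh]; norm_num
        rw [h4] at h9'
        linarith
      positivity
    have hDm : 0 < DD n (s-1) := by
      rw [DD_pred n s h1]
      have hne : 2*((s:ℝ)-1) - (n:ℝ) ≠ 0 := by
        intro h
        have h4 : (2*y - N)^2 = 4 := by
          have hh : 2*y - N = 2 := by
            rw [hydef, hNdef]; linarith
          rw [hh]; norm_num
        rw [h4] at h9'
        linarith
      positivity
    have hbp : phi n (s+1) ≤ N * ((N^2 - (2*(y+1) - N)^2)/(2*(y+1) - N)^2) := by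
      have h := phi_le_g n (s+1) hn hDp
      rwa [gf, DD_succ] at h
    have hbm : phi n (s-1) ≤ N * ((N^2 - (2*(y-1) - N)^2)/(2*(y-1) - N)^2) := by
      have h := phi_le_g n (s-1) hn hDm
      rwa [gf, DD_pred n s h1] at h
    have hgs := gstep N y hN hy0 hyN h9'
    have hmul : N * (((N-y)/N)*(3*(y/N)^2 - 2*(y/N)^3) * ((N^2-(2*(y+1)-N)^2)/(2*(y+1)-N)^2 - (N^2-(2*y-N)^2)/(2*y-N)^2)
      + (y/N)*(1 - (3*(y/N)^2 - 2*(y/N)^3)) * ((N^2-(2*(y-1)-N)^2)/(2*(y-1)-N)^2 - (N^2-(2*y-N)^2)/(2*y-N)^2)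
      + (1/(10*N)) * ((N^2-(2*y-N)^2)/(2*y-N)^2)) ≤ 0 :=
      mul_nonpos_of_nonneg_of_nonpos (by linarith) hgs
    have m1 : ((N - y)/N) * (3*(y/N)^2 - 2*(y/N)^3) * phi n (s+1)
        ≤ ((N - y)/N) * (3*(y/N)^2 - 2*(y/N)^3) * (N * ((N^2 - (2*(y+1) - N)^2)/(2*(y+1) - N)^2)) :=
      mul_le_mul_of_nonneg_left hbp hup0
    have m2 : (y/N) * (1 - (3*(y/N)^2 - 2*(y/N)^3)) * phi n (s-1)
        ≤ (y/N) * (1 - (3*(y/N)^2 - 2*(y/N)^3)) * (N * ((N^2 - (2*(y-1) - N)^2)/(2*(y-1) - N)^2)) :=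
      mul_le_mul_of_nonneg_left hbm hdn0
    rw [hphis]
    nlinarith [hmul, m1, m2]


/-! ### Path spaces -/

def extFn (t : ℕ) (p : ℕ → ℕ) (u : ℕ) : ℕ → ℕ := fun i => if i = t+1 then u else p i

def PF (n : ℕ) : ℕ → Finset (ℕ → ℕ)
  | 0 => (Finset.Icc 1 (n-1)).image (fun s i => if i = 0 then s else 0)
  | (t+1) => ((PF n t) ×ˢ (Finset.Icc 1 (n-1))).image (fun q => extFn t q.1 q.2)

lemma mem_PF (n : ℕ) : ∀ (t : ℕ) (p : ℕ → ℕ), p ∈ PF n t ↔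
    ((∀ i, i ≤ t → p i ∈ Finset.Icc 1 (n-1)) ∧ ∀ i, t < i → p i = 0) := by
  intro t
  induction t with
  | zero =>
    intro p
    constructor
    · intro hp
      simp only [PF, Finset.mem_image] at hp
      obtain ⟨a, ha, rfl⟩ := hp
      constructor
      · intro i hi
        have : i = 0 := by omega
        subst this
        simpa using ha
      · intro i hi
        have hne : i ≠ 0 := by omega
        simp [hne]
    · rintro ⟨h1, h2⟩
      simp only [PF, Finset.mem_image]
      refine ⟨p 0, by simpa using h1 0 le_rfl, funext fun i => ?_⟩
      by_cases hi : i = 0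
      · subst hi; simp
      · simp [hi, h2 i (by omega)]
  | succ t ih =>
    intro p
    constructor
    · intro hp
      simp only [PF, Finset.mem_image, Finset.mem_product] at hp
      obtain ⟨⟨q, u⟩, ⟨hq, hu⟩, rfl⟩ := hp
      have hq' := (ih q).1 hq
      constructor
      · intro i hi
        by_cases h : i = t+1
        · subst h; simpa [extFn] using hu
        · have : i ≤ t := by omega
          simpa [extFn, h] using hq'.1 i this
      · intro i hi
        have h : i ≠ t+1 := by omega
        simp only [extFn, if_neg h]
        exact hq'.2 i (by omega)
    · rintro ⟨h1, h2⟩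
      simp only [PF, Finset.mem_image, Finset.mem_product]
      refine ⟨⟨fun i => if i = t+1 then 0 else p i, p (t+1)⟩, ⟨?_, by simpa using h1 (t+1) le_rfl⟩, ?_⟩
      · rw [ih]
        constructor
        · intro i hi
          show (if i = t+1 then 0 else p i) ∈ Finset.Icc 1 (n-1)
          rw [if_neg (by omega)]
          exact h1 i (by omega)
        · intro i hi
          show (if i = t+1 then 0 else p i) = 0
          by_cases h : i = t+1
          · simp [h]
          · rw [if_neg h]
            exact h2 i (by omega)
      · funext i
        by_cases h : i = t+1
        · subst h; simp [extFn]
        · simp [extFn, h]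

lemma PF_interior (n t : ℕ) (p : ℕ → ℕ) (hp : p ∈ PF n t) (i : ℕ) (hi : i ≤ t) :
    1 ≤ p i ∧ p i ≤ n - 1 := by
  have := ((mem_PF n t p).1 hp).1 i hi
  simpa [Finset.mem_Icc] using this

/-! ### Path weights -/

def wgt (n x t : ℕ) (p : ℕ → ℕ) : ℝ :=
  (if p 0 = x then 1 else 0) * ∏ i ∈ Finset.range t, seqKernel n 3 (p i) (p (i+1))

lemma wgt_nonneg (n x t : ℕ) (p : ℕ → ℕ) (hp : p ∈ PF n t) : 0 ≤ wgt n x t p := by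
  apply mul_nonneg
  · split <;> norm_num
  · apply Finset.prod_nonneg
    intro i hi
    simp only [Finset.mem_range] at hi
    exact K_nonneg n (p i) (p (i+1)) (by have := PF_interior n t p hp i (by omega); omega)

lemma wgt_succ (n x t : ℕ) (p : ℕ → ℕ) (u : ℕ) :
    wgt n x (t+1) (extFn t p u) = wgt n x t p * seqKernel n 3 (p t) u := by
  unfold wgt
  rw [Finset.prod_range_succ]
  have h0 : extFn t p u 0 = p 0 := by simp [extFn]
  have hlast : extFn t p u (t+1) = u := by simp [extFn]
  have ht : extFn t p u t = p t := by simp [extFn]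
  rw [h0, hlast, ht]
  have : ∏ i ∈ Finset.range t, seqKernel n 3 (extFn t p u i) (extFn t p u (i+1))
      = ∏ i ∈ Finset.range t, seqKernel n 3 (p i) (p (i+1)) := by
    apply Finset.prod_congr rfl
    intro i hi
    simp only [Finset.mem_range] at hi
    rw [show extFn t p u i = p i by simp [extFn]; omega,
        show extFn t p u (i+1) = p (i+1) by simp [extFn]; omega]
  rw [this]
  ring


/-! ### Cylinder events -/

def cylE {Ω : Type} (X : ℕ → Ω → ℕ) (t : ℕ) (p : ℕ → ℕ) : Set Ω := {ω | ∀ i ≤ t, X i ω = p i}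

lemma cylE_meas {Ω : Type} [MeasurableSpace Ω] (X : ℕ → Ω → ℕ)
    (hm : ∀ t, Measurable (X t)) (t : ℕ) (p : ℕ → ℕ) : MeasurableSet (cylE X t p) := by
  have h : cylE X t p = ⋂ (i : ℕ) (_ : i ≤ t), (X i)⁻¹' {p i} := by
    ext ω; simp [cylE]
  rw [h]
  exact MeasurableSet.iInter fun i => MeasurableSet.iInter fun _ => (hm i) (measurableSet_singleton _)

lemma cyl_measure {Ω : Type} [MeasurableSpace Ω] (μ : Measure Ω) (X : ℕ → Ω → ℕ)
    (n x : ℕ) (hX : IsMarkovChain μ (seqKernel n 3) x X) :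
    ∀ (t : ℕ) (p : ℕ → ℕ), (∀ i, i < t → 0 ≤ seqKernel n 3 (p i) (p (i+1))) →
      μ (cylE X t p) = ENNReal.ofReal (wgt n x t p) := by
  obtain ⟨hprob, hmeas, h0, hM⟩ := hX
  haveI := hprob
  intro t
  induction t with
  | zero =>
    intro p _
    have hset : cylE X 0 p = {ω | X 0 ω = p 0} := by
      ext ω
      simp [cylE, Nat.le_zero]
    rw [hset]
    by_cases h : p 0 = x
    · rw [h, h0]
      simp [wgt, h]
    · have hnull : μ {ω | X 0 ω = p 0} = 0 := by
        refine measure_mono_null ?_ (?_ : μ {ω | X 0 ω = x}ᶜ = 0)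
        · intro ω hω hc
          simp only [Set.mem_setOf_eq] at hω hc
          exact h (hω.symm.trans hc)
        · have hms : MeasurableSet {ω | X 0 ω = x} := (hmeas 0) (measurableSet_singleton x)
          rw [MeasureTheory.prob_compl_eq_one_sub hms, h0]
          simp
      rw [hnull]
      simp [wgt, h]
  | succ t ih =>
    intro p hK
    have hset : cylE X (t+1) p = {ω | X (t+1) ω = p (t+1)} ∩ cylE X t p := by
      ext ω
      simp only [cylE, Set.mem_setOf_eq, Set.mem_inter_iff]
      constructor
      · intro h
        exact ⟨h (t+1) le_rfl, fun i hi => h i (by omega)⟩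
      · rintro ⟨h1, h2⟩ i hi
        by_cases hh : i = t+1
        · rw [hh]; exact h1
        · exact h2 i (by omega)
    rw [hset]
    have := hM t p (p (t+1))
    rw [show ({ω | ∀ i ≤ t, X i ω = p i} : Set Ω) = cylE X t p from rfl] at this
    rw [this, ih p (fun i hi => hK i (by omega))]
    rw [← ENNReal.ofReal_mul (hK t (by omega))]
    congr 1
    unfold wgt
    rw [Finset.prod_range_succ]
    ring

lemma E_bound {Ω : Type} [MeasurableSpace Ω] (μ : Measure Ω) (X : ℕ → Ω → ℕ) (n t : ℕ) :
    μ {ω | ∀ i ≤ t, X i ω ∈ Finset.Icc 1 (n-1)}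
      ≤ ∑ p ∈ PF n t, μ (cylE X t p) := by
  refine le_trans (measure_mono ?_) (measure_biUnion_finset_le _ _)
  intro ω hω
  simp only [Set.mem_setOf_eq] at hω
  have hmem : (fun i => if i ≤ t then X i ω else 0) ∈ PF n t := by
    rw [mem_PF]
    constructor
    · intro i hi
      rw [if_pos hi]
      exact hω i hi
    · intro i hi
      rw [if_neg (by omega)]
  refine Set.mem_biUnion hmem ?_
  intro i hi
  simp [if_pos hi]

/-! ### Real sum estimates -/

lemma TS_zero (n x : ℕ) (hx1 : 1 ≤ x) (hx2 : x ≤ n - 1) :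
    ∑ p ∈ PF n 0, wgt n x 0 p * phi n (p 0) = phi n x := by
  have hinj : ∀ a ∈ Finset.Icc 1 (n-1), ∀ b ∈ Finset.Icc 1 (n-1),
      (fun s (i : ℕ) => if i = 0 then s else 0) a = (fun s (i : ℕ) => if i = 0 then s else 0) b → a = b := by
    intro a _ b _ h
    have := congr_fun h 0
    simpa using this
  show ∑ p ∈ (Finset.Icc 1 (n-1)).image (fun s i => if i = 0 then s else 0), wgt n x 0 p * phi n (p 0) = phi n x
  rw [Finset.sum_image hinj]
  have : ∀ s ∈ Finset.Icc 1 (n-1), wgt n x 0 (fun i => if i = 0 then s else 0) * phi n ((fun i : ℕ => if i = 0 then s else 0) 0)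
      = if s = x then phi n s else 0 := by
    intro s _
    by_cases h : s = x <;> simp [wgt, h]
  rw [Finset.sum_congr rfl this, Finset.sum_ite_eq' (Finset.Icc 1 (n-1)) x (fun s => phi n s),
    if_pos (by simp [Finset.mem_Icc]; omega)]

lemma TS_succ (n x : ℕ) (hn : 6250 ≤ n) (t : ℕ) :
    ∑ p ∈ PF n (t+1), wgt n x (t+1) p * phi n (p (t+1))
      ≤ (1 - 1/(10*(n:ℝ))) * ∑ p ∈ PF n t, wgt n x t p * phi n (p t) := by
  have hinj : ∀ a ∈ (PF n t) ×ˢ (Finset.Icc 1 (n-1)), ∀ b ∈ (PF n t) ×ˢ (Finset.Icc 1 (n-1)),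
      extFn t a.1 a.2 = extFn t b.1 b.2 → a = b := by
    rintro ⟨p, u⟩ hmem ⟨q, v⟩ hmem' heq
    simp only [Finset.mem_product] at hmem hmem'
    have hpz := ((mem_PF n t p).1 hmem.1).2
    have hqz := ((mem_PF n t q).1 hmem'.1).2
    have huv : u = v := by
      have := congr_fun heq (t+1)
      simpa [extFn] using this
    have hpq : p = q := by
      funext i
      by_cases h : i = t+1
      · rw [h, hpz (t+1) (by omega), hqz (t+1) (by omega)]
      · have := congr_fun heq i
        simpa [extFn, h] using this
    exact Prod.ext hpq huv
  show ∑ p ∈ ((PF n t) ×ˢ (Finset.Icc 1 (n-1))).image (fun q => extFn t q.1 q.2), wgt n x (t+1) p * phi n (p (t+1)) ≤ _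
  rw [Finset.sum_image hinj, Finset.sum_product]
  have hterm : ∀ p ∈ PF n t, ∀ u ∈ Finset.Icc 1 (n-1),
      wgt n x (t+1) (extFn t p u) * phi n (extFn t p u (t+1))
        = wgt n x t p * (seqKernel n 3 (p t) u * phi n u) := by
    intro p _ u _
    rw [wgt_succ, show extFn t p u (t+1) = u by simp [extFn]]
    ring
  calc ∑ p ∈ PF n t, ∑ u ∈ Finset.Icc 1 (n-1), wgt n x (t+1) (extFn t p u) * phi n (extFn t p u (t+1))
      = ∑ p ∈ PF n t, wgt n x t p * ∑ u ∈ Finset.Icc 1 (n-1), seqKernel n 3 (p t) u * phi n u := by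
        apply Finset.sum_congr rfl
        intro p hp
        rw [Finset.mul_sum]
        exact Finset.sum_congr rfl (fun u hu => hterm p hp u hu)
    _ ≤ ∑ p ∈ PF n t, wgt n x t p * ((1 - 1/(10*(n:ℝ))) * phi n (p t)) := by
        apply Finset.sum_le_sum
        intro p hp
        have hint := PF_interior n t p hp t le_rfl
        exact mul_le_mul_of_nonneg_left (key n (p t) hn hint.1 hint.2) (wgt_nonneg n x t p hp)
    _ = (1 - 1/(10*(n:ℝ))) * ∑ p ∈ PF n t, wgt n x t p * phi n (p t) := by
        rw [Finset.mul_sum]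
        exact Finset.sum_congr rfl (fun p _ => by ring)

lemma TS_bound (n x : ℕ) (hn : 6250 ≤ n) (hx1 : 1 ≤ x) (hx2 : x ≤ n - 1) :
    ∀ t, ∑ p ∈ PF n t, wgt n x t p * phi n (p t)
      ≤ (1 - 1/(10*(n:ℝ)))^t * phi n x := by
  have hN : (6250:ℝ) ≤ n := by exact_mod_cast Nat.cast_le.2 hn
  intro t
  induction t with
  | zero =>
    rw [TS_zero n x hx1 hx2]
    simp
  | succ t ih =>
    calc ∑ p ∈ PF n (t+1), wgt n x (t+1) p * phi n (p (t+1))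
        ≤ (1 - 1/(10*(n:ℝ))) * ∑ p ∈ PF n t, wgt n x t p * phi n (p t) := TS_succ n x hn t
      _ ≤ (1 - 1/(10*(n:ℝ))) * ((1 - 1/(10*(n:ℝ)))^t * phi n x) := by
          apply mul_le_mul_of_nonneg_left ih
          have : 1/(10*(n:ℝ)) ≤ 1 := by
            rw [div_le_one (by linarith)]
            linarith
          linarith
      _ = (1 - 1/(10*(n:ℝ)))^(t+1) * phi n x := by ring

lemma wgt_le_TS (n x t : ℕ) (hn : 6250 ≤ n) :
    ∑ p ∈ PF n t, wgt n x t p ≤ ∑ p ∈ PF n t, wgt n x t p * phi n (p t) := by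
  apply Finset.sum_le_sum
  intro p hp
  have hint := PF_interior n t p hp t le_rfl
  have h1 := phi_ge_one n (p t) hn hint.1 hint.2
  have h0 := wgt_nonneg n x t p hp
  nlinarith


/-! ### The escape-to-large-values null set -/

lemma nohit_diff_null {Ω : Type} [MeasurableSpace Ω] (μ : Measure Ω) (X : ℕ → Ω → ℕ)
    (n x : ℕ) (hX : IsMarkovChain μ (seqKernel n 3) x X) (hn : 1 ≤ n) (hx : x ≤ n) :
    ∀ t, μ ({ω | ∀ i ≤ t, ¬(X i ω = 0 ∨ X i ω = n)} \ {ω | ∀ i ≤ t, X i ω ∈ Finset.Icc 1 (n-1)}) = 0 := by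
  haveI := hX.1
  have hmeas := hX.2.1
  have h0 := hX.2.2.1
  have hM := hX.2.2.2
  intro t
  induction t with
  | zero =>
    refine measure_mono_null ?_ (?_ : μ {ω | X 0 ω = x}ᶜ = 0)
    · rintro ω ⟨h1, h2⟩
      simp only [Set.mem_setOf_eq] at h1 h2
      push_neg at h2
      obtain ⟨i, hi, hnot⟩ := h2
      have hi0 : i = 0 := by omega
      subst hi0
      have hb := h1 0 le_rfl
      simp only [Finset.mem_Icc] at hnot
      intro hc
      simp only [Set.mem_setOf_eq] at hc
      apply hb
      omega
    · have hms : MeasurableSet {ω | X 0 ω = x} := (hmeas 0) (measurableSet_singleton x)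
      rw [MeasureTheory.prob_compl_eq_one_sub hms, h0]
      simp
  | succ t ih =>
    have hB : μ {ω | (∀ i ≤ t, X i ω ∈ Finset.Icc 1 (n-1)) ∧ n < X (t+1) ω} = 0 := by
      refine measure_mono_null (?_ : _ ⊆ ⋃ (u : ℕ), ⋃ (_ : n < u), ⋃ p ∈ PF n t, (cylE X t p ∩ {ω | X (t+1) ω = u})) ?_
      · rintro ω ⟨hE, hgt⟩
        refine Set.mem_iUnion.2 ⟨X (t+1) ω, Set.mem_iUnion.2 ⟨hgt, ?_⟩⟩
        have hmem : (fun i => if i ≤ t then X i ω else 0) ∈ PF n t := by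
          rw [mem_PF]
          exact ⟨fun i hi => by rw [if_pos hi]; exact hE i hi, fun i hi => by rw [if_neg (by omega)]⟩
        refine Set.mem_biUnion hmem ⟨?_, rfl⟩
        intro i hi
        simp [if_pos hi]
      · apply measure_iUnion_null
        intro u
        apply measure_iUnion_null
        intro hu
        refine le_antisymm (le_trans (measure_biUnion_finset_le _ _) ?_) zero_le
        refine le_of_eq (Finset.sum_eq_zero ?_)
        intro p hp
        have hpt := PF_interior n t p hp t le_rfl
        have hKz : seqKernel n 3 (p t) u = 0 :=
          K_zero n (p t) u (by omega) (by omega) (by omega)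
        rw [Set.inter_comm, show ({ω | X (t+1) ω = u} : Set Ω) ∩ cylE X t p
            = {ω | X (t+1) ω = u} ∩ {ω | ∀ i ≤ t, X i ω = p i} from rfl, hM t p u, hKz]
        simp
    refine measure_mono_null ?_ (measure_union_null ih hB)
    rintro ω ⟨h1, h2⟩
    simp only [Set.mem_setOf_eq] at h1 h2
    by_cases hE : ∀ i ≤ t, X i ω ∈ Finset.Icc 1 (n-1)
    · right
      refine ⟨hE, ?_⟩
      have hnotall : ¬ (X (t+1) ω ∈ Finset.Icc 1 (n-1)) := by
        intro hc
        apply h2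
        intro i hi
        by_cases hh : i = t+1
        · rwa [hh]
        · exact hE i (by omega)
      have hnot := h1 (t+1) le_rfl
      simp only [Finset.mem_Icc] at hnotall
      omega
    · left
      exact ⟨fun i hi => h1 i (by omega), hE⟩

/-! ### Tail arithmetic -/

lemma tail_arith (n : ℕ) (hn : 6250 ≤ n) :
    (1 - 1/(10*(n:ℝ)))^(Nat.floor (100*(n:ℝ)*Real.log n)) * (n:ℝ)^2 ≤ ((n:ℝ))⁻¹ := by
  set N : ℝ := (n:ℝ) with hNdef
  have hN : (6250:ℝ) ≤ N := by
    rw [hNdef]; exact_mod_cast Nat.cast_le.2 hn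
  have hNpos : (0:ℝ) < N := by linarith
  have hlog1 : 1 ≤ Real.log N := by
    rw [Real.le_log_iff_exp_le hNpos]
    have := Real.exp_one_lt_d9
    linarith
  set t₀ : ℕ := Nat.floor (100*N*Real.log N) with ht₀
  have hfl : 100*N*Real.log N < (t₀:ℝ) + 1 := Nat.lt_floor_add_one _
  have hδ0 : (0:ℝ) ≤ 1 - 1/(10*N) := by
    have : 1/(10*N) ≤ 1 := by
      rw [div_le_one (by linarith)]
      linarith
    linarith
  have step1 : (1 - 1/(10*N))^t₀ ≤ Real.exp (-(1/(10*N)))^t₀ := by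
    apply pow_le_pow_left₀ hδ0
    linarith [Real.add_one_le_exp (-(1/(10*N)))]
  have step2 : Real.exp (-(1/(10*N)))^t₀ = Real.exp (-((t₀:ℝ)*(1/(10*N)))) := by
    rw [← Real.exp_nat_mul]
    congr 1
    ring
  have step3 : N^3 ≤ Real.exp ((t₀:ℝ)*(1/(10*N))) := by
    have hlow : 10*Real.log N - 1/(10*N) ≤ (t₀:ℝ)*(1/(10*N)) := by
      have h1 : 100*N*Real.log N - 1 ≤ (t₀:ℝ) := by linarith
      have h2 : (100*N*Real.log N - 1)*(1/(10*N)) ≤ (t₀:ℝ)*(1/(10*N)) :=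
        mul_le_mul_of_nonneg_right h1 (by positivity)
      have h3 : (100*N*Real.log N - 1)*(1/(10*N)) = 10*Real.log N - 1/(10*N) := by
        field_simp
        ring
      linarith
    have h4 : 3*Real.log N ≤ (t₀:ℝ)*(1/(10*N)) := by
      have : 1/(10*N) ≤ 1 := by
        rw [div_le_one (by linarith)]; linarith
      linarith
    calc N^3 = Real.exp (Real.log (N^3)) := (Real.exp_log (by positivity)).symm
      _ = Real.exp (3*Real.log N) := by rw [Real.log_pow]; norm_num
      _ ≤ _ := Real.exp_le_exp.2 h4
  calc (1 - 1/(10*N))^t₀ * N^2 ≤ Real.exp (-((t₀:ℝ)*(1/(10*N)))) * N^2 := by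
        rw [← step2]
        apply mul_le_mul_of_nonneg_right step1 (by positivity)
    _ ≤ (N^3)⁻¹ * N^2 := by
        apply mul_le_mul_of_nonneg_right _ (by positivity)
        rw [Real.exp_neg]
        exact inv_anti₀ (by positivity) step3
    _ = N⁻¹ := by
        field_simp

theorem stmt3 :
    ∃ C : ℝ, 0 < C ∧ ∃ c : ℝ, 0 < c ∧ ∀ᶠ n : ℕ in Filter.atTop, ∀ x ≤ n,
      ∀ (Ω : Type) [MeasurableSpace Ω], ∀ (μ : Measure Ω) (X : ℕ → Ω → ℕ),
        IsMarkovChain μ (seqKernel n 3) x X →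
        ENNReal.ofReal (1 - (n : ℝ) ^ (-c)) ≤
          μ {ω | (hitTime n X ω : ℝ≥0∞) ≤ ENNReal.ofReal (C * n * Real.log n)} := by
  refine ⟨100, by norm_num, 1, by norm_num, ?_⟩
  rw [Filter.eventually_atTop]
  refine ⟨6250, ?_⟩
  intro n hn x hx Ω _ μ X hX
  haveI := hX.1
  have hmeas := hX.2.1
  have h0 := hX.2.2.1
  have hn1 : 1 ≤ n := by omega
  have hN : (6250:ℝ) ≤ (n:ℝ) := by exact_mod_cast Nat.cast_le.2 hn
  have hNpos : (0:ℝ) < (n:ℝ) := by linarith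
  have hlogpos : 0 ≤ Real.log n := Real.log_nonneg (by exact_mod_cast hn1)
  have hrpow : (n:ℝ) ^ (-(1:ℝ)) = ((n:ℝ))⁻¹ := by
    rw [Real.rpow_neg_one]
  set t₀ : ℕ := Nat.floor (100*(n:ℝ)*Real.log n) with ht₀
  have htarget : ∀ ω, (∃ i, i ≤ t₀ ∧ (X i ω = 0 ∨ X i ω = n)) →
      ((hitTime n X ω : ℝ≥0∞) ≤ ENNReal.ofReal ((100:ℝ) * n * Real.log n)) := by
    rintro ω ⟨i, hi, hior⟩
    have h1 : hitTime n X ω ≤ (i : ℕ∞) := by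
      apply iInf_le_of_le i
      exact iInf_le_of_le hior le_rfl
    calc (hitTime n X ω : ℝ≥0∞) ≤ ((i : ℕ∞) : ℝ≥0∞) := by
          exact_mod_cast ENat.toENNReal_le.2 h1
      _ = (i : ℝ≥0∞) := by simp
      _ ≤ ENNReal.ofReal ((100:ℝ)*n*Real.log n) := by
          rw [← ENNReal.ofReal_natCast i]
          apply ENNReal.ofReal_le_ofReal
          calc (i:ℝ) ≤ (t₀:ℝ) := by exact_mod_cast hi
            _ ≤ _ := Nat.floor_le (by positivity)
  by_cases hxb : x = 0 ∨ x = n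
  · have hsub : {ω | X 0 ω = x} ⊆
        {ω | (hitTime n X ω : ℝ≥0∞) ≤ ENNReal.ofReal ((100:ℝ) * n * Real.log n)} := by
      intro ω hω
      simp only [Set.mem_setOf_eq] at hω ⊢
      apply htarget ω
      refine ⟨0, Nat.zero_le _, ?_⟩
      rcases hxb with h | h
      · left; rw [hω, h]
      · right; rw [hω, h]
    calc ENNReal.ofReal (1 - (n:ℝ) ^ (-(1:ℝ))) ≤ 1 := by
          apply ENNReal.ofReal_le_one.2
          rw [hrpow]
          have : 0 ≤ ((n:ℝ))⁻¹ := by positivity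
          linarith
      _ = μ {ω | X 0 ω = x} := h0.symm
      _ ≤ _ := measure_mono hsub
  · have hx1 : 1 ≤ x := by omega
    have hx2 : x ≤ n - 1 := by omega
    have hδ0 : (0:ℝ) ≤ 1 - 1/(10*(n:ℝ)) := by
      have : 1/(10*(n:ℝ)) ≤ 1 := by
        rw [div_le_one (by linarith)]
        linarith
      linarith
    have hμE : μ {ω | ∀ i ≤ t₀, X i ω ∈ Finset.Icc 1 (n-1)} ≤ ENNReal.ofReal (((n:ℝ))⁻¹) := by
      calc μ {ω | ∀ i ≤ t₀, X i ω ∈ Finset.Icc 1 (n-1)}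
          ≤ ∑ p ∈ PF n t₀, μ (cylE X t₀ p) := E_bound μ X n t₀
        _ = ∑ p ∈ PF n t₀, ENNReal.ofReal (wgt n x t₀ p) := by
            apply Finset.sum_congr rfl
            intro p hp
            apply cyl_measure μ X n x hX t₀ p
            intro i hi
            exact K_nonneg n (p i) (p (i+1))
              (by have := PF_interior n t₀ p hp i (by omega); omega)
        _ = ENNReal.ofReal (∑ p ∈ PF n t₀, wgt n x t₀ p) :=
            (ENNReal.ofReal_sum_of_nonneg (fun p hp => wgt_nonneg n x t₀ p hp)).symm
        _ ≤ ENNReal.ofReal (((n:ℝ))⁻¹) := by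
            apply ENNReal.ofReal_le_ofReal
            calc ∑ p ∈ PF n t₀, wgt n x t₀ p
                ≤ ∑ p ∈ PF n t₀, wgt n x t₀ p * phi n (p t₀) := wgt_le_TS n x t₀ hn
              _ ≤ (1 - 1/(10*(n:ℝ)))^t₀ * phi n x := TS_bound n x hn hx1 hx2 t₀
              _ ≤ (1 - 1/(10*(n:ℝ)))^t₀ * (n:ℝ)^2 := by
                  apply mul_le_mul_of_nonneg_left (phi_le_sq n x hn hx) (pow_nonneg hδ0 t₀)
              _ ≤ ((n:ℝ))⁻¹ := tail_arith n hn
    have hNoHitMeas : MeasurableSet {ω | ∀ i ≤ t₀, ¬(X i ω = 0 ∨ X i ω = n)} := by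
      have hset : {ω | ∀ i ≤ t₀, ¬(X i ω = 0 ∨ X i ω = n)}
          = ⋂ (i : ℕ), ⋂ (_ : i ≤ t₀), ((X i ⁻¹' {0}) ∪ (X i ⁻¹' {n}))ᶜ := by
        ext ω
        simp [Set.mem_iInter]
      rw [hset]
      exact MeasurableSet.iInter fun i => MeasurableSet.iInter fun _ =>
        (((hmeas i) (measurableSet_singleton 0)).union ((hmeas i) (measurableSet_singleton n))).compl
    have hμNoHit : μ {ω | ∀ i ≤ t₀, ¬(X i ω = 0 ∨ X i ω = n)} ≤ ENNReal.ofReal (((n:ℝ))⁻¹) := by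
      have hsplit : {ω | ∀ i ≤ t₀, ¬(X i ω = 0 ∨ X i ω = n)}
          ⊆ {ω | ∀ i ≤ t₀, X i ω ∈ Finset.Icc 1 (n-1)}
            ∪ ({ω | ∀ i ≤ t₀, ¬(X i ω = 0 ∨ X i ω = n)} \ {ω | ∀ i ≤ t₀, X i ω ∈ Finset.Icc 1 (n-1)}) := by
        intro ω hω
        by_cases h : ω ∈ {ω | ∀ i ≤ t₀, X i ω ∈ Finset.Icc 1 (n-1)}
        · exact Or.inl h
        · exact Or.inr ⟨hω, h⟩
      calc μ {ω | ∀ i ≤ t₀, ¬(X i ω = 0 ∨ X i ω = n)}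
          ≤ μ ({ω | ∀ i ≤ t₀, X i ω ∈ Finset.Icc 1 (n-1)}
            ∪ ({ω | ∀ i ≤ t₀, ¬(X i ω = 0 ∨ X i ω = n)} \ {ω | ∀ i ≤ t₀, X i ω ∈ Finset.Icc 1 (n-1)})) :=
            measure_mono hsplit
        _ ≤ μ {ω | ∀ i ≤ t₀, X i ω ∈ Finset.Icc 1 (n-1)}
            + μ ({ω | ∀ i ≤ t₀, ¬(X i ω = 0 ∨ X i ω = n)} \ {ω | ∀ i ≤ t₀, X i ω ∈ Finset.Icc 1 (n-1)}) :=
            measure_union_le _ _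
        _ = μ {ω | ∀ i ≤ t₀, X i ω ∈ Finset.Icc 1 (n-1)} := by
            rw [nohit_diff_null μ X n x hX hn1 hx t₀, add_zero]
        _ ≤ _ := hμE
    have hsub2 : {ω | ∀ i ≤ t₀, ¬(X i ω = 0 ∨ X i ω = n)}ᶜ ⊆
        {ω | (hitTime n X ω : ℝ≥0∞) ≤ ENNReal.ofReal ((100:ℝ) * n * Real.log n)} := by
      intro ω hω
      simp only [Set.mem_compl_iff, Set.mem_setOf_eq] at hω
      push_neg at hω
      obtain ⟨i, hi, hior⟩ := hω
      exact htarget ω ⟨i, hi, hior⟩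
    calc ENNReal.ofReal (1 - (n:ℝ) ^ (-(1:ℝ)))
        = ENNReal.ofReal (1 - ((n:ℝ))⁻¹) := by rw [hrpow]
      _ = 1 - ENNReal.ofReal (((n:ℝ))⁻¹) := by
          rw [ENNReal.ofReal_sub _ (by positivity), ENNReal.ofReal_one]
      _ ≤ 1 - μ {ω | ∀ i ≤ t₀, ¬(X i ω = 0 ∨ X i ω = n)} := tsub_le_tsub_left hμNoHit 1
      _ = μ ({ω | ∀ i ≤ t₀, ¬(X i ω = 0 ∨ X i ω = n)}ᶜ) :=
          (MeasureTheory.prob_compl_eq_one_sub hNoHitMeas).symm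
      _ ≤ _ := measure_mono hsub2
end
end

section
/- There exist constants ζ, c > 0 such that for all sufficiently large n the following holds: if the sequential 3-Majority process is started at a state x ≥ n/2 + ζ·√(n·log n), then with probability at least 1 − n^{−c} the process reaches the all-a state n before ever reaching the all-b state 0, i.e., the initial majority opinion wins. -/
open MeasureTheory Finset
open scoped ENNReal NNReal

noncomputable section

set_option linter.unusedSectionVars false

namespace S4
lemma majProb3 (n s : ℕ) : majProb n 3 s = 3*((s:ℝ)/n)^2 - 2*((s:ℝ)/n)^3 := by
  have h : Finset.Icc 2 3 = ({2, 3} : Finset ℕ) := rfl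
  have he : ¬ Even 3 := by decide
  simp [majProb, binomTail, h, binomPMF, he]
  ring

def Uu (n s : ℕ) : ℝ := (((n : ℝ) - s) / n) * majProb n 3 s
def Dd (n s : ℕ) : ℝ := ((s : ℝ) / n) * (1 - majProb n 3 s)

lemma kernel_eq_up (n s : ℕ) : seqKernel n 3 s (s+1) = Uu n s := by simp [seqKernel, Uu]

lemma kernel_eq_down (n s : ℕ) (hs : 1 ≤ s) : seqKernel n 3 s (s-1) = Dd n s := by
  have h1 : ¬ (s - 1 = s + 1) := by omega
  have h2 : s - 1 + 1 = s := by omega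
  simp [seqKernel, h1, h2, Dd]

lemma kernel_eq_stay (n s : ℕ) : seqKernel n 3 s s = 1 - Uu n s - Dd n s := by
  simp [seqKernel, Uu, Dd]

lemma kernel_eq_zero (n s u : ℕ) (h1 : u ≠ s + 1) (h2 : u + 1 ≠ s) (h3 : u ≠ s) :
    seqKernel n 3 s u = 0 := by
  simp [seqKernel, h1, h2, h3]

section basic
variable {n s : ℕ} (hn : 0 < n) (hs : s ≤ n)
include hn hs

lemma p_nonneg : 0 ≤ (s:ℝ)/n := by positivity

lemma p_le_one : (s:ℝ)/n ≤ 1 := by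
  rw [div_le_one (by exact_mod_cast hn)]; exact_mod_cast hs

lemma Uu_eq : Uu n s = (1 - (s:ℝ)/n) * (3*((s:ℝ)/n)^2 - 2*((s:ℝ)/n)^3) := by
  have hn' : (n:ℝ) ≠ 0 := by positivity
  rw [Uu, majProb3]
  field_simp

lemma q_nonneg : 0 ≤ majProb n 3 s := by
  rw [majProb3]
  have h0 := p_nonneg hn hs; have h1 := p_le_one hn hs
  nlinarith [sq_nonneg ((s:ℝ)/n)]

lemma q_le_one : majProb n 3 s ≤ 1 := by
  rw [majProb3]
  have h0 := p_nonneg hn hs; have h1 := p_le_one hn hs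
  nlinarith [sq_nonneg (1 - (s:ℝ)/n)]

lemma Uu_nonneg : 0 ≤ Uu n s := by
  have : (0:ℝ) ≤ ((n:ℝ) - s)/n := by
    apply div_nonneg _ (by positivity)
    have : (s:ℝ) ≤ n := by exact_mod_cast hs
    linarith
  exact mul_nonneg this (q_nonneg hn hs)

lemma Dd_nonneg : 0 ≤ Dd n s := by
  have h1 := q_le_one hn hs
  exact mul_nonneg (p_nonneg hn hs) (by linarith)

lemma UD_le_one : Uu n s + Dd n s ≤ 1 := by
  have hq0 := q_nonneg hn hs; have hq1 := q_le_one hn hs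
  have hp0 := p_nonneg hn hs; have hp1 := p_le_one hn hs
  have hn' : (n:ℝ) ≠ 0 := by positivity
  have hU : Uu n s ≤ 1 - (s:ℝ)/n := by
    rw [Uu]
    have he : ((n:ℝ) - s)/n = 1 - (s:ℝ)/n := by field_simp
    rw [he]
    nlinarith
  have hD : Dd n s ≤ (s:ℝ)/n := by rw [Dd]; nlinarith
  linarith

lemma seqKernel_nonneg (u : ℕ) : 0 ≤ seqKernel n 3 s u := by
  rw [seqKernel]
  have hU := Uu_nonneg hn hs
  have hD := Dd_nonneg hn hs
  have hUD := UD_le_one hn hs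
  rw [Uu, Dd] at *
  split_ifs <;> linarith

end basic

-- row sum computation
lemma rowsum_interior {n s : ℕ} (hs1 : 1 ≤ s) (hs2 : s + 1 ≤ n) (f : ℕ → ℝ) :
    ∑ u ∈ range (n+1), seqKernel n 3 s u * f u
      = Uu n s * f (s+1) + Dd n s * f (s-1) + (1 - Uu n s - Dd n s) * f s := by
  have hsub : ({s-1, s, s+1} : Finset ℕ) ⊆ range (n+1) := by
    intro u hu; simp at hu; simp; omega
  rw [← Finset.sum_subset hsub]
  · have h1 : (s-1) ∉ ({s, s+1} : Finset ℕ) := by simp; omega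
    have h2 : s ∉ ({s+1} : Finset ℕ) := by simp
    rw [Finset.sum_insert h1, Finset.sum_insert h2, Finset.sum_singleton,
      kernel_eq_down n s hs1, kernel_eq_stay, kernel_eq_up]
    ring
  · intro u _ hu
    simp at hu
    rw [kernel_eq_zero n s u (by omega) (by omega) (by omega), zero_mul]

lemma majProb3_zero {n : ℕ} : majProb n 3 0 = 0 := by
  rw [majProb3]; norm_num

lemma majProb3_n {n : ℕ} (hn : 0 < n) : majProb n 3 n = 1 := by
  have hn' : (n:ℝ) ≠ 0 := by positivity
  rw [majProb3]; field_simp; norm_num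

lemma rowsum_zero {n : ℕ} (hn : 0 < n) (f : ℕ → ℝ) :
    ∑ u ∈ range (n+1), seqKernel n 3 0 u * f u = f 0 := by
  have hz : ∀ u ∈ range (n+1), u ≠ 0 → seqKernel n 3 0 u * f u = 0 := by
    intro u _ hu
    rcases eq_or_ne u 1 with h | h
    · subst h
      have : seqKernel n 3 0 1 = Uu n 0 := kernel_eq_up n 0
      rw [this, Uu, majProb3_zero]; ring
    · rw [kernel_eq_zero n 0 u (by omega) (by omega) (by omega), zero_mul]
  rw [Finset.sum_eq_single_of_mem 0 (by simp) hz, kernel_eq_stay, Uu, Dd, majProb3_zero]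
  push_cast; ring

lemma rowsum_n {n : ℕ} (hn : 0 < n) (f : ℕ → ℝ) :
    ∑ u ∈ range (n+1), seqKernel n 3 n u * f u = f n := by
  have hz : ∀ u ∈ range (n+1), u ≠ n → seqKernel n 3 n u * f u = 0 := by
    intro u hu hun
    simp at hu
    rcases eq_or_ne (u+1) n with h | h
    · have : u = n - 1 := by omega
      subst this
      rw [kernel_eq_down n n (by omega), Dd, majProb3_n hn]; ring
    · rw [kernel_eq_zero n n u (by omega) h hun, zero_mul]
  rw [Finset.sum_eq_single_of_mem n (by simp) hz, kernel_eq_stay, Uu, Dd, majProb3_n hn]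
  ring


-- potential functions
def rr (n i : ℕ) : ℝ :=
  ((1 - (i:ℝ)/n) * (1 + 2*((i:ℝ)/n))) / (((i:ℝ)/n) * (3 - 2*((i:ℝ)/n)))

def pp (n j : ℕ) : ℝ := ∏ i ∈ Finset.Ioc 0 j, rr n i

def gg (n s : ℕ) : ℝ := ∑ j ∈ Finset.Ico s n, pp n j

def hh (n s : ℕ) : ℝ := (s:ℝ) * ((n:ℝ) - s)

lemma pp_zero (n : ℕ) : pp n 0 = 1 := by simp [pp]

lemma pp_succ (n j : ℕ) : pp n (j+1) = pp n j * rr n (j+1) := by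
  rw [pp, pp, Finset.prod_Ioc_succ_top (Nat.zero_le _)]

lemma rr_nonneg {n i : ℕ} (h1 : 1 ≤ i) (h2 : i ≤ n) : 0 ≤ rr n i := by
  have hn : 0 < n := lt_of_lt_of_le h1 h2
  have hp0 : 0 < (i:ℝ)/n := by positivity
  have hp1 : (i:ℝ)/n ≤ 1 := p_le_one hn h2
  apply div_nonneg
  · nlinarith
  · nlinarith

lemma rr_le {n i : ℕ} (h1 : 1 ≤ i) (h2 : i ≤ n) (h3 : (n:ℝ)/2 ≤ i) :
    rr n i ≤ 1 - ((i:ℝ)/n - 1/2) := by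
  have hn : 0 < n := lt_of_lt_of_le h1 h2
  have hp0 : 0 < (i:ℝ)/n := by positivity
  have hp1 : (i:ℝ)/n ≤ 1 := p_le_one hn h2
  have hph : 1/2 ≤ (i:ℝ)/n := by
    rw [le_div_iff₀ (by exact_mod_cast hn)]; linarith
  rw [rr, div_le_iff₀ (by nlinarith)]
  set p := (i:ℝ)/n
  nlinarith [sq_nonneg (p - 1/2), sq_nonneg p]

lemma harmonic {n s : ℕ} (hs1 : 1 ≤ s) (hs2 : s + 1 ≤ n) :
    Uu n s * rr n s = Dd n s := by
  have hn : 0 < n := by omega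
  have hn' : (n:ℝ) ≠ 0 := by positivity
  have hp0 : 0 < (s:ℝ)/n := by positivity
  have hp1 : (s:ℝ)/n ≤ 1 := p_le_one hn (by omega)
  have h32 : (s:ℝ)/n * (3 - 2*((s:ℝ)/n)) ≠ 0 := by nlinarith
  rw [Uu_eq hn (by omega), Dd, majProb3, rr, mul_div_assoc', div_eq_iff h32]
  ring

lemma pp_nonneg {n : ℕ} (j : ℕ) (hj : j ≤ n) : 0 ≤ pp n j := by
  apply Finset.prod_nonneg
  intro i hi
  simp at hi
  exact rr_nonneg hi.1 (le_trans hi.2 hj)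

lemma gg_nonneg {n : ℕ} (s : ℕ) : 0 ≤ gg n s := by
  apply Finset.sum_nonneg
  intro j hj
  simp at hj
  exact pp_nonneg j (by omega)

lemma gg_step {n s : ℕ} (h : s < n) : gg n s = pp n s + gg n (s+1) := by
  rw [gg, gg, Finset.sum_eq_sum_Ico_succ_bot h]

lemma gg_n {n : ℕ} : gg n n = 0 := by simp [gg]

-- superharmonicity of gg
lemma gg_super {n : ℕ} (hn : 0 < n) (s : ℕ) (hs : s ≤ n) :
    ∑ u ∈ range (n+1), seqKernel n 3 s u * gg n u ≤ gg n s := by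
  rcases Nat.eq_or_lt_of_le hs with h | hlt
  · subst h; rw [rowsum_n hn]
  rcases Nat.eq_zero_or_pos s with h0 | hpos
  · subst h0; rw [rowsum_zero hn]
  have hs2 : s + 1 ≤ n := hlt
  rw [rowsum_interior hpos hs2]
  have e1 : gg n s = pp n s + gg n (s+1) := gg_step hlt
  have e2 : gg n (s-1) = pp n (s-1) + gg n s := by
    have : s - 1 < n := by omega
    have h := gg_step this
    have hss : s - 1 + 1 = s := by omega
    rw [hss] at h; exact h
  have e3 : pp n s = pp n (s-1) * rr n s := by
    have h := pp_succ n (s-1)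
    have hss : s - 1 + 1 = s := by omega
    rw [hss] at h; exact h
  have e4 : Uu n s * rr n s = Dd n s := harmonic hpos hs2
  have heq : Uu n s * gg n (s+1) + Dd n s * gg n (s-1) + (1 - Uu n s - Dd n s) * gg n s
      = gg n s + (Dd n s * pp n (s-1) - Uu n s * pp n s) := by
    rw [e2]; linear_combination (-(Uu n s)) * e1
  have e5 : Dd n s * pp n (s-1) - Uu n s * (pp n (s-1) * rr n s) = 0 := by
    linear_combination (pp n (s-1)) * e4.symm
  rw [heq, e3]
  linarith [e5]

-- superharmonicity of hh with deficit
set_option maxHeartbeats 1000000 in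
lemma hh_super {n : ℕ} (hn : 0 < n) (s : ℕ) (hs : s ≤ n) :
    (∑ u ∈ range (n+1), seqKernel n 3 s u * hh n u)
      + (if 1 ≤ s ∧ s + 1 ≤ n then 1/(n:ℝ)^3 else 0) ≤ hh n s := by
  rcases Nat.eq_or_lt_of_le hs with h | hlt
  · subst h
    rw [rowsum_n hn, if_neg (by omega)]
    simp
  rcases Nat.eq_zero_or_pos s with h0 | hpos
  · subst h0
    rw [rowsum_zero hn]
    have : ¬ (1 ≤ 0 ∧ 0 + 1 ≤ n) := by omega
    rw [if_neg this]; simp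
  have hs2 : s + 1 ≤ n := hlt
  rw [rowsum_interior hpos hs2, if_pos ⟨hpos, hs2⟩]
  have hn' : (n:ℝ) ≠ 0 := by positivity
  have hnR : (1:ℝ) ≤ n := by exact_mod_cast hn
  have hsR1 : (1:ℝ) ≤ (s:ℝ) := by exact_mod_cast hpos
  have hsR2 : (s:ℝ) + 1 ≤ n := by exact_mod_cast hs2
  obtain ⟨p, hps, hp0, hp1⟩ :
      ∃ p : ℝ, (s:ℝ) = p * n ∧ 1/(n:ℝ) ≤ p ∧ p ≤ 1 - 1/(n:ℝ) := by
    refine ⟨(s:ℝ)/n, by field_simp, ?_, ?_⟩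
    · rw [div_le_div_iff₀ (by linarith) (by linarith)]
      nlinarith
    · rw [div_le_iff₀ (by linarith)]
      have h1 : (1 - 1/(n:ℝ)) * n = n - 1 := by field_simp
      rw [h1]; linarith
  have hfr2 : (s:ℝ)/n = p := by rw [hps, mul_div_cancel_right₀ _ hn']
  have hq : majProb n 3 s = 3*p^2 - 2*p^3 := by rw [majProb3, hfr2]
  have hfr : ((n:ℝ) - s)/n = 1 - p := by
    rw [hps, sub_div, mul_div_cancel_right₀ _ hn', div_self hn']
  have hU : Uu n s = (1 - p) * (3*p^2 - 2*p^3) := by rw [Uu, hq, hfr]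
  have hD : Dd n s = p * (1 - (3*p^2 - 2*p^3)) := by rw [Dd, hq, hfr2]
  have hhs : hh n s = p*(n:ℝ)*((n:ℝ) - p*n) := by simp only [hh]; rw [hps]
  have hhs1 : hh n (s+1) = (p*(n:ℝ)+1)*((n:ℝ) - p*n - 1) := by
    simp only [hh]; push_cast; rw [hps]; ring
  have hhs0 : hh n (s-1) = (p*(n:ℝ)-1)*((n:ℝ) - p*n + 1) := by
    simp only [hh]
    have hc : ((s-1:ℕ):ℝ) = (s:ℝ) - 1 := by
      have h1 : 1 ≤ s := hpos
      push_cast [h1]; ring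
    rw [hc, hps]; ring
  rw [hU, hD, hhs, hhs1, hhs0]
  have hpn0 : 0 < p := lt_of_lt_of_le (by positivity) hp0
  have hpn1 : p < 1 := by
    have h2 : (0:ℝ) < 1/(n:ℝ) := by positivity
    linarith
  have key2 : 1/(n:ℝ)^3 ≤ p * (1 - (3*p^2 - 2*p^3)) := by
    have e : p * (1 - (3*p^2 - 2*p^3)) = p * ((1-p)*(1-p)) * (1+2*p) := by ring
    rw [e]
    have h2 : (1/(n:ℝ)) * (1/n) ≤ (1-p) * (1-p) := by
      apply mul_le_mul (by linarith) (by linarith) (by positivity) (by linarith)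
    have h3 : (1/(n:ℝ)) * ((1/n) * (1/n)) ≤ p * ((1-p)*(1-p)) := by
      apply mul_le_mul hp0 h2 (by positivity) (by linarith)
    have h4 : p * ((1-p)*(1-p)) * 1 ≤ p * ((1-p)*(1-p)) * (1+2*p) := by
      apply mul_le_mul_of_nonneg_left (by linarith)
      have : (0:ℝ) ≤ (1-p)*(1-p) := by nlinarith
      nlinarith
    have h5 : 1/(n:ℝ)^3 = (1/n) * ((1/n) * (1/n)) := by ring
    rw [h5]; linarith
  have key3 : (0:ℝ) ≤ (1 - p) * (3*p^2 - 2*p^3) := by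
    have h7 : (0:ℝ) ≤ (1-p) * (p^2) * (3-2*p) :=
      mul_nonneg (mul_nonneg (by linarith) (sq_nonneg p)) (by linarith)
    nlinarith [h7]
  have key4 : ((1 - p) * (3*p^2 - 2*p^3) - p * (1 - (3*p^2 - 2*p^3)))
      * ((n:ℝ) - 2*(p*(n:ℝ))) ≤ 0 := by
    have e : ((1 - p) * (3*p^2 - 2*p^3) - p * (1 - (3*p^2 - 2*p^3)))
        * ((n:ℝ) - 2*(p*(n:ℝ))) = -((n:ℝ)*(p*(1-p)*(2*p-1)^2)) := by ring
    rw [e]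
    have h6 : (0:ℝ) ≤ (n:ℝ)*(p*(1-p)*(2*p-1)^2) := by
      apply mul_nonneg (by positivity)
      apply mul_nonneg (mul_nonneg hpn0.le (by linarith)) (sq_nonneg _)
    linarith
  linarith [key2, key3, key4]



end S4

namespace S4
section MC
variable {Ω : Type} [MeasurableSpace Ω] {μ : Measure Ω} {K : ℕ → ℕ → ℝ} {x : ℕ}
  {X : ℕ → Ω → ℕ}

def Ecyl (X : ℕ → Ω → ℕ) (t : ℕ) (q : Fin (t+1) → ℕ) : Set Ω :=
  {ω | ∀ i : Fin (t+1), X i ω = q i}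

lemma Ecyl_meas (hX : ∀ t, Measurable (X t)) (t : ℕ) (q : Fin (t+1) → ℕ) :
    MeasurableSet (Ecyl X t q) := by
  have h : Ecyl X t q = ⋂ i : Fin (t+1), (X i) ⁻¹' {q i} := by
    ext ω; simp [Ecyl, Set.mem_iInter]
  rw [h]
  exact MeasurableSet.iInter fun i => (hX i) (measurableSet_singleton _)

lemma partitionE (hX : ∀ t, Measurable (X t)) (t : ℕ) (S : Set Ω) (hS : MeasurableSet S) :
    μ S = ∑' q : Fin (t+1) → ℕ, μ (S ∩ Ecyl X t q) := by
  have hcover : (⋃ q : Fin (t+1) → ℕ, S ∩ Ecyl X t q) = S := by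
    ext ω
    simp only [Set.mem_iUnion, Set.mem_inter_iff]
    constructor
    · rintro ⟨q, h, _⟩; exact h
    · intro h; exact ⟨fun i => X i ω, h, fun i => rfl⟩
  have hdisj : Pairwise (Function.onFun Disjoint
      (fun q : Fin (t+1) → ℕ => S ∩ Ecyl X t q)) := by
    intro q q' hqq
    simp only [Function.onFun]
    apply Set.disjoint_left.mpr
    rintro ω ⟨_, h1⟩ ⟨_, h2⟩
    exact hqq (funext fun i => by rw [← h1 i, ← h2 i])
  conv_lhs => rw [← hcover]
  rw [measure_iUnion hdisj (fun q => hS.inter (Ecyl_meas hX t q))]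

lemma partitionX (hX : ∀ t, Measurable (X t)) (t : ℕ) (S : Set Ω) (hS : MeasurableSet S) :
    μ S = ∑' s : ℕ, μ (S ∩ {ω | X t ω = s}) := by
  have hcover : (⋃ s : ℕ, S ∩ {ω | X t ω = s}) = S := by
    ext ω
    simp only [Set.mem_iUnion, Set.mem_inter_iff]
    constructor
    · rintro ⟨s, h, _⟩; exact h
    · intro h; exact ⟨X t ω, h, rfl⟩
  have hdisj : Pairwise (Function.onFun Disjoint
      (fun s : ℕ => S ∩ {ω | X t ω = s})) := by
    intro s s' hss
    simp only [Function.onFun]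
    apply Set.disjoint_left.mpr
    rintro ω ⟨_, h1⟩ ⟨_, h2⟩
    exact hss (by rw [← h1, ← h2])
  conv_lhs => rw [← hcover]
  rw [measure_iUnion hdisj (fun s => hS.inter ((hX t) (measurableSet_singleton s)))]

lemma step_inter (hmc : IsMarkovChain μ K x X) (t s u : ℕ) :
    μ ({ω | X (t+1) ω = u} ∩ {ω | X t ω = s})
      = ENNReal.ofReal (K s u) * μ {ω | X t ω = s} := by
  obtain ⟨hprob, hX, h0, hstep⟩ := hmc
  have key : ∀ q : Fin (t+1) → ℕ,
      μ (({ω | X (t+1) ω = u} ∩ {ω | X t ω = s}) ∩ Ecyl X t q)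
        = ENNReal.ofReal (K s u) * μ ({ω | X t ω = s} ∩ Ecyl X t q) := by
    intro q
    by_cases hq : q (Fin.last t) = s
    · have hsub : Ecyl X t q ⊆ {ω | X t ω = s} := by
        intro ω hω
        have h1 := hω (Fin.last t)
        simp only [Fin.val_last] at h1
        rw [Set.mem_setOf_eq, h1, hq]
      have e1 : ({ω | X (t+1) ω = u} ∩ {ω | X t ω = s}) ∩ Ecyl X t q
          = {ω | X (t+1) ω = u} ∩ Ecyl X t q := by
        ext ω
        constructor
        · rintro ⟨⟨ha, _⟩, hc⟩; exact ⟨ha, hc⟩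
        · rintro ⟨ha, hc⟩; exact ⟨⟨ha, hsub hc⟩, hc⟩
      have e2 : {ω | X t ω = s} ∩ Ecyl X t q = Ecyl X t q :=
        Set.inter_eq_self_of_subset_right hsub
      set p : ℕ → ℕ := fun i => if h : i < t + 1 then q ⟨i, h⟩ else 0 with hp
      have e3 : {ω | ∀ i ≤ t, X i ω = p i} = Ecyl X t q := by
        ext ω
        simp only [Set.mem_setOf_eq, Ecyl]
        constructor
        · intro h i
          have h2 := h i.1 (Nat.lt_succ_iff.mp i.isLt)
          rw [hp] at h2
          simp only [i.isLt, dif_pos, Fin.eta] at h2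
          exact h2
        · intro h i hi
          have hi' : i < t + 1 := Nat.lt_succ_iff.mpr hi
          have h2 := h ⟨i, hi'⟩
          rw [hp]
          simp only [hi', dif_pos]
          exact h2
      have e4 : p t = s := by
        rw [hp]
        simp only [Nat.lt_succ_self, dif_pos]
        exact hq
      have hst := hstep t p u
      rw [e3, e4] at hst
      rw [e1, e2, hst]
    · have hdis : {ω | X t ω = s} ∩ Ecyl X t q = ∅ := by
        ext ω
        simp only [Set.mem_inter_iff, Set.mem_empty_iff_false, iff_false, not_and]
        intro h1 h2
        apply hq
        have h3 := h2 (Fin.last t)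
        simp only [Fin.val_last] at h3
        rw [← h3]
        exact h1
      have hdis2 : ({ω | X (t+1) ω = u} ∩ {ω | X t ω = s}) ∩ Ecyl X t q = ∅ := by
        rw [Set.inter_assoc, hdis, Set.inter_empty]
      rw [hdis, hdis2]
      simp
  have hmeasS : MeasurableSet ({ω | X (t+1) ω = u} ∩ {ω | X t ω = s}) :=
    ((hX (t+1)) (measurableSet_singleton u)).inter ((hX t) (measurableSet_singleton s))
  rw [partitionE hX t _ hmeasS,
    partitionE hX t {ω | X t ω = s} ((hX t) (measurableSet_singleton s))]
  rw [ENNReal.tsum_mul_left.symm]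
  exact tsum_congr key

lemma marginal (hmc : IsMarkovChain μ K x X) (t u : ℕ) :
    μ {ω | X (t+1) ω = u} = ∑' s : ℕ, ENNReal.ofReal (K s u) * μ {ω | X t ω = s} := by
  rw [partitionX hmc.2.1 t {ω | X (t+1) ω = u}
    (show MeasurableSet {ω | X (t+1) ω = u} from (hmc.2.1 (t+1)) (measurableSet_singleton u))]
  exact tsum_congr fun s => step_inter hmc t s u

end MC

section Chain
variable {Ω : Type} [MeasurableSpace Ω] {μ : Measure Ω} {x : ℕ} {X : ℕ → Ω → ℕ} {n : ℕ}

lemma kernel_out {n s u : ℕ} (hs : s ≤ n) (hu : n < u) : seqKernel n 3 s u = 0 := by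
  rcases eq_or_ne u (s+1) with h | h
  · have hsn : s = n := by omega
    subst hsn; subst h
    simp [seqKernel]
  · exact kernel_eq_zero n s u h (by omega) (by omega)

lemma nu_zero_ne (hmc : IsMarkovChain μ (seqKernel n 3) x X) {s : ℕ} (hs : s ≠ x) :
    μ {ω | X 0 ω = s} = 0 := by
  haveI := hmc.1
  have h0 := hmc.2.2.1
  have hsub : {ω | X 0 ω = s} ⊆ {ω | X 0 ω = x}ᶜ := by
    intro ω h hx
    exact hs (h ▸ hx ▸ rfl)
  have hcompl : μ ({ω | X 0 ω = x}ᶜ) = 0 := by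
    rw [measure_compl (show MeasurableSet {ω | X 0 ω = x} from
      (hmc.2.1 0) (measurableSet_singleton x)) (measure_ne_top μ _), h0, measure_univ,
      tsub_self]
  exact le_antisymm (le_trans (measure_mono hsub) (le_of_eq hcompl)) zero_le

lemma nusupp (hmc : IsMarkovChain μ (seqKernel n 3) x X) (hxn : x ≤ n) :
    ∀ t s, n < s → μ {ω | X t ω = s} = 0 := by
  intro t
  induction t with
  | zero => intro s hs; exact nu_zero_ne hmc (by omega)
  | succ t ih =>
    intro u hu
    rw [marginal hmc]
    apply ENNReal.tsum_eq_zero.mpr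
    intro s
    rcases le_or_gt s n with h | h
    · rw [kernel_out h hu]; simp
    · rw [ih s h, mul_zero]

lemma nurec (hmc : IsMarkovChain μ (seqKernel n 3) x X) (hxn : x ≤ n) (t u : ℕ) :
    μ {ω | X (t+1) ω = u}
      = ∑ s ∈ range (n+1), ENNReal.ofReal (seqKernel n 3 s u) * μ {ω | X t ω = s} := by
  rw [marginal hmc]
  apply tsum_eq_sum
  intro s hs
  rw [nusupp hmc hxn t s (by simp at hs; omega), mul_zero]

lemma superstep (hmc : IsMarkovChain μ (seqKernel n 3) x X) (hn : 0 < n) (hxn : x ≤ n)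
    (f w : ℕ → ℝ) (hf : ∀ u, u ≤ n → 0 ≤ f u) (hw : ∀ s, s ≤ n → 0 ≤ w s)
    (hsup : ∀ s, s ≤ n →
      (∑ u ∈ range (n+1), seqKernel n 3 s u * f u) + w s ≤ f s) (t : ℕ) :
    (∑ u ∈ range (n+1), ENNReal.ofReal (f u) * μ {ω | X (t+1) ω = u})
      + (∑ s ∈ range (n+1), ENNReal.ofReal (w s) * μ {ω | X t ω = s})
    ≤ ∑ s ∈ range (n+1), ENNReal.ofReal (f s) * μ {ω | X t ω = s} := by
  have step1 : (∑ u ∈ range (n+1), ENNReal.ofReal (f u) * μ {ω | X (t+1) ω = u})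
      = ∑ s ∈ range (n+1),
          ENNReal.ofReal (∑ u ∈ range (n+1), seqKernel n 3 s u * f u)
            * μ {ω | X t ω = s} := by
    calc (∑ u ∈ range (n+1), ENNReal.ofReal (f u) * μ {ω | X (t+1) ω = u})
        = ∑ u ∈ range (n+1), ∑ s ∈ range (n+1),
            ENNReal.ofReal (f u) * (ENNReal.ofReal (seqKernel n 3 s u) * μ {ω | X t ω = s}) := by
          refine Finset.sum_congr rfl fun u _ => ?_
          rw [nurec hmc hxn t u, Finset.mul_sum]
      _ = ∑ s ∈ range (n+1), ∑ u ∈ range (n+1),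
            ENNReal.ofReal (f u) * (ENNReal.ofReal (seqKernel n 3 s u) * μ {ω | X t ω = s}) :=
          Finset.sum_comm
      _ = ∑ s ∈ range (n+1),
            (∑ u ∈ range (n+1), ENNReal.ofReal (seqKernel n 3 s u * f u)) * μ {ω | X t ω = s} := by
          refine Finset.sum_congr rfl fun s hs => ?_
          rw [Finset.sum_mul]
          refine Finset.sum_congr rfl fun u hu => ?_
          rw [ENNReal.ofReal_mul (seqKernel_nonneg hn (by simp at hs; omega) u)]
          ring
      _ = ∑ s ∈ range (n+1),
            ENNReal.ofReal (∑ u ∈ range (n+1), seqKernel n 3 s u * f u) * μ {ω | X t ω = s} := by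
          refine Finset.sum_congr rfl fun s hs => ?_
          rw [ENNReal.ofReal_sum_of_nonneg]
          intro u hu
          exact mul_nonneg (seqKernel_nonneg hn (by simp at hs; omega) u)
            (hf u (by simp at hu; omega))
  rw [step1, ← Finset.sum_add_distrib]
  apply Finset.sum_le_sum
  intro s hs
  have hsn : s ≤ n := by simp at hs; omega
  have hrow : 0 ≤ ∑ u ∈ range (n+1), seqKernel n 3 s u * f u :=
    Finset.sum_nonneg fun u hu => mul_nonneg (seqKernel_nonneg hn hsn u)
      (hf u (by simp at hu; omega))
  rw [← add_mul, ← ENNReal.ofReal_add hrow (hw s hsn)]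
  exact mul_le_mul_left (ENNReal.ofReal_le_ofReal (hsup s hsn)) _

lemma mart_init (hmc : IsMarkovChain μ (seqKernel n 3) x X) (hxn : x ≤ n) (f : ℕ → ℝ) :
    ∑ s ∈ range (n+1), ENNReal.ofReal (f s) * μ {ω | X 0 ω = s}
      = ENNReal.ofReal (f x) := by
  rw [Finset.sum_eq_single_of_mem x (by simp; omega)]
  · rw [hmc.2.2.1, mul_one]
  · intro s _ hsx
    rw [nu_zero_ne hmc hsx, mul_zero]

lemma mart_bound (hmc : IsMarkovChain μ (seqKernel n 3) x X) (hn : 0 < n) (hxn : x ≤ n)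
    (f : ℕ → ℝ) (hf : ∀ u, u ≤ n → 0 ≤ f u)
    (hsup : ∀ s, s ≤ n → (∑ u ∈ range (n+1), seqKernel n 3 s u * f u) ≤ f s) (t : ℕ) :
    ∑ s ∈ range (n+1), ENNReal.ofReal (f s) * μ {ω | X t ω = s}
      ≤ ENNReal.ofReal (f x) := by
  induction t with
  | zero => rw [mart_init hmc hxn f]
  | succ t ih =>
    refine le_trans ?_ ih
    have h := superstep hmc hn hxn f (fun _ => 0) hf (fun _ _ => le_refl 0)
      (fun s hs => by simpa using hsup s hs) t
    simpa using h

end Chain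

section Chain2
variable {Ω : Type} [MeasurableSpace Ω] {μ : Measure Ω} {x : ℕ} {X : ℕ → Ω → ℕ} {n : ℕ}

lemma hit0_bound (hmc : IsMarkovChain μ (seqKernel n 3) x X) (hn : 0 < n) (hxn : x ≤ n)
    (t : ℕ) :
    ENNReal.ofReal (gg n 0) * μ {ω | X t ω = 0} ≤ ENNReal.ofReal (gg n x) := by
  have h := mart_bound hmc hn hxn (gg n) (fun u _ => gg_nonneg u) (gg_super hn) t
  refine le_trans ?_ h
  exact Finset.single_le_sum (f := fun s => ENNReal.ofReal (gg n s) * μ {ω | X t ω = s})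
    (fun s _ => zero_le) (Finset.mem_range.mpr (Nat.succ_pos n))

/-- the deficit weight -/
def ww (n : ℕ) (s : ℕ) : ℝ := if 1 ≤ s ∧ s + 1 ≤ n then 1/(n:ℝ)^3 else 0

lemma ww_nonneg (n s : ℕ) : 0 ≤ ww n s := by
  rw [ww]; split_ifs with h
  · positivity
  · exact le_rfl

lemma Jsum_eq (hnn : 2 ≤ n) (ν : ℕ → ℝ≥0∞) :
    ∑ s ∈ range (n+1), ENNReal.ofReal (ww n s) * ν s
      = ENNReal.ofReal (1/(n:ℝ)^3) * ∑ s ∈ Finset.Icc 1 (n-1), ν s := by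
  rw [Finset.mul_sum]
  rw [← Finset.sum_subset (show Finset.Icc 1 (n-1) ⊆ range (n+1) by
    intro s hs; simp at hs ⊢; omega)]
  · refine Finset.sum_congr rfl fun s hs => ?_
    simp only [Finset.mem_Icc] at hs
    rw [ww, if_pos (by omega)]
  · intro s hs hs2
    simp only [Finset.mem_Icc] at hs2
    rw [ww, if_neg (by omega), ENNReal.ofReal_zero, zero_mul]

lemma telescope (hmc : IsMarkovChain μ (seqKernel n 3) x X) (hnn : 2 ≤ n) (hxn : x ≤ n)
    (T : ℕ) :
    (∑ t ∈ range T, ENNReal.ofReal (1/(n:ℝ)^3)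
        * ∑ s ∈ Finset.Icc 1 (n-1), μ {ω | X t ω = s})
      + ∑ s ∈ range (n+1), ENNReal.ofReal (hh n s) * μ {ω | X T ω = s}
    ≤ ENNReal.ofReal (hh n x) := by
  have hn : 0 < n := by omega
  induction T with
  | zero =>
    rw [Finset.sum_range_zero, zero_add, mart_init hmc hxn]
  | succ T ih =>
    refine le_trans ?_ ih
    rw [Finset.sum_range_succ]
    have hstep := superstep hmc hn hxn (hh n) (ww n)
      (fun u hu => by
        rw [hh]
        have : (u:ℝ) ≤ n := by exact_mod_cast hu
        have : (0:ℝ) ≤ (n:ℝ) - u := by linarith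
        positivity)
      (fun s _ => ww_nonneg n s)
      (fun s hs => by
        have h := hh_super hn s hs
        rw [ww]
        exact h) T
    rw [Jsum_eq hnn] at hstep
    calc (∑ t ∈ range T, ENNReal.ofReal (1/(n:ℝ)^3)
            * ∑ s ∈ Finset.Icc 1 (n-1), μ {ω | X t ω = s})
          + ENNReal.ofReal (1/(n:ℝ)^3) * ∑ s ∈ Finset.Icc 1 (n-1), μ {ω | X T ω = s}
          + ∑ s ∈ range (n+1), ENNReal.ofReal (hh n s) * μ {ω | X (T+1) ω = s}
        = (∑ t ∈ range T, ENNReal.ofReal (1/(n:ℝ)^3)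
            * ∑ s ∈ Finset.Icc 1 (n-1), μ {ω | X t ω = s})
          + ((∑ s ∈ range (n+1), ENNReal.ofReal (hh n s) * μ {ω | X (T+1) ω = s})
            + ENNReal.ofReal (1/(n:ℝ)^3) * ∑ s ∈ Finset.Icc 1 (n-1), μ {ω | X T ω = s}) := by
          ring
      _ ≤ (∑ t ∈ range T, ENNReal.ofReal (1/(n:ℝ)^3)
            * ∑ s ∈ Finset.Icc 1 (n-1), μ {ω | X t ω = s})
          + ∑ s ∈ range (n+1), ENNReal.ofReal (hh n s) * μ {ω | X T ω = s} :=
          add_le_add le_rfl hstep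

lemma Iin_antitone (hmc : IsMarkovChain μ (seqKernel n 3) x X) (hnn : 2 ≤ n) (hxn : x ≤ n)
    (t : ℕ) :
    ∑ s ∈ Finset.Icc 1 (n-1), μ {ω | X (t+1) ω = s}
      ≤ ∑ s ∈ Finset.Icc 1 (n-1), μ {ω | X t ω = s} := by
  have hn : 0 < n := by omega
  have hIccsub : Finset.Icc 1 (n-1) ⊆ range (n+1) := by
    intro s hs; simp at hs ⊢; omega
  calc ∑ u ∈ Finset.Icc 1 (n-1), μ {ω | X (t+1) ω = u}
      = ∑ u ∈ Finset.Icc 1 (n-1), ∑ s ∈ range (n+1),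
          ENNReal.ofReal (seqKernel n 3 s u) * μ {ω | X t ω = s} := by
        exact Finset.sum_congr rfl fun u _ => nurec hmc hxn t u
    _ = ∑ s ∈ range (n+1),
          (∑ u ∈ Finset.Icc 1 (n-1), ENNReal.ofReal (seqKernel n 3 s u)) * μ {ω | X t ω = s} := by
        rw [Finset.sum_comm]
        exact Finset.sum_congr rfl fun s _ => by rw [Finset.sum_mul]
    _ ≤ ∑ s ∈ range (n+1),
          (if s ∈ Finset.Icc 1 (n-1) then 1 else 0) * μ {ω | X t ω = s} := by
        apply Finset.sum_le_sum
        intro s hs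
        have hsn : s ≤ n := by simp at hs; omega
        apply mul_le_mul_left
        by_cases hmem : s ∈ Finset.Icc 1 (n-1)
        · rw [if_pos hmem]
          simp only [Finset.mem_Icc] at hmem
          have hs1 : 1 ≤ s := hmem.1
          have hs2 : s + 1 ≤ n := by omega
          have hrow : ∑ u ∈ range (n+1), seqKernel n 3 s u * 1 = 1 := by
            rw [rowsum_interior hs1 hs2]; ring
          calc ∑ u ∈ Finset.Icc 1 (n-1), ENNReal.ofReal (seqKernel n 3 s u)
              ≤ ∑ u ∈ range (n+1), ENNReal.ofReal (seqKernel n 3 s u) :=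
                Finset.sum_le_sum_of_subset_of_nonneg hIccsub (fun _ _ _ => zero_le)
            _ = ENNReal.ofReal (∑ u ∈ range (n+1), seqKernel n 3 s u) := by
                rw [ENNReal.ofReal_sum_of_nonneg
                  (fun u _ => seqKernel_nonneg hn hsn u)]
            _ = 1 := by
                have : ∑ u ∈ range (n+1), seqKernel n 3 s u = 1 := by
                  rw [← hrow]
                  exact Finset.sum_congr rfl fun u _ => by rw [mul_one]
                rw [this, ENNReal.ofReal_one]
        · rw [if_neg hmem]
          simp only [Finset.mem_Icc, not_and, not_le] at hmem
          have hsz : s = 0 ∨ s = n := by omega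
          have hzero : ∀ u ∈ Finset.Icc 1 (n-1), ENNReal.ofReal (seqKernel n 3 s u) = 0 := by
            intro u hu
            simp only [Finset.mem_Icc] at hu
            rcases hsz with h | h
            · subst h
              rcases eq_or_ne u 1 with h1 | h1
              · subst h1
                have : seqKernel n 3 0 (0+1) = Uu n 0 := kernel_eq_up n 0
                rw [this, Uu, majProb3_zero, mul_zero, ENNReal.ofReal_zero]
              · rw [kernel_eq_zero n 0 u (by omega) (by omega) (by omega),
                  ENNReal.ofReal_zero]
            · rw [h]
              rcases eq_or_ne (u+1) n with h1 | h1
              · have hu' : u = n - 1 := by omega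
                rw [hu', kernel_eq_down n n (by omega), Dd, majProb3_n hn]
                simp
              · rw [kernel_eq_zero n n u (by omega) h1 (by omega), ENNReal.ofReal_zero]
          rw [Finset.sum_eq_zero hzero]
    _ = ∑ s ∈ Finset.Icc 1 (n-1), μ {ω | X t ω = s} := by
        rw [← Finset.sum_subset hIccsub]
        · exact Finset.sum_congr rfl fun s hs => by rw [if_pos hs, one_mul]
        · intro s hs1 hs2
          rw [if_neg hs2, zero_mul]

end Chain2

section Chain3
variable {Ω : Type} [MeasurableSpace Ω] {μ : Measure Ω} {x : ℕ} {X : ℕ → Ω → ℕ} {n : ℕ}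

lemma kernel_zero_row {n : ℕ} (u : ℕ) (hu : u ≠ 0) : seqKernel n 3 0 u = 0 := by
  rcases eq_or_ne u 1 with h1 | h1
  · subst h1
    have h : seqKernel n 3 0 (0+1) = Uu n 0 := kernel_eq_up n 0
    rw [h, Uu, majProb3_zero, mul_zero]
  · exact kernel_eq_zero n 0 u (by omega) (by omega) (by omega)

lemma zero_absorb (hmc : IsMarkovChain μ (seqKernel n 3) x X) (t : ℕ) :
    μ ({ω | X t ω = 0} ∩ {ω | X (t+1) ω ≠ 0}) = 0 := by
  have hsub : {ω | X t ω = 0} ∩ {ω | X (t+1) ω ≠ 0}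
      ⊆ ⋃ u : ℕ, ({ω | X (t+1) ω = u + 1} ∩ {ω | X t ω = 0}) := by
    rintro ω ⟨h1, h2⟩
    have : X (t+1) ω ≠ 0 := h2
    refine Set.mem_iUnion.mpr ⟨X (t+1) ω - 1, ?_, h1⟩
    simp only [Set.mem_setOf_eq]
    omega
  refine le_antisymm (le_trans (measure_mono hsub) ?_) zero_le
  rw [measure_iUnion_null fun u => ?_]
  rw [step_inter hmc t 0 (u+1), kernel_zero_row (u+1) (by omega), ENNReal.ofReal_zero,
    zero_mul]

lemma hit_seq (X : ℕ → Ω → ℕ) (ω : Ω) :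
    ∀ T : ℕ, (∃ t ≤ T, X t ω = 0) →
      X T ω = 0 ∨ ∃ t, t < T ∧ X t ω = 0 ∧ X (t+1) ω ≠ 0 := by
  intro T
  induction T with
  | zero =>
    rintro ⟨t, ht, h0⟩
    interval_cases t
    exact Or.inl h0
  | succ T ih =>
    rintro ⟨t, ht, h0⟩
    by_cases hT : X (T+1) ω = 0
    · exact Or.inl hT
    · have ht' : t ≤ T := by
        rcases Nat.lt_or_ge t (T+1) with h | h
        · omega
        · exfalso; have : t = T + 1 := by omega
          exact hT (this ▸ h0)
      rcases ih ⟨t, ht', h0⟩ with h | ⟨t', ht', h1, h2⟩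
      · exact Or.inr ⟨T, by omega, h, hT⟩
      · exact Or.inr ⟨t', by omega, h1, h2⟩

lemma hitT_bound (hmc : IsMarkovChain μ (seqKernel n 3) x X) (T : ℕ) :
    μ {ω | ∃ t ≤ T, X t ω = 0} ≤ μ {ω | X T ω = 0} := by
  have hsub : {ω | ∃ t ≤ T, X t ω = 0}
      ⊆ {ω | X T ω = 0} ∪ ⋃ t : ℕ, ({ω | X t ω = 0} ∩ {ω | X (t+1) ω ≠ 0}) := by
    intro ω hω
    rcases hit_seq X ω T hω with h | ⟨t, _, h1, h2⟩
    · exact Or.inl h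
    · exact Or.inr (Set.mem_iUnion.mpr ⟨t, h1, h2⟩)
  calc μ {ω | ∃ t ≤ T, X t ω = 0}
      ≤ μ ({ω | X T ω = 0} ∪ ⋃ t : ℕ, ({ω | X t ω = 0} ∩ {ω | X (t+1) ω ≠ 0})) :=
        measure_mono hsub
    _ ≤ μ {ω | X T ω = 0} + μ (⋃ t : ℕ, ({ω | X t ω = 0} ∩ {ω | X (t+1) ω ≠ 0})) :=
        measure_union_le _ _
    _ = μ {ω | X T ω = 0} := by
        rw [measure_iUnion_null fun t => zero_absorb hmc t, add_zero]

lemma hitB_bound (hmc : IsMarkovChain μ (seqKernel n 3) x X) {β : ℝ≥0∞}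
    (hb : ∀ T, μ {ω | X T ω = 0} ≤ β) :
    μ {ω | ∃ t, X t ω = 0} ≤ β := by
  have hcover : {ω | ∃ t, X t ω = 0} = ⋃ T : ℕ, {ω | ∃ t ≤ T, X t ω = 0} := by
    ext ω
    simp only [Set.mem_setOf_eq, Set.mem_iUnion]
    constructor
    · rintro ⟨t, h⟩; exact ⟨t, t, le_rfl, h⟩
    · rintro ⟨T, t, _, h⟩; exact ⟨t, h⟩
  rw [hcover, Directed.measure_iUnion]
  · exact iSup_le fun T => (hitT_bound hmc T).trans (hb T)
  · apply Monotone.directed_le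
    intro T T' hTT ω
    rintro ⟨t, ht, h⟩
    exact ⟨t, le_trans ht hTT, h⟩

lemma never_bound (hmc : IsMarkovChain μ (seqKernel n 3) x X) (hnn : 2 ≤ n) (hxn : x ≤ n)
    (T : ℕ) :
    μ {ω | X T ω ≠ 0 ∧ X T ω ≠ n} ≤ ∑ s ∈ Finset.Icc 1 (n-1), μ {ω | X T ω = s} := by
  have hsub : {ω | X T ω ≠ 0 ∧ X T ω ≠ n}
      ⊆ (⋃ s ∈ Finset.Icc 1 (n-1), {ω | X T ω = s})
        ∪ ⋃ s : ℕ, ⋃ (_ : n < s), {ω | X T ω = s} := by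
    rintro ω ⟨h1, h2⟩
    rcases le_or_gt (X T ω) n with h | h
    · left
      refine Set.mem_biUnion (Finset.mem_Icc.mpr (by omega)) rfl
    · right
      exact Set.mem_iUnion.mpr ⟨X T ω, Set.mem_iUnion.mpr ⟨h, rfl⟩⟩
  calc μ {ω | X T ω ≠ 0 ∧ X T ω ≠ n}
      ≤ μ ((⋃ s ∈ Finset.Icc 1 (n-1), {ω | X T ω = s})
          ∪ ⋃ s : ℕ, ⋃ (_ : n < s), {ω | X T ω = s}) := measure_mono hsub
    _ ≤ μ (⋃ s ∈ Finset.Icc 1 (n-1), {ω | X T ω = s})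
        + μ (⋃ s : ℕ, ⋃ (_ : n < s), {ω | X T ω = s}) := measure_union_le _ _
    _ ≤ (∑ s ∈ Finset.Icc 1 (n-1), μ {ω | X T ω = s}) + 0 := by
        apply add_le_add
        · exact measure_biUnion_finset_le _ _
        · rw [measure_iUnion_null fun s => measure_iUnion_null fun hs =>
            nusupp hmc hxn T s hs]
    _ = ∑ s ∈ Finset.Icc 1 (n-1), μ {ω | X T ω = s} := by rw [add_zero]

lemma never_zero (hmc : IsMarkovChain μ (seqKernel n 3) x X) (hnn : 2 ≤ n) (hxn : x ≤ n) :
    μ (⋂ T : ℕ, {ω | X T ω ≠ 0 ∧ X T ω ≠ n}) = 0 := by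
  set NA := ⋂ T : ℕ, {ω | X T ω ≠ 0 ∧ X T ω ≠ n} with hNA
  by_contra hne
  have hpos : 0 < μ NA := pos_iff_ne_zero.mpr hne
  set c : ℝ≥0∞ := ENNReal.ofReal (1/(n:ℝ)^3) with hc
  have hn0 : (0:ℝ) < (n:ℝ) := by exact_mod_cast (show 0 < n by omega)
  have hc0 : c ≠ 0 := by
    rw [hc]
    exact (ENNReal.ofReal_pos.mpr (one_div_pos.mpr (pow_pos hn0 3))).ne'
  set δ : ℝ≥0∞ := c * μ NA with hδ
  have hδ0 : δ ≠ 0 := mul_ne_zero hc0 hne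
  have hbound : ∀ T : ℕ, (T : ℝ≥0∞) * δ ≤ ENNReal.ofReal (hh n x) := by
    intro T
    have hIle : μ NA ≤ ∑ s ∈ Finset.Icc 1 (n-1), μ {ω | X T ω = s} := by
      refine le_trans (measure_mono ?_) (never_bound hmc hnn hxn T)
      exact Set.iInter_subset _ T
    have hanti : ∀ t, t ≤ T → ∑ s ∈ Finset.Icc 1 (n-1), μ {ω | X T ω = s}
        ≤ ∑ s ∈ Finset.Icc 1 (n-1), μ {ω | X t ω = s} := by
      intro t ht
      have : ∀ k, ∑ s ∈ Finset.Icc 1 (n-1), μ {ω | X (t + k) ω = s}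
          ≤ ∑ s ∈ Finset.Icc 1 (n-1), μ {ω | X t ω = s} := by
        intro k
        induction k with
        | zero => exact le_rfl
        | succ k ih => exact le_trans (Iin_antitone hmc hnn hxn (t+k)) ih
      have h := this (T - t)
      rwa [Nat.add_sub_cancel' ht] at h
    have hsum : (T : ℝ≥0∞) * (c * μ NA)
        ≤ ∑ t ∈ range T, c * ∑ s ∈ Finset.Icc 1 (n-1), μ {ω | X t ω = s} := by
      have h1 : ∀ t ∈ range T, c * μ NA
          ≤ c * ∑ s ∈ Finset.Icc 1 (n-1), μ {ω | X t ω = s} := by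
        intro t ht
        simp only [Finset.mem_range] at ht
        exact mul_le_mul_right (hIle.trans (hanti t ht.le)) c
      calc (T : ℝ≥0∞) * (c * μ NA) = (range T).card • (c * μ NA) := by
            rw [Finset.card_range, nsmul_eq_mul]
        _ ≤ ∑ t ∈ range T, c * ∑ s ∈ Finset.Icc 1 (n-1), μ {ω | X t ω = s} :=
            Finset.card_nsmul_le_sum _ _ _ h1
    refine le_trans hsum ?_
    have htel := telescope hmc hnn hxn T
    refine le_trans (le_trans (le_add_of_nonneg_right zero_le) htel) le_rfl
  have hfin : ENNReal.ofReal (hh n x) / δ ≠ ⊤ :=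
    (ENNReal.div_lt_top ENNReal.ofReal_ne_top hδ0).ne
  obtain ⟨T, hT⟩ := ENNReal.exists_nat_gt hfin
  have h2 : ENNReal.ofReal (hh n x) < (T : ℝ≥0∞) * δ := by
    exact (ENNReal.div_lt_iff (Or.inl hδ0) (Or.inr ENNReal.ofReal_ne_top)).mp hT
  exact absurd (hbound T) (not_le.mpr h2)

end Chain3

-- main analytic estimate
set_option maxHeartbeats 2000000 in
lemma gbound {n x : ℕ} (hn64 : 64 ≤ n) (hxn : x ≤ n)
    (hx : (n:ℝ)/2 + 4*Real.sqrt ((n:ℝ) * Real.log n) ≤ x) :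
    gg n x ≤ 3/(n:ℝ)^3 * gg n 0 := by
  have hn : 0 < n := by omega
  have hnR : (64:ℝ) ≤ (n:ℝ) := by exact_mod_cast hn64
  have hnR0 : (0:ℝ) < (n:ℝ) := by linarith
  have hn' : (n:ℝ) ≠ 0 := ne_of_gt hnR0
  set L : ℝ := Real.sqrt ((n:ℝ) * Real.log n) with hLdef
  have hL0 : 0 ≤ L := Real.sqrt_nonneg _
  have hlog1 : 1 ≤ Real.log n := by
    rw [Real.le_log_iff_exp_le hnR0]
    have := Real.exp_one_lt_d9
    linarith
  have hL2 : L^2 = (n:ℝ) * Real.log n := Real.sq_sqrt (by nlinarith)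
  have hL1 : 1 ≤ L := by nlinarith
  have hsqn : Real.sqrt (n:ℝ) * Real.sqrt (n:ℝ) = (n:ℝ) := Real.mul_self_sqrt hnR0.le
  have hsq8 : (8:ℝ) ≤ Real.sqrt (n:ℝ) := by nlinarith [Real.sqrt_nonneg (n:ℝ)]
  have hlogn4 : Real.log n ≤ (n:ℝ)/4 := by
    have h1 : Real.log (Real.sqrt (n:ℝ)) ≤ Real.sqrt (n:ℝ) - 1 :=
      Real.log_le_sub_one_of_pos (by linarith)
    have h2 : Real.log (Real.sqrt (n:ℝ)) = Real.log (n:ℝ) / 2 :=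
      Real.log_sqrt hnR0.le
    nlinarith
  have hLn2 : L ≤ (n:ℝ)/2 := by nlinarith
  set m : ℕ := n/2 with hmdef
  set k : ℕ := ⌈2*L⌉₊ with hkdef
  have hk2L : 2*L ≤ (k:ℝ) := Nat.le_ceil _
  have hkle : (k:ℝ) ≤ 2*L + 1 := (Nat.ceil_lt_add_one (by linarith)).le
  have hxR : (n:ℝ)/2 + 4*L ≤ (x:ℝ) := hx
  have hkx : k ≤ x := by
    have : (k:ℝ) ≤ (x:ℝ) := by nlinarith
    exact_mod_cast this
  set b : ℕ := x - k with hbdef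
  have hbR : (b:ℝ) = (x:ℝ) - (k:ℝ) := by
    rw [hbdef]; push_cast [hkx]; ring
  have hmR1 : (m:ℝ) ≤ (n:ℝ)/2 := by
    have h1 : 2*m ≤ n := by omega
    have : (2:ℝ)*(m:ℝ) ≤ (n:ℝ) := by exact_mod_cast h1
    linarith
  have hmR2 : (n:ℝ)/2 ≤ (m:ℝ) + 1 := by
    have h1 : n ≤ 2*m + 1 := by omega
    have : (n:ℝ) ≤ 2*(m:ℝ) + 1 := by exact_mod_cast h1
    linarith
  have hmb : m ≤ b := by
    have : (m:ℝ) ≤ (b:ℝ) := by rw [hbR]; nlinarith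
    exact_mod_cast this
  have hbx : b ≤ x := Nat.sub_le _ _
  have hxhalf : (n:ℝ)/2 ≤ (x:ℝ) := by nlinarith
  have hmn : m < n := Nat.div_lt_self hn (by norm_num)
  -- factors in (m, x] are at most 1
  have hfact_le_one : ∀ i, m < i → i ≤ n → rr n i ≤ 1 := by
    intro i h1 h2
    have hi1 : 1 ≤ i := by omega
    have hiR : (m:ℝ) + 1 ≤ (i:ℝ) := by exact_mod_cast h1
    have h3 : (n:ℝ)/2 ≤ (i:ℝ) := by linarith
    have h4 := rr_le hi1 h2 h3
    have h5 : (1:ℝ)/2 ≤ (i:ℝ)/(n:ℝ) := by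
      rw [div_le_div_iff₀ (by norm_num) hnR0]; linarith
    linarith
  have hfact_nonneg : ∀ i, 1 ≤ i → i ≤ n → 0 ≤ rr n i := fun i h1 h2 => rr_nonneg h1 h2
  -- Step 1 : gg n x ≤ n * pp n x
  have step1 : gg n x ≤ (n:ℝ) * pp n x := by
    have hterm : ∀ j ∈ Finset.Ico x n, pp n j ≤ pp n x := by
      intro j hj
      simp only [Finset.mem_Ico] at hj
      have hsplit : pp n x * ∏ i ∈ Finset.Ioc x j, rr n i = pp n j := by
        rw [pp, pp]
        exact Finset.prod_Ioc_consecutive _ (Nat.zero_le x) hj.1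
      rw [← hsplit]
      have hprod1 : ∏ i ∈ Finset.Ioc x j, rr n i ≤ 1 := by
        apply Finset.prod_le_one
        · intro i hi
          simp only [Finset.mem_Ioc] at hi
          exact hfact_nonneg i (by omega) (by omega)
        · intro i hi
          simp only [Finset.mem_Ioc] at hi
          apply hfact_le_one i (by omega) (by omega)
      have hppx : 0 ≤ pp n x := pp_nonneg x hxn
      nlinarith
    calc gg n x = ∑ j ∈ Finset.Ico x n, pp n j := rfl
      _ ≤ ∑ j ∈ Finset.Ico x n, pp n x := Finset.sum_le_sum hterm
      _ = ((n - x : ℕ):ℝ) * pp n x := by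
          rw [Finset.sum_const, Nat.card_Ico, nsmul_eq_mul]
      _ ≤ (n:ℝ) * pp n x := by
          have h1 : ((n - x:ℕ):ℝ) ≤ (n:ℝ) := by
            have : n - x ≤ n := Nat.sub_le _ _
            exact_mod_cast this
          have h2 : 0 ≤ pp n x := pp_nonneg x hxn
          nlinarith
  -- Step 2 : pp n x ≤ 3/n^4 * pp n m
  have step2 : pp n x ≤ 3/(n:ℝ)^4 * pp n m := by
    have hsplit1 : pp n m * ∏ i ∈ Finset.Ioc m x, rr n i = pp n x := by
      rw [pp, pp]; exact Finset.prod_Ioc_consecutive _ (Nat.zero_le m) (le_trans hmb hbx)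
    have hsplit2 : (∏ i ∈ Finset.Ioc m b, rr n i) * ∏ i ∈ Finset.Ioc b x, rr n i
        = ∏ i ∈ Finset.Ioc m x, rr n i := Finset.prod_Ioc_consecutive _ hmb hbx
    have hprod1 : ∏ i ∈ Finset.Ioc m b, rr n i ≤ 1 := by
      apply Finset.prod_le_one
      · intro i hi
        simp only [Finset.mem_Ioc] at hi
        exact hfact_nonneg i (by omega) (by omega)
      · intro i hi
        simp only [Finset.mem_Ioc] at hi
        exact hfact_le_one i hi.1 (by omega)
    have hprod1' : 0 ≤ ∏ i ∈ Finset.Ioc m b, rr n i :=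
      Finset.prod_nonneg fun i hi => by
        simp only [Finset.mem_Ioc] at hi
        exact hfact_nonneg i (by omega) (by omega)
    set ρ : ℝ := 1 - (2*L - 1)/(n:ℝ) with hρdef
    have hρ0 : 0 ≤ ρ := by
      rw [hρdef]
      have : (2*L - 1)/(n:ℝ) ≤ 1 := by
        rw [div_le_one hnR0]; linarith
      linarith
    have hcard : (Finset.Ioc b x).card = k := by
      rw [Nat.card_Ioc]; omega
    have hprod2 : ∏ i ∈ Finset.Ioc b x, rr n i ≤ ρ^k := by
      have h1 : ∏ i ∈ Finset.Ioc b x, rr n i ≤ ∏ i ∈ Finset.Ioc b x, ρ := by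
        apply Finset.prod_le_prod
        · intro i hi
          simp only [Finset.mem_Ioc] at hi
          exact hfact_nonneg i (by omega) (by omega)
        · intro i hi
          simp only [Finset.mem_Ioc] at hi
          have hi1 : 1 ≤ i := by omega
          have hin : i ≤ n := by omega
          have hiR : (b:ℝ) + 1 ≤ (i:ℝ) := by exact_mod_cast hi.1
          have h3 : (n:ℝ)/2 ≤ (i:ℝ) := by rw [hbR] at hiR; nlinarith
          have h4 := rr_le hi1 hin h3
          have h5 : (2*L - 1)/(n:ℝ) ≤ (i:ℝ)/(n:ℝ) - 1/2 := by
            rw [hbR] at hiR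
            rw [div_sub' hn', div_le_div_iff₀ hnR0 hnR0]
            nlinarith
          rw [hρdef]
          linarith
      rw [Finset.prod_const, hcard] at h1
      exact h1
    have hρexp : ρ^k ≤ 3/(n:ℝ)^4 := by
      have t0 : (0:ℝ) ≤ (2*L - 1)/(n:ℝ) := by
        apply div_nonneg _ hnR0.le
        linarith
      have h1 : ρ ≤ Real.exp (-((2*L - 1)/(n:ℝ))) := by
        rw [hρdef]
        have := Real.add_one_le_exp (-((2*L - 1)/(n:ℝ)))
        linarith
      have h2 : ρ^k ≤ Real.exp (-((2*L - 1)/(n:ℝ)))^k := pow_le_pow_left₀ hρ0 h1 k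
      have h3 : Real.exp (-((2*L - 1)/(n:ℝ)))^k = Real.exp (-((2*L - 1)/(n:ℝ)) * k) := by
        rw [← Real.exp_nat_mul]; ring_nf
      have h4 : -((2*L - 1)/(n:ℝ)) * k ≤ 1 - 4*Real.log n := by
        have h5 : (2*L - 1) * (2*L) ≤ (2*L - 1) * k := by nlinarith
        have h6 : -((2*L - 1)/(n:ℝ)) * k = -((2*L - 1) * k)/(n:ℝ) := by ring
        rw [h6]
        rw [div_le_iff₀ hnR0]  -- careful: -(a)/n ≤ c ↔ -(a) ≤ c*n
        nlinarith [hL2]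
      have h7 : Real.exp (1 - 4*Real.log n) = Real.exp 1 / (n:ℝ)^4 := by
        rw [Real.exp_sub]
        congr 1
        rw [show (4:ℝ)*Real.log n = Real.log ((n:ℝ)^4) by rw [Real.log_pow]; push_cast; ring]
        exact Real.exp_log (by positivity)
      have h8 : Real.exp 1 / (n:ℝ)^4 ≤ 3/(n:ℝ)^4 := by
        gcongr
        exact le_trans Real.exp_one_lt_d9.le (by norm_num)
      have h9 : Real.exp (-((2*L - 1)/(n:ℝ)) * k) ≤ Real.exp (1 - 4*Real.log n) :=
        Real.exp_le_exp.mpr h4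
      rw [h3] at h2
      rw [h7] at h9
      linarith
    have hppm : 0 ≤ pp n m := pp_nonneg m hmn.le
    have hprod2' : 0 ≤ ∏ i ∈ Finset.Ioc b x, rr n i :=
      Finset.prod_nonneg fun i hi => by
        simp only [Finset.mem_Ioc] at hi
        exact hfact_nonneg i (by omega) (by omega)
    calc pp n x = pp n m * ((∏ i ∈ Finset.Ioc m b, rr n i) * ∏ i ∈ Finset.Ioc b x, rr n i) := by
          rw [hsplit2, hsplit1]
      _ ≤ pp n m * (1 * (3/(n:ℝ)^4)) := by
          apply mul_le_mul_of_nonneg_left _ hppm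
          exact mul_le_mul hprod1 (hprod2.trans hρexp) hprod2' zero_le_one
      _ = 3/(n:ℝ)^4 * pp n m := by ring
  -- Step 3 : pp n m ≤ gg n 0
  have step3 : pp n m ≤ gg n 0 := by
    apply Finset.single_le_sum (f := fun j => pp n j)
    · intro j hj
      simp only [Finset.mem_Ico] at hj
      exact pp_nonneg j (by omega)
    · simp only [Finset.mem_Ico]
      omega
  calc gg n x ≤ (n:ℝ) * pp n x := step1
    _ ≤ (n:ℝ) * (3/(n:ℝ)^4 * pp n m) := mul_le_mul_of_nonneg_left step2 hnR0.le
    _ = 3/(n:ℝ)^3 * pp n m := by field_simp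
    _ ≤ 3/(n:ℝ)^3 * gg n 0 := mul_le_mul_of_nonneg_left step3 (by positivity)

lemma gg_zero_ge_one {n : ℕ} (hn : 0 < n) : 1 ≤ gg n 0 := by
  have h : pp n 0 ≤ gg n 0 := by
    apply Finset.single_le_sum (f := fun j => pp n j)
    · intro j hj
      simp only [Finset.mem_Ico] at hj
      exact pp_nonneg j (by omega)
    · simp only [Finset.mem_Ico]; omega
  rw [pp_zero] at h
  exact h

theorem main_aux {n x : ℕ} {Ω : Type} [MeasurableSpace Ω] {μ : Measure Ω} {X : ℕ → Ω → ℕ}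
    (hn64 : 64 ≤ n) (hxn : x ≤ n)
    (hx : (n:ℝ)/2 + 4*Real.sqrt ((n:ℝ) * Real.log n) ≤ x)
    (hmc : IsMarkovChain μ (seqKernel n 3) x X) :
    ENNReal.ofReal (1 - ((n:ℝ))⁻¹) ≤ μ {ω | ∃ t : ℕ, X t ω = n ∧ ∀ t' ≤ t, X t' ω ≠ 0} := by
  haveI := hmc.1
  have hX := hmc.2.1
  have hn : 0 < n := by omega
  have hnn : 2 ≤ n := by omega
  have hnR0 : (0:ℝ) < (n:ℝ) := by exact_mod_cast hn
  set A : Set Ω := {ω | ∃ t : ℕ, X t ω = n ∧ ∀ t' ≤ t, X t' ω ≠ 0} with hA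
  have hAmeas : MeasurableSet A := by
    have : A = ⋃ t : ℕ, ({ω | X t ω = n}
        ∩ ⋂ t' : ℕ, ⋂ (_ : t' ≤ t), ({ω | X t' ω = 0})ᶜ) := by
      ext ω
      simp only [hA, Set.mem_setOf_eq, Set.mem_iUnion, Set.mem_inter_iff, Set.mem_iInter,
        Set.mem_compl_iff]
    rw [this]
    refine MeasurableSet.iUnion fun t => MeasurableSet.inter ?_ ?_
    · exact (hX t) (measurableSet_singleton n)
    · exact MeasurableSet.iInter fun t' => MeasurableSet.iInter fun _ =>
        ((hX t') (measurableSet_singleton 0)).compl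
  set β : ℝ≥0∞ := ENNReal.ofReal (3/(n:ℝ)^3) with hβ
  -- bound on hitting 0
  have hb : ∀ T, μ {ω | X T ω = 0} ≤ β := by
    intro T
    have h1 := hit0_bound hmc hn hxn T
    have hg0 : 1 ≤ gg n 0 := gg_zero_ge_one hn
    have h2 : ENNReal.ofReal (gg n x) ≤ ENNReal.ofReal (gg n 0) * β := by
      rw [hβ, ← ENNReal.ofReal_mul (by linarith)]
      apply ENNReal.ofReal_le_ofReal
      have := gbound hn64 hxn hx
      linarith [this]
    have h3 : ENNReal.ofReal (gg n 0) * μ {ω | X T ω = 0} ≤ ENNReal.ofReal (gg n 0) * β :=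
      le_trans h1 h2
    have hne0 : ENNReal.ofReal (gg n 0) ≠ 0 :=
      (ENNReal.ofReal_pos.mpr (by linarith)).ne'
    exact (ENNReal.mul_le_mul_iff_right hne0 ENNReal.ofReal_ne_top).mp h3
  have hBle : μ {ω | ∃ t, X t ω = 0} ≤ β := hitB_bound hmc hb
  have hNA : μ (⋂ T : ℕ, {ω | X T ω ≠ 0 ∧ X T ω ≠ n}) = 0 := never_zero hmc hnn hxn
  have hsub : Aᶜ ⊆ {ω | ∃ t, X t ω = 0} ∪ ⋂ T : ℕ, {ω | X T ω ≠ 0 ∧ X T ω ≠ n} := by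
    intro ω hω
    by_cases hB : ∃ t, X t ω = 0
    · exact Or.inl hB
    · push_neg at hB
      right
      refine Set.mem_iInter.mpr fun T => ⟨hB T, fun hTn => ?_⟩
      exact hω ⟨T, hTn, fun t' _ => hB t'⟩
  have hAc : μ Aᶜ ≤ β := by
    calc μ Aᶜ ≤ μ ({ω | ∃ t, X t ω = 0} ∪ ⋂ T : ℕ, {ω | X T ω ≠ 0 ∧ X T ω ≠ n}) :=
          measure_mono hsub
      _ ≤ μ {ω | ∃ t, X t ω = 0} + μ (⋂ T : ℕ, {ω | X T ω ≠ 0 ∧ X T ω ≠ n}) :=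
          measure_union_le _ _
      _ ≤ β + 0 := add_le_add hBle (le_of_eq hNA)
      _ = β := add_zero β
  have hmA : μ A = 1 - μ Aᶜ := by
    have h := prob_compl_eq_one_sub (μ := μ) hAmeas.compl
    rwa [compl_compl] at h
  have hfinal : ENNReal.ofReal (1 - ((n:ℝ))⁻¹) ≤ 1 - β := by
    have hnR64 : (64:ℝ) ≤ (n:ℝ) := by exact_mod_cast hn64
    have h3n : 3/(n:ℝ)^3 ≤ (n:ℝ)⁻¹ := by
      rw [← one_div, div_le_div_iff₀ (by positivity) hnR0]
      have hsq : (3:ℝ) ≤ (n:ℝ)^2 := by nlinarith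
      nlinarith
    have h4 : ENNReal.ofReal (1 - ((n:ℝ))⁻¹) = 1 - ENNReal.ofReal ((n:ℝ)⁻¹) := by
      rw [ENNReal.ofReal_sub _ (by positivity), ENNReal.ofReal_one]
    rw [h4]
    apply tsub_le_tsub_left
    exact ENNReal.ofReal_le_ofReal h3n
  calc ENNReal.ofReal (1 - ((n:ℝ))⁻¹) ≤ 1 - β := hfinal
    _ ≤ 1 - μ Aᶜ := tsub_le_tsub_left hAc 1
    _ = μ A := hmA.symm

end S4


theorem stmt4 :
    ∃ ζ : ℝ, 0 < ζ ∧ ∃ c : ℝ, 0 < c ∧ ∀ᶠ n : ℕ in Filter.atTop, ∀ x ≤ n,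
      (n : ℝ) / 2 + ζ * Real.sqrt (n * Real.log n) ≤ x →
      ∀ (Ω : Type) [MeasurableSpace Ω], ∀ (μ : Measure Ω) (X : ℕ → Ω → ℕ),
        IsMarkovChain μ (seqKernel n 3) x X →
        ENNReal.ofReal (1 - (n : ℝ) ^ (-c)) ≤
          μ {ω | ∃ t : ℕ, X t ω = n ∧ ∀ t' ≤ t, X t' ω ≠ 0} := by
  refine ⟨4, by norm_num, 1, by norm_num, ?_⟩
  rw [Filter.eventually_atTop]
  refine ⟨64, fun n hn64 x hxn hx Ω _ μ X hmc => ?_⟩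
  have h1 : ((n:ℝ)) ^ (-(1:ℝ)) = ((n:ℝ))⁻¹ := Real.rpow_neg_one _
  rw [h1]
  exact S4.main_aux hn64 hxn hx hmc
end
end

section
/- Let n ≥ 1, j ≥ 1, and consider the sequential 2j-Majority process P_{2j}. Its one-step transition kernel is stochastically monotone in the state: for all states s, s' ∈ {0,…,n} with s > s' and every d ∈ {0,…,n}, P(X_{t+1} ≥ d | X_t = s) ≥ P(X_{t+1} ≥ d | X_t = s'). -/
open MeasureTheory Finset
open scoped ENNReal NNReal

noncomputable section

/-!
The sequential process is a birth–death chain with up-probability `(n - s)/n · q(s)` and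
down-probability `s/n · (1 - q(s))`. Such a chain is stochastically monotone as soon as
`up(s) + down(s + 1) ≤ 1`, i.e. the chains started at `s` and `s + 1` can be coupled so that they
never cross; for the majority process this follows from `q` being nondecreasing, which in turn
holds because binomial tails `P(Bin(m, p) ≥ k)` are nondecreasing in `p`.
-/

lemma binomPMF_nonneg (m k : ℕ) {p : ℝ} (hp : p ∈ Set.Icc 0 1) : 0 ≤ binomPMF m k p := by
  have : 0 ≤ 1 - p := sub_nonneg.2 hp.2
  have := hp.1
  unfold binomPMF
  positivity

lemma binomPMF_succ_succ (m i : ℕ) (p : ℝ) :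
    binomPMF (m + 1) (i + 1) p = p * binomPMF m i p + (1 - p) * binomPMF m (i + 1) p := by
  unfold binomPMF
  rw [Nat.choose_succ_succ, Nat.add_sub_add_right]
  rcases lt_or_ge i m with hi | hi
  · rw [show m - i = m - (i + 1) + 1 by omega]
    push_cast
    ring
  · rw [Nat.choose_eq_zero_of_lt (Nat.lt_succ_of_le hi)]
    push_cast
    ring

lemma binomTail_zero (m : ℕ) (p : ℝ) : binomTail m 0 p = 1 := by
  have h := add_pow p (1 - p) m
  rw [add_sub_cancel, one_pow] at h
  rw [h, binomTail, ← Nat.range_succ_eq_Icc_zero]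
  exact Finset.sum_congr rfl fun k _ => by unfold binomPMF; ring

lemma binomTail_of_lt {m k : ℕ} (h : m < k) (p : ℝ) : binomTail m k p = 0 := by
  rw [binomTail, Finset.Icc_eq_empty_of_lt h, Finset.sum_empty]

lemma binomTail_eq_binomPMF_add {m k : ℕ} (h : k ≤ m) (p : ℝ) :
    binomTail m k p = binomPMF m k p + binomTail m (k + 1) p := by
  rw [binomTail, Finset.Icc_eq_cons_Ioc h, Finset.sum_cons, binomTail,
    Finset.Icc_add_one_left_eq_Ioc]

lemma binomTail_nonneg (m k : ℕ) {p : ℝ} (hp : p ∈ Set.Icc 0 1) : 0 ≤ binomTail m k p :=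
  Finset.sum_nonneg fun i _ => binomPMF_nonneg m i hp

lemma binomTail_succ_le (m k : ℕ) {p : ℝ} (hp : p ∈ Set.Icc 0 1) :
    binomTail m (k + 1) p ≤ binomTail m k p :=
  Finset.sum_le_sum_of_subset_of_nonneg (Finset.Icc_subset_Icc_left k.le_succ)
    fun i _ _ => binomPMF_nonneg m i hp

lemma binomTail_le_one (m k : ℕ) {p : ℝ} (hp : p ∈ Set.Icc 0 1) : binomTail m k p ≤ 1 := by
  rw [← binomTail_zero m p]
  exact Finset.sum_le_sum_of_subset_of_nonneg (Finset.Icc_subset_Icc_left k.zero_le)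
    fun i _ _ => binomPMF_nonneg m i hp

lemma binomTail_succ_succ (m k : ℕ) (p : ℝ) :
    binomTail (m + 1) (k + 1) p = p * binomTail m k p + (1 - p) * binomTail m (k + 1) p := by
  rcases le_or_gt k m with hk | hk
  · have hshift : ∀ f : ℕ → ℝ, ∑ i ∈ Finset.Icc (k + 1) (m + 1), f i =
        ∑ i ∈ Finset.Icc k m, f (i + 1) := fun f => by
      rw [← Finset.map_add_right_Icc, Finset.sum_map]
      rfl
    have htop : binomTail m (k + 1) p = ∑ i ∈ Finset.Icc (k + 1) (m + 1), binomPMF m i p := by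
      rw [Finset.sum_Icc_succ_top (by omega), binomPMF, Nat.choose_succ_self, binomTail]
      simp
    rw [binomTail, hshift, htop, hshift, binomTail, Finset.mul_sum, Finset.mul_sum,
      ← Finset.sum_add_distrib]
    exact Finset.sum_congr rfl fun i _ => binomPMF_succ_succ m i p
  · simp [binomTail_of_lt, hk, Nat.lt_succ_of_lt hk]

theorem binomTail_monotoneOn (m k : ℕ) : MonotoneOn (binomTail m k) (Set.Icc 0 1) := by
  intro p' hp' p hp hpp
  induction m generalizing k with
  | zero => rcases k with _ | k <;> simp [binomTail_zero, binomTail_of_lt]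
  | succ m ih =>
    rcases k with _ | k
    · simp [binomTail_zero]
    -- a `p`-weighted mixture of `binomTail m k p ≥ binomTail m (k + 1) p`: raising `p` raises
    -- both and shifts weight to the larger one
    rw [binomTail_succ_succ, binomTail_succ_succ]
    nlinarith [ih k, ih (k + 1), binomTail_succ_le m k hp, hp'.1, hp'.2]

lemma majProb_eq (n J s : ℕ) :
    majProb n J s = if Even J then
      (binomTail J (J / 2) ((s : ℝ) / n) + binomTail J (J / 2 + 1) ((s : ℝ) / n)) / 2
    else binomTail J (J / 2 + 1) ((s : ℝ) / n) := by
  rw [majProb]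
  split_ifs
  · rw [binomTail_eq_binomPMF_add (J.div_le_self 2)]
    ring
  · rw [add_zero]

lemma natCast_div_mem_Icc {s n : ℕ} (hs : s ≤ n) : (s : ℝ) / n ∈ Set.Icc 0 1 :=
  ⟨by positivity, div_le_one_of_le₀ (by exact_mod_cast hs) n.cast_nonneg⟩

lemma majProb_mem_Icc (J : ℕ) {n s : ℕ} (hs : s ≤ n) : majProb n J s ∈ Set.Icc 0 1 := by
  have hp := natCast_div_mem_Icc hs
  have := binomTail_nonneg J (J / 2) hp
  have := binomTail_nonneg J (J / 2 + 1) hp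
  have := binomTail_le_one J (J / 2) hp
  have := binomTail_le_one J (J / 2 + 1) hp
  rw [majProb_eq]
  split_ifs <;> constructor <;> linarith

lemma majProb_mono (J : ℕ) {n s' s : ℕ} (hss : s' ≤ s) (hs : s ≤ n) :
    majProb n J s' ≤ majProb n J s := by
  have hp' := natCast_div_mem_Icc (hss.trans hs)
  have hp := natCast_div_mem_Icc hs
  have hpp : (s' : ℝ) / n ≤ s / n :=
    div_le_div_of_nonneg_right (by exact_mod_cast hss) n.cast_nonneg
  have := binomTail_monotoneOn J (J / 2) hp' hp hpp
  have := binomTail_monotoneOn J (J / 2 + 1) hp' hp hpp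
  rw [majProb_eq, majProb_eq]
  split_ifs <;> linarith

lemma kernelTail_eq_add_kernelTail_succ (K : ℕ → ℕ → ℝ) {n d : ℕ} (hd : d ≤ n) (s : ℕ) :
    kernelTail K n s d = K s d + kernelTail K n s (d + 1) := by
  rw [kernelTail, Finset.Icc_eq_cons_Ioc hd, Finset.sum_cons, kernelTail,
    Finset.Icc_add_one_left_eq_Ioc]

lemma kernelTail_of_lt (K : ℕ → ℕ → ℝ) {n d : ℕ} (hd : n < d) (s : ℕ) :
    kernelTail K n s d = 0 := by
  rw [kernelTail, Finset.Icc_eq_empty_of_lt hd, Finset.sum_empty]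

def birthDeathKernel (up down : ℕ → ℝ) (s u : ℕ) : ℝ :=
  if u = s + 1 then up s
  else if u + 1 = s then down s
  else if u = s then 1 - up s - down s
  else 0

lemma seqKernel_eq_birthDeathKernel (n J : ℕ) :
    seqKernel n J = birthDeathKernel (fun s => ((n : ℝ) - s) / n * majProb n J s)
      (fun s => (s : ℝ) / n * (1 - majProb n J s)) :=
  rfl

section BirthDeath

variable {up down : ℕ → ℝ} {n : ℕ}

lemma kernelTail_birthDeathKernel_of_add_two_le {s d : ℕ} (h : s + 2 ≤ d) :
    kernelTail (birthDeathKernel up down) n s d = 0 :=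
  Finset.sum_eq_zero fun u hu => by
    rw [Finset.mem_Icc] at hu
    rw [birthDeathKernel, if_neg (by omega), if_neg (by omega), if_neg (by omega)]

lemma kernelTail_birthDeathKernel_succ (hup : up n = 0) {s : ℕ} (hs : s ≤ n) :
    kernelTail (birthDeathKernel up down) n s (s + 1) = up s := by
  rcases hs.lt_or_eq with hs | rfl
  · rw [kernelTail_eq_add_kernelTail_succ _ hs, kernelTail_birthDeathKernel_of_add_two_le le_rfl,
      birthDeathKernel, if_pos rfl, add_zero]
  · rw [kernelTail_of_lt _ s.lt_succ_self, hup]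

lemma kernelTail_birthDeathKernel_self (hup : up n = 0) {s : ℕ} (hs : s ≤ n) :
    kernelTail (birthDeathKernel up down) n s s = 1 - down s := by
  rw [kernelTail_eq_add_kernelTail_succ _ hs, kernelTail_birthDeathKernel_succ hup hs,
    birthDeathKernel, if_neg (by omega), if_neg (by omega), if_pos rfl]
  ring

lemma kernelTail_birthDeathKernel_of_lt (hup : up n = 0) {s d : ℕ} (hd : d < s) (hs : s ≤ n) :
    kernelTail (birthDeathKernel up down) n s d = 1 := by
  obtain ⟨t, rfl⟩ := Nat.exists_eq_add_of_lt hd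
  have hstay : kernelTail (birthDeathKernel up down) n (d + t + 1) d =
      kernelTail (birthDeathKernel up down) n (d + t + 1) (d + t) := by
    refine (Finset.sum_subset (Finset.Icc_subset_Icc_left (by omega)) fun u hu hu' => ?_).symm
    rw [Finset.mem_Icc] at hu hu'
    rw [birthDeathKernel, if_neg (by omega), if_neg (by omega), if_neg (by omega)]
  rw [hstay, kernelTail_eq_add_kernelTail_succ _ (by omega),
    kernelTail_birthDeathKernel_self hup hs, birthDeathKernel, if_neg (by omega), if_pos rfl]
  ring

/-- At `d = s + 1` the comparison is exactly the non-crossing condition `hcross`. -/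
lemma kernelTail_birthDeathKernel_le_succ (hup0 : ∀ s ≤ n, 0 ≤ up s)
    (hdown0 : ∀ s ≤ n, 0 ≤ down s) (hup : up n = 0)
    (hcross : ∀ s < n, up s + down (s + 1) ≤ 1) {s : ℕ} (hs : s + 1 ≤ n) (d : ℕ) :
    kernelTail (birthDeathKernel up down) n s d ≤
      kernelTail (birthDeathKernel up down) n (s + 1) d := by
  rcases lt_trichotomy d s with hd | rfl | hd
  · rw [kernelTail_birthDeathKernel_of_lt hup hd (by omega),
      kernelTail_birthDeathKernel_of_lt hup (by omega) hs]
  · rw [kernelTail_birthDeathKernel_self hup (by omega),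
      kernelTail_birthDeathKernel_of_lt hup d.lt_succ_self hs]
    linarith [hdown0 d (by omega)]
  obtain rfl | rfl | hd := (show d = s + 1 ∨ d = s + 2 ∨ s + 3 ≤ d by omega)
  · rw [kernelTail_birthDeathKernel_succ hup (by omega), kernelTail_birthDeathKernel_self hup hs]
    linarith [hcross s hs]
  · rw [kernelTail_birthDeathKernel_of_add_two_le le_rfl, kernelTail_birthDeathKernel_succ hup hs]
    exact hup0 _ hs
  · rw [kernelTail_birthDeathKernel_of_add_two_le (by omega),
      kernelTail_birthDeathKernel_of_add_two_le (by omega)]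

theorem kernelTail_birthDeathKernel_mono (hup0 : ∀ s ≤ n, 0 ≤ up s)
    (hdown0 : ∀ s ≤ n, 0 ≤ down s) (hup : up n = 0)
    (hcross : ∀ s < n, up s + down (s + 1) ≤ 1) {s' s : ℕ} (hss : s' ≤ s) (hs : s ≤ n) (d : ℕ) :
    kernelTail (birthDeathKernel up down) n s' d ≤
      kernelTail (birthDeathKernel up down) n s d := by
  induction s, hss using Nat.le_induction with
  | base => exact le_rfl
  | succ s _ ih =>
    exact (ih (by omega)).trans (kernelTail_birthDeathKernel_le_succ hup0 hdown0 hup hcross hs d)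

end BirthDeath

theorem kernelTail_seqKernel_mono (n J : ℕ) {s' s : ℕ} (hss : s' ≤ s) (hs : s ≤ n) (d : ℕ) :
    kernelTail (seqKernel n J) n s' d ≤ kernelTail (seqKernel n J) n s d := by
  rw [seqKernel_eq_birthDeathKernel]
  refine kernelTail_birthDeathKernel_mono (fun t ht => ?_) (fun t ht => ?_) (by simp)
    (fun t ht => ?_) hss hs d
  · exact mul_nonneg (div_nonneg (sub_nonneg.2 (by exact_mod_cast ht)) n.cast_nonneg)
      (majProb_mem_Icc J ht).1
  · exact mul_nonneg (by positivity) (sub_nonneg.2 (majProb_mem_Icc J ht).2)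
  · have hn : (0 : ℝ) < n := by exact_mod_cast t.zero_le.trans_lt ht
    have ht' : (t : ℝ) + 1 ≤ n := by exact_mod_cast ht
    have hq := majProb_mem_Icc J ht.le
    have hqQ := majProb_mono J t.le_succ ht
    -- by monotonicity of `majProb` the left side is at most
    -- `(n - t) q + (t + 1) (1 - q) ≤ max (n - t) (t + 1) ≤ n`
    rw [div_mul_eq_mul_div, div_mul_eq_mul_div, ← add_div, div_le_one hn]
    push_cast
    nlinarith [hq.1, hq.2]

theorem stmt6_general (n j : ℕ) (s s' d : ℕ) (hs : s ≤ n) (hss : s' < s) :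
    kernelTail (seqKernel n (2 * j)) n s' d ≤ kernelTail (seqKernel n (2 * j)) n s d :=
  kernelTail_seqKernel_mono n (2 * j) hss.le hs d

theorem stmt6 (n j : ℕ) (hn : 1 ≤ n) (hj : 1 ≤ j) (s s' d : ℕ)
    (hs : s ≤ n) (hs' : s' ≤ n) (hss : s' < s) (hd : d ≤ n) :
    kernelTail (seqKernel n (2 * j)) n s' d ≤ kernelTail (seqKernel n (2 * j)) n s d :=
  stmt6_general n j s s' d hs hss
end
end
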